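/- arXiv:2404.06280 — 9 statements merged into one kernel-verified Lean document; each statement's English description precedes it below -/
import Mathlib

section
/- Consider a cache of size k and a request sequence r_1,…,r_T of pages. For any t ≤ T, the number of page faults incurred by Belady's furthest-in-the-future algorithm on r_1,…,r_T during the first t requests equals the number of page faults of Belady's algorithm run on the truncated input r_1,…,r_t (with a suitable tie-breaking rule for the truncated run). -/
/-- `nextReq r T t p` : the first time `s` with `t ≤ s < T` at which page `p` is
requested (under request sequence `r` with horizon `T`); equals `T` if `p` is not
requested again before the horizon. -/
noncomputable def nextReq (r : ℕ → ℕ) (T t p : ℕ) : ℕ :=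
  sInf ({s | t ≤ s ∧ s < T ∧ r s = p} ∪ {T})

/-- Number of page faults incurred by the cache sequence `C` on requests `r s`
for `a ≤ s < b`. -/
def faultCount (r : ℕ → ℕ) (C : ℕ → Finset ℕ) (a b : ℕ) : ℕ :=
  ((Finset.Ico a b).filter fun t => r t ∉ C t).card

/-- A (lazy) caching run with cache size `k` serving requests `r 0, …, r (T-1)`:
`C t` is the cache content just before serving request `r t`; nothing changes
when the requested page is cached, and on a page fault the requested page is
loaded and at most one page is evicted. -/
def IsLazyRun (k : ℕ) (r : ℕ → ℕ) (T : ℕ) (C : ℕ → Finset ℕ) : Prop :=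
  (∀ t, (C t).card ≤ k) ∧
  ∀ t < T, (r t ∈ C t → C (t + 1) = C t) ∧
    (r t ∉ C t → r t ∈ C (t + 1) ∧ C (t + 1) ⊆ insert (r t) (C t) ∧
      (C t \ C (t + 1)).card ≤ 1)

/-- Belady's furthest-in-the-future algorithm (with some tie-breaking rule):
a lazy caching run which, on a page fault, evicts a cached page whose next
request is furthest in the future. -/
def IsBeladyRun (k : ℕ) (r : ℕ → ℕ) (T : ℕ) (C : ℕ → Finset ℕ) : Prop :=
  IsLazyRun k r T C ∧
  ∀ t < T, r t ∉ C t → ∀ q ∈ C t, q ∉ C (t + 1) →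
    ∀ p ∈ C t, nextReq r T t p ≤ nextReq r T t q


lemma nextReq_trunc (r : ℕ → ℕ) {T t : ℕ} (ht : t ≤ T) (s p : ℕ) :
    nextReq r t s p = min (nextReq r T s p) t := by
  unfold nextReq
  set A : Set ℕ := {s' | s ≤ s' ∧ s' < T ∧ r s' = p} ∪ {T} with hA
  set B : Set ℕ := {s' | s ≤ s' ∧ s' < t ∧ r s' = p} ∪ {t} with hB
  have hAne : A.Nonempty := ⟨T, Or.inr rfl⟩
  rcases lt_or_ge (sInf A) t with h | h
  · rw [min_eq_left h.le]
    have hmem : sInf A ∈ A := Nat.sInf_mem hAne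
    rcases hmem with hm | hm
    · have hBmem : sInf A ∈ B := Or.inl ⟨hm.1, h, hm.2.2⟩
      apply le_antisymm (Nat.sInf_le hBmem)
      apply le_csInf ⟨t, Or.inr rfl⟩
      rintro b (hb | hb)
      · exact Nat.sInf_le (Or.inl ⟨hb.1, lt_of_lt_of_le hb.2.1 ht, hb.2.2⟩)
      · simp only [Set.mem_singleton_iff] at hb; omega
    · simp only [Set.mem_singleton_iff] at hm; omega
  · rw [min_eq_right h]
    apply le_antisymm (Nat.sInf_le (Or.inr rfl))
    apply le_csInf ⟨t, Or.inr rfl⟩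
    rintro b (hb | hb)
    · have : b ∈ A := Or.inl ⟨hb.1, lt_of_lt_of_le hb.2.1 ht, hb.2.2⟩
      have := Nat.sInf_le this
      omega
    · simp only [Set.mem_singleton_iff] at hb; omega

/-- For any `t ≤ T`, the number of page faults of Belady's algorithm on the full
sequence `r 0, …, r (T-1)` during the first `t` requests equals the number of
page faults of Belady's algorithm run on the truncated input `r 0, …, r (t-1)`
(with a suitable tie-breaking rule for the truncated run). -/
theorem belady_prefix_cost (k T t : ℕ) (r : ℕ → ℕ) (C : ℕ → Finset ℕ)
    (hC : IsBeladyRun k r T C) (ht : t ≤ T) :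
    ∃ C' : ℕ → Finset ℕ, IsBeladyRun k r t C' ∧ C' 0 = C 0 ∧
      faultCount r C' 0 t = faultCount r C 0 t := by
  refine ⟨C, ⟨⟨hC.1.1, fun s hs => hC.1.2 s (lt_of_lt_of_le hs ht)⟩, ?_⟩, rfl, rfl⟩
  intro s hs hf q hq hq' p hp
  have h := hC.2 s (lt_of_lt_of_le hs ht) hf q hq hq' p hp
  rw [nextReq_trunc r ht, nextReq_trunc r ht]
  exact min_le_min h le_rfl
end

section
/- If Belady's furthest-in-the-future algorithm evicts a page p at time t, then p is not requested again during the marking phase containing time t. -/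
/-- If Belady's algorithm evicts page `p` at time `t`, then `p` is not requested
again during the marking phase containing `t`.  Here the phase is an interval
`[s, e)` containing `t` in which at most `k` distinct pages are requested. -/
theorem belady_evicted_not_requested_in_phase
    (k T s e t : ℕ) (r : ℕ → ℕ) (C : ℕ → Finset ℕ) (p : ℕ)
    (hB : IsBeladyRun k r T C) (hcard : (C t).card = k)
    (hst : s ≤ t) (hte : t < e) (heT : e ≤ T)
    (hphase : ((Finset.Ico s e).image r).card ≤ k)
    (hfault : r t ∉ C t) (hp : p ∈ C t) (hp' : p ∉ C (t + 1)) :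
    ∀ u, t < u → u < e → r u ≠ p := by
  intro u htu hue hru
  have htT : t < T := lt_of_lt_of_le (lt_trans htu hue) heT
  -- nextReq of p is ≤ u
  have hnp : nextReq r T t p ≤ u :=
    Nat.sInf_le (Or.inl ⟨le_of_lt htu, lt_of_lt_of_le hue heT, hru⟩)
  -- every cached page q has nextReq ≤ u, hence is requested in [t, u] ⊆ [s, e)
  have hall : ∀ q ∈ C t, q ∈ (Finset.Ico s e).image r := by
    intro q hq
    have hle : nextReq r T t q ≤ u :=
      le_trans (hB.2 t htT hfault p hp hp' q hq) hnp
    have hmem : nextReq r T t q ∈ ({v | t ≤ v ∧ v < T ∧ r v = q} ∪ {T} : Set ℕ) :=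
      Nat.sInf_mem ⟨T, Or.inr rfl⟩
    rcases hmem with ⟨h1, h2, h3⟩ | h
    · exact Finset.mem_image.2 ⟨nextReq r T t q,
        Finset.mem_Ico.2 ⟨le_trans hst h1, lt_of_le_of_lt hle hue⟩, h3⟩
    · simp only [Set.mem_singleton_iff] at h
      omega
  -- r t is also requested in the phase, and r t ∉ C t
  have hrt : r t ∈ (Finset.Ico s e).image r :=
    Finset.mem_image.2 ⟨t, Finset.mem_Ico.2 ⟨hst, hte⟩, rfl⟩
  have hsub : insert (r t) (C t) ⊆ (Finset.Ico s e).image r := by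
    intro x hx
    rcases Finset.mem_insert.1 hx with h | h
    · exact h ▸ hrt
    · exact hall x h
  have hcard' : k + 1 ≤ ((Finset.Ico s e).image r).card := by
    have := Finset.card_le_card hsub
    rwa [Finset.card_insert_of_notMem hfault, hcard] at this
  omega
end

section
/- Let A and B be two lazy caching algorithms with cache size k on the same request sequence (a lazy algorithm evicts at most one page, and only upon a page fault). Then at each time step, the size of the symmetric-difference-based divergence |A_t \ B_t| of their cache contents increases from the previous step only if both A and B have a page fault at time t, and in that case it increases by at most 1. -/
/-- The divergence `|A_{t+1} \ B_{t+1}|` of the caches of two lazy caching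
algorithms (both of cache size `k`) increases from `|A_t \ B_t|` only if both
algorithms have a page fault at time `t`, and then by at most `1`. -/
theorem lazy_divergence_step (k t : ℕ) (r : ℕ → ℕ) (A B : ℕ → Finset ℕ)
    (hAcard : ∀ s, (A s).card = k) (hBcard : ∀ s, (B s).card = k)
    (hAhit : r t ∈ A t → A (t + 1) = A t)
    (hAfault : r t ∉ A t → r t ∈ A (t + 1) ∧ A (t + 1) ⊆ insert (r t) (A t) ∧
      (A t \ A (t + 1)).card ≤ 1)
    (hBhit : r t ∈ B t → B (t + 1) = B t)
    (hBfault : r t ∉ B t → r t ∈ B (t + 1) ∧ B (t + 1) ⊆ insert (r t) (B t) ∧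
      (B t \ B (t + 1)).card ≤ 1) :
    (A (t + 1) \ B (t + 1)).card ≤
      (A t \ B t).card + (if r t ∉ A t ∧ r t ∉ B t then 1 else 0) := by
  by_cases hA : r t ∈ A t
  · by_cases hB : r t ∈ B t
    · simp [hAhit hA, hBhit hB, hA, hB]
    · -- A hit, B fault
      obtain ⟨hr, hsub, hc⟩ := hBfault hB
      rw [hAhit hA]
      have hif : (if r t ∉ A t ∧ r t ∉ B t then 1 else 0) = 0 := by simp [hA]
      rw [hif, add_zero]
      have hss : A t \ B (t + 1) ⊆ (A t \ B t).erase (r t) ∪ (B t \ B (t + 1)) := by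
        intro x hx
        simp only [Finset.mem_sdiff] at hx
        by_cases hxB : x ∈ B t
        · exact Finset.mem_union_right _ (Finset.mem_sdiff.mpr ⟨hxB, hx.2⟩)
        · refine Finset.mem_union_left _ (Finset.mem_erase.mpr ⟨?_, Finset.mem_sdiff.mpr ⟨hx.1, hxB⟩⟩)
          rintro rfl; exact hx.2 hr
      calc (A t \ B (t + 1)).card ≤ ((A t \ B t).erase (r t) ∪ (B t \ B (t + 1))).card :=
            Finset.card_le_card hss
        _ ≤ ((A t \ B t).erase (r t)).card + (B t \ B (t + 1)).card :=
            Finset.card_union_le _ _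
        _ ≤ ((A t \ B t).card - 1) + 1 := by
            rw [Finset.card_erase_of_mem (Finset.mem_sdiff.mpr ⟨hA, hB⟩)]
            omega
        _ ≤ (A t \ B t).card := by
            have : 1 ≤ (A t \ B t).card :=
              Finset.card_pos.mpr ⟨r t, Finset.mem_sdiff.mpr ⟨hA, hB⟩⟩
            omega
  · by_cases hB : r t ∈ B t
    · -- A fault, B hit
      obtain ⟨hr, hsub, hc⟩ := hAfault hA
      rw [hBhit hB]
      have hif : (if r t ∉ A t ∧ r t ∉ B t then 1 else 0) = 0 := by simp [hB]
      rw [hif, add_zero]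
      refine Finset.card_le_card ?_
      intro x hx
      simp only [Finset.mem_sdiff] at hx ⊢
      have := hsub hx.1
      rw [Finset.mem_insert] at this
      rcases this with rfl | hxA
      · exact absurd hB hx.2
      · exact ⟨hxA, hx.2⟩
    · -- both fault
      obtain ⟨hrA, hsubA, hcA⟩ := hAfault hA
      obtain ⟨hrB, hsubB, hcB⟩ := hBfault hB
      have hif : (if r t ∉ A t ∧ r t ∉ B t then 1 else 0) = 1 := by simp [hA, hB]
      rw [hif]
      have hss : A (t + 1) \ B (t + 1) ⊆ (A t \ B t) ∪ (B t \ B (t + 1)) := by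
        intro x hx
        simp only [Finset.mem_sdiff] at hx
        have hxA := hsubA hx.1
        rw [Finset.mem_insert] at hxA
        rcases hxA with rfl | hxA
        · exact absurd hrB hx.2
        · by_cases hxB : x ∈ B t
          · exact Finset.mem_union_right _ (Finset.mem_sdiff.mpr ⟨hxB, hx.2⟩)
          · exact Finset.mem_union_left _ (Finset.mem_sdiff.mpr ⟨hxA, hxB⟩)
      calc (A (t + 1) \ B (t + 1)).card ≤ ((A t \ B t) ∪ (B t \ B (t + 1))).card :=
            Finset.card_le_card hss
        _ ≤ (A t \ B t).card + (B t \ B (t + 1)).card := Finset.card_union_le _ _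
        _ ≤ (A t \ B t).card + 1 := by omega
end

section
/- Let E_i, E_{i+1}, B_i, B_{i+1} be finite sets of pages with |E_i| = c_i ≤ c_{i+1} = |E_{i+1}|, and suppose: (1) every page in E_i \ E_{i+1} is either in B_i or is loaded by Belady during window W_i (i.e., lies in a set L with |L| ≤ Δ, where B_{i+1} ⊆ B_i ∪ L); (2) every page in E_i ∩ E_{i+1} that is in B_{i+1} is either in B_i or in L. Then |E_{i+1} ∩ B_{i+1}| ≤ |E_i ∩ B_i| + |L| + (c_{i+1} - c_i). -/
/-- Rank-increase lemma.  `E`, `E'` are the sets of pages evicted by the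
algorithm at the beginnings of two consecutive windows, `B`, `B'` Belady's cache
contents at these times, and `L` the set of pages Belady loads during the
window (so `B' ⊆ B ∪ L`).  If every page of `E \ E'` is in `B` or in `L`,
and every page of `E ∩ E'` lying in `B'` is in `B` or in `L`, then
`|E' ∩ B'| ≤ |E ∩ B| + |L| + (|E'| - |E|)`. -/
theorem rank_increase (E E' B B' L : Finset ℕ)
    (hc : E.card ≤ E'.card)
    (hBL : B' ⊆ B ∪ L)
    (h1 : ∀ p ∈ E \ E', p ∈ B ∨ p ∈ L)
    (h2 : ∀ p ∈ E ∩ E', p ∈ B' → p ∈ B ∨ p ∈ L) :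
    (E' ∩ B').card ≤ (E ∩ B).card + L.card + (E'.card - E.card) := by
  classical
  have hdisj : Disjoint (E ∩ E' ∩ B') (E \ E') := by
    simp [Finset.disjoint_left, Finset.mem_inter, Finset.mem_sdiff]
    tauto
  have hsub : (E ∩ E' ∩ B') ∪ (E \ E') ⊆ (E ∩ B) ∪ L := by
    intro p hp
    rcases Finset.mem_union.mp hp with hp | hp
    · have hpE : p ∈ E ∩ E' := Finset.mem_inter.mp hp |>.1
      have hpB' : p ∈ B' := Finset.mem_inter.mp hp |>.2
      rcases h2 p hpE hpB' with h | h
      · exact Finset.mem_union_left _ (Finset.mem_inter.mpr ⟨(Finset.mem_inter.mp hpE).1, h⟩)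
      · exact Finset.mem_union_right _ h
    · rcases h1 p hp with h | h
      · exact Finset.mem_union_left _
          (Finset.mem_inter.mpr ⟨(Finset.mem_sdiff.mp hp).1, h⟩)
      · exact Finset.mem_union_right _ h
  have key : (E ∩ E' ∩ B').card + (E \ E').card ≤ (E ∩ B).card + L.card := by
    calc (E ∩ E' ∩ B').card + (E \ E').card
        = ((E ∩ E' ∩ B') ∪ (E \ E')).card := (Finset.card_union_of_disjoint hdisj).symm
      _ ≤ ((E ∩ B) ∪ L).card := Finset.card_le_card hsub
      _ ≤ (E ∩ B).card + L.card := Finset.card_union_le _ _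
  have hT : (E' ∩ B').card ≤ (E ∩ E' ∩ B').card + (E' \ E).card := by
    have : E' ∩ B' ⊆ (E ∩ E' ∩ B') ∪ (E' \ E) := by
      intro p hp
      rcases Finset.mem_inter.mp hp with ⟨hE', hB'⟩
      by_cases hE : p ∈ E
      · exact Finset.mem_union_left _ (by simp [Finset.mem_inter, hE, hE', hB'])
      · exact Finset.mem_union_right _ (Finset.mem_sdiff.mpr ⟨hE', hE⟩)
    calc (E' ∩ B').card ≤ ((E ∩ E' ∩ B') ∪ (E' \ E)).card := Finset.card_le_card this
      _ ≤ _ := Finset.card_union_le _ _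
  have h3 : (E \ E').card = E.card - (E ∩ E').card := by
    have := Finset.card_inter_add_card_sdiff E E'; omega
  have h4 : (E' \ E).card = E'.card - (E' ∩ E).card := by
    have := Finset.card_inter_add_card_sdiff E' E; omega
  have h5 : E' ∩ E = E ∩ E' := Finset.inter_comm _ _
  have h6 : (E ∩ E').card ≤ E.card := Finset.card_le_card (Finset.inter_subset_left)
  rw [h5] at h4
  omega
end

section
/- Let f : ℕ → ℝ≥0 be increasing and convex with f(0)=0, extended to ℝ≥0 by linear interpolation. Let r_1,…,r_n ≥ 0 and η ≥ 0, and define level sets L_m = {i : r_i ≥ m}. Suppose each L_m decomposes into Q_m maximal intervals of integers, with Q = Σ_m Q_m > 0, and suppose that η ≥ Σ_m Σ over maximal intervals I of L_m of f(|I|/2). Then Σ_{i=1}^n r_i ≤ 2 Q · f⁻¹(η/Q), where f⁻¹ is the generalized inverse of the extended f. -/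
/-- Extension of `f : ℕ → ℝ` to nonnegative reals by linear interpolation. -/
noncomputable def fext (f : ℕ → ℝ) (x : ℝ) : ℝ :=
  f ⌊x⌋₊ + (x - ⌊x⌋₊) * (f (⌊x⌋₊ + 1) - f ⌊x⌋₊)

/-- Generalized inverse of the (extended, increasing) function `f`. -/
noncomputable def finv (f : ℕ → ℝ) (y : ℝ) : ℝ :=
  sInf {x : ℝ | 0 ≤ x ∧ y ≤ fext f x}

/-- `levelStarts r n m` : the left endpoints of the maximal intervals of the
level set `L_m = {i ∈ [1, n] : r i ≥ m}`. -/
def levelStarts (r : ℕ → ℕ) (n m : ℕ) : Finset ℕ :=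
  (Finset.Icc 1 n).filter fun i => m ≤ r i ∧ r (i - 1) < m

/-- `intervalLen r n m i` : the length of the maximal interval of the level set
`L_m` starting at `i`. -/
def intervalLen (r : ℕ → ℕ) (n m i : ℕ) : ℕ :=
  ((Finset.Icc i n).filter fun j => ∀ t ∈ Finset.Icc i j, m ≤ r t).card

lemma fext_nat (f : ℕ → ℝ) (k : ℕ) : fext f k = f k := by
  simp [fext]

lemma dmono {f : ℕ → ℝ} (hconv : ∀ i, f (i + 1) - f i ≤ f (i + 2) - f (i + 1)) :
    Monotone (fun k => f (k+1) - f k) :=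
  monotone_nat_of_le_succ fun k => hconv k

lemma dpos {f : ℕ → ℝ} (hmono : StrictMono f) (k : ℕ) : 0 < f (k+1) - f k :=
  sub_pos.2 (hmono (Nat.lt_succ_self k))

/-- key bounds at integer right endpoint -/
lemma fext_int_bounds {f : ℕ → ℝ}
    (hconv : ∀ i, f (i + 1) - f i ≤ f (i + 2) - f (i + 1)) (n : ℕ) :
    ∀ x : ℝ, 0 ≤ x → x ≤ n →
    (f (⌊x⌋₊+1) - f ⌊x⌋₊) * (n - x) ≤ f n - fext f x ∧
    f n - fext f x ≤ (f (n+1) - f n) * (n - x) := by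
  induction n with
  | zero =>
    intro x hx0 hxn
    have hx : x = 0 := le_antisymm (by exact_mod_cast hxn) hx0
    subst hx
    simp [fext]
  | succ n ih =>
    intro x hx0 hxn
    push_cast at hxn
    rcases le_or_gt x n with h | h
    · obtain ⟨h1, h2⟩ := ih x hx0 h
      have hfl : ⌊x⌋₊ ≤ n := by
        have := Nat.floor_le_of_le h
        simpa using this
      constructor
      · have hd : f (⌊x⌋₊+1) - f ⌊x⌋₊ ≤ f (n+1) - f n := dmono hconv hfl
        push_cast
        nlinarith [h1, hd]
      · have hd : f (n+1) - f n ≤ f (n+2) - f (n+1) := hconv n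
        have hnx : (0:ℝ) ≤ (n:ℝ) - x := sub_nonneg.2 h
        push_cast
        nlinarith [mul_le_mul_of_nonneg_right hd hnx]
    · rcases eq_or_lt_of_le hxn with he | hlt
      · have : x = ((n+1 : ℕ) : ℝ) := by push_cast; linarith
        subst this
        rw [fext_nat]
        simp
      · have hfl : ⌊x⌋₊ = n := by
          rw [Nat.floor_eq_iff hx0]
          constructor
          · exact_mod_cast h.le
          · push_cast; linarith
        have hfe : fext f x = f n + (x - n) * (f (n+1) - f n) := by
          rw [fext, hfl]
        rw [hfe, hfl]
        constructor
        · push_cast; ring_nf; rfl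
        · have hd : f (n+1) - f n ≤ f (n+2) - f (n+1) := hconv n
          push_cast
          nlinarith

lemma fext_bounds {f : ℕ → ℝ}
    (hconv : ∀ i, f (i + 1) - f i ≤ f (i + 2) - f (i + 1))
    {x y : ℝ} (hx0 : 0 ≤ x) (hxy : x ≤ y) :
    (f (⌊x⌋₊+1) - f ⌊x⌋₊) * (y - x) ≤ fext f y - fext f x ∧
    fext f y - fext f x ≤ (f (⌊y⌋₊+1) - f ⌊y⌋₊) * (y - x) := by
  have hy0 : 0 ≤ y := hx0.trans hxy
  have hfxy : ⌊x⌋₊ ≤ ⌊y⌋₊ := Nat.floor_le_floor hxy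
  rcases eq_or_lt_of_le hfxy with he | hlt
  · have hfe : fext f y - fext f x = (f (⌊x⌋₊+1) - f ⌊x⌋₊) * (y - x) := by
      rw [fext, fext, ← he]; ring
    constructor
    · rw [hfe]
    · rw [hfe, he]
  · have hxf : x ≤ (⌊y⌋₊ : ℝ) := by
      have h1 : x < (⌊x⌋₊ : ℝ) + 1 := Nat.lt_floor_add_one x
      have h2 : (⌊x⌋₊ : ℝ) + 1 ≤ (⌊y⌋₊ : ℝ) := by exact_mod_cast hlt
      linarith
    obtain ⟨h1, h2⟩ := fext_int_bounds hconv ⌊y⌋₊ x hx0 hxf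
    have hyfr : fext f y = f ⌊y⌋₊ + (y - ⌊y⌋₊) * (f (⌊y⌋₊+1) - f ⌊y⌋₊) := rfl
    have hfr0 : (0:ℝ) ≤ y - ⌊y⌋₊ := sub_nonneg.2 (Nat.floor_le hy0)
    have hdm : f (⌊x⌋₊+1) - f ⌊x⌋₊ ≤ f (⌊y⌋₊+1) - f ⌊y⌋₊ := dmono hconv hfxy
    constructor
    · nlinarith [mul_le_mul_of_nonneg_right hdm hfr0]
    · nlinarith

lemma fext_strictMonoOn {f : ℕ → ℝ} (hmono : StrictMono f)
    (hconv : ∀ i, f (i + 1) - f i ≤ f (i + 2) - f (i + 1))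
    {x y : ℝ} (hx0 : 0 ≤ x) (hxy : x < y) : fext f x < fext f y := by
  have h := (fext_bounds hconv hx0 hxy.le).1
  nlinarith [dpos hmono ⌊x⌋₊]

lemma fext_convexOn {f : ℕ → ℝ}
    (hconv : ∀ i, f (i + 1) - f i ≤ f (i + 2) - f (i + 1)) :
    ConvexOn ℝ (Set.Ici 0) (fext f) := by
  apply convexOn_of_slope_mono_adjacent (convex_Ici 0)
  intro x y z hx hz hxy hyz
  have hx0 : (0:ℝ) ≤ x := hx
  have hy0 : (0:ℝ) ≤ y := hx0.trans hxy.le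
  have h1 := (fext_bounds hconv hx0 hxy.le).2
  have h2 := (fext_bounds hconv hy0 hyz.le).1
  rw [div_le_div_iff₀ (by linarith) (by linarith)]
  nlinarith [mul_le_mul_of_nonneg_right h1 (le_of_lt (sub_pos.2 hyz)),
    mul_le_mul_of_nonneg_right h2 (le_of_lt (sub_pos.2 hxy))]

lemma level_card (r : ℕ → ℕ) (hr0 : r 0 = 0) (n m : ℕ) (hm : 1 ≤ m) :
    ((Finset.Icc 1 n).filter fun j => m ≤ r j).card
      = ∑ i ∈ levelStarts r n m, intervalLen r n m i := by
  classical
  set g : ℕ → Finset ℕ :=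
    fun i => (Finset.Icc i n).filter fun j => ∀ t ∈ Finset.Icc i j, m ≤ r t with hg
  have hdisj : ∀ i₁ ∈ levelStarts r n m, ∀ i₂ ∈ levelStarts r n m,
      i₁ ≠ i₂ → Disjoint (g i₁) (g i₂) := by
    have key : ∀ i₁ i₂, i₂ ∈ levelStarts r n m → i₁ < i₂ → Disjoint (g i₁) (g i₂) := by
      intro i₁ i₂ h2 hlt
      rw [Finset.disjoint_left]
      intro j hj1 hj2
      simp only [hg, Finset.mem_filter, Finset.mem_Icc] at hj1 hj2
      simp only [levelStarts, Finset.mem_filter, Finset.mem_Icc] at h2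
      have : m ≤ r (i₂ - 1) := by
        have h12 := hj1.2
        exact h12 (i₂ - 1) ⟨by omega, by omega⟩
      omega
    intro i₁ h1 i₂ h2 hne
    rcases lt_or_gt_of_ne hne with h | h
    · exact key i₁ i₂ h2 h
    · exact (key i₂ i₁ h1 h).symm
  have hunion : (levelStarts r n m).biUnion g
      = (Finset.Icc 1 n).filter fun j => m ≤ r j := by
    ext j
    simp only [Finset.mem_biUnion, Finset.mem_filter, Finset.mem_Icc]
    constructor
    · rintro ⟨i, hi, hj⟩
      simp only [levelStarts, Finset.mem_filter, Finset.mem_Icc] at hi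
      simp only [hg, Finset.mem_filter, Finset.mem_Icc] at hj
      refine ⟨⟨le_trans hi.1.1 hj.1.1, hj.1.2⟩, ?_⟩
      have h2 := hj.2
      exact h2 j ⟨hj.1.1, le_refl j⟩
    · rintro ⟨⟨h1j, hjn⟩, hmr⟩
      have hPj : ∀ t ∈ Finset.Icc j j, m ≤ r t := by
        intro t ht
        rw [Finset.mem_Icc] at ht
        have : t = j := le_antisymm ht.2 ht.1
        rw [this]; exact hmr
      have hex : ∃ k, ∀ t ∈ Finset.Icc k j, m ≤ r t := ⟨j, hPj⟩
      set i := Nat.find hex with hi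
      have hPi := Nat.find_spec hex
      rw [← hi] at hPi
      have hij : i ≤ j := Nat.find_min' hex hPj
      have hi1 : 1 ≤ i := by
        by_contra h0
        have hi0 : i = 0 := by omega
        have := hPi 0 (Finset.mem_Icc.2 ⟨by omega, by omega⟩)
        omega
      have hri1 : r (i-1) < m := by
        by_contra hge
        push_neg at hge
        have hP : ∀ t ∈ Finset.Icc (i-1) j, m ≤ r t := by
          intro t ht; rw [Finset.mem_Icc] at ht
          rcases eq_or_lt_of_le ht.1 with h | h
          · rw [← h]; exact hge
          · exact hPi t (Finset.mem_Icc.2 ⟨by omega, ht.2⟩)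
        exact Nat.find_min hex (show i - 1 < Nat.find hex by omega) hP
      refine ⟨i, ?_, ?_⟩
      · simp only [levelStarts, Finset.mem_filter, Finset.mem_Icc]
        exact ⟨⟨hi1, hij.trans hjn⟩, hPi i (Finset.mem_Icc.2 ⟨le_refl i, hij⟩), hri1⟩
      · simp only [hg, Finset.mem_filter, Finset.mem_Icc]
        exact ⟨⟨hij, hjn⟩, fun t ht => hPi t (Finset.mem_Icc.2 ht)⟩
  rw [← hunion, Finset.card_biUnion hdisj]
  rfl

lemma sum_rank (r : ℕ → ℕ) (n N : ℕ) (hN : ∀ i, r i ≤ N) :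
    ∑ i ∈ Finset.Icc 1 n, r i
      = ∑ m ∈ Finset.Icc 1 N, ((Finset.Icc 1 n).filter fun j => m ≤ r j).card := by
  classical
  have h1 : ∀ m, ((Finset.Icc 1 n).filter fun j => m ≤ r j).card
      = ∑ i ∈ Finset.Icc 1 n, if m ≤ r i then 1 else 0 := by
    intro m; rw [Finset.card_filter]
  simp_rw [h1]
  rw [Finset.sum_comm]
  refine Finset.sum_congr rfl fun i _ => Eq.symm ?_
  have h2 : ((Finset.Icc 1 N).filter fun m => m ≤ r i) = Finset.Icc 1 (r i) := by
    ext m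
    simp only [Finset.mem_filter, Finset.mem_Icc]
    have := hN i
    omega
  calc ∑ m ∈ Finset.Icc 1 N, (if m ≤ r i then 1 else 0)
      = ((Finset.Icc 1 N).filter fun m => m ≤ r i).card := (Finset.card_filter _ _).symm
    _ = (Finset.Icc 1 (r i)).card := by rw [h2]
    _ = r i := by rw [Nat.card_Icc]; omega

/-- Rank vs. number of level crossings: if `f : ℕ → ℝ≥0` is increasing and
convex with `f 0 = 0` (extended by linear interpolation), `r 1, …, r n ≥ 0`,
`Q` is the total number of maximal intervals over all level sets `L_m`
(`Q > 0`), and `η` bounds from above the sum over all those maximal intervals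
`I` of `f(|I| / 2)`, then `∑ r i ≤ 2 Q f⁻¹(η / Q)`. -/
theorem rank_sum_le_of_level_decomposition (f : ℕ → ℝ)
    (hfnn : ∀ i, 0 ≤ f i) (hmono : StrictMono f) (hf0 : f 0 = 0)
    (hconv : ∀ i, f (i + 1) - f i ≤ f (i + 2) - f (i + 1))
    (n N : ℕ) (r : ℕ → ℕ) (hr0 : r 0 = 0) (hN : ∀ i, r i ≤ N)
    (η : ℝ) (Q : ℕ) (hQpos : 0 < Q)
    (hQ : Q = ∑ m ∈ Finset.Icc 1 N, (levelStarts r n m).card)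
    (hη : (∑ m ∈ Finset.Icc 1 N, ∑ i ∈ levelStarts r n m,
        fext f ((intervalLen r n m i : ℝ) / 2)) ≤ η) :
    (∑ i ∈ Finset.Icc 1 n, (r i : ℝ)) ≤ 2 * Q * finv f (η / Q) := by
  classical
  have hQR : (0:ℝ) < Q := by exact_mod_cast hQpos
  have hsum : ∑ i ∈ Finset.Icc 1 n, r i
      = ∑ m ∈ Finset.Icc 1 N, ∑ i ∈ levelStarts r n m, intervalLen r n m i := by
    rw [sum_rank r n N hN]
    exact Finset.sum_congr rfl fun m hm =>
      level_card r hr0 n m (Finset.mem_Icc.1 hm).1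
  set S : ℝ := ∑ i ∈ Finset.Icc 1 n, (r i : ℝ) with hS
  have hSval : S = ∑ m ∈ Finset.Icc 1 N,
      ∑ i ∈ levelStarts r n m, (intervalLen r n m i : ℝ) := by
    have := congrArg (fun k : ℕ => (k : ℝ)) hsum
    push_cast at this
    simpa [hS] using this
  set T := (Finset.Icc 1 N).sigma (fun m => levelStarts r n m) with hT
  have hcard : T.card = Q := by rw [hT, Finset.card_sigma, hQ]
  have hsum2 : ∑ q ∈ T, (intervalLen r n q.1 q.2 : ℝ) = S := by
    rw [hT, Finset.sum_sigma]; exact hSval.symm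
  have hsumf : ∑ q ∈ T, fext f ((intervalLen r n q.1 q.2 : ℝ)/2) ≤ η := by
    rw [hT, Finset.sum_sigma]; exact hη
  have hjen := (fext_convexOn hconv).map_sum_le (t := T)
      (w := fun _ => (Q:ℝ)⁻¹)
      (p := fun q => (intervalLen r n q.1 q.2 : ℝ)/2)
      (fun q _ => by positivity)
      (by rw [Finset.sum_const, hcard, nsmul_eq_mul]; field_simp)
      (fun q _ => by simp only [Set.mem_Ici]; positivity)
  have hL : ∑ q ∈ T, (Q:ℝ)⁻¹ • ((intervalLen r n q.1 q.2 : ℝ)/2) = S/(2*Q) := by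
    simp only [smul_eq_mul, ← Finset.mul_sum]
    rw [← Finset.sum_div, hsum2, inv_mul_eq_div, div_div]
  have hR : ∑ q ∈ T, (Q:ℝ)⁻¹ • fext f ((intervalLen r n q.1 q.2 : ℝ)/2) ≤ η / Q := by
    simp only [smul_eq_mul, ← Finset.mul_sum]
    rw [div_eq_inv_mul]
    exact mul_le_mul_of_nonneg_left hsumf (by positivity)
  have hkey : fext f (S/(2*Q)) ≤ η/Q := by
    rw [← hL]
    exact hjen.trans hR
  have hf1 : 0 < f 1 := by
    have := hmono (show 0 < 1 by norm_num)
    rwa [hf0] at this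
  have hgrow : ∀ k : ℕ, (k:ℝ) * f 1 ≤ f k := by
    intro k
    induction k with
    | zero => simp [hf0]
    | succ k ih =>
      have hd : f (0+1) - f 0 ≤ f (k+1) - f k := dmono hconv (Nat.zero_le k)
      rw [hf0] at hd
      push_cast
      simp only [Nat.zero_add] at hd
      linarith
  have hfinv : S/(2*Q) ≤ finv f (η/Q) := by
    apply le_csInf
    · obtain ⟨c, hc⟩ := exists_nat_ge (η/Q / f 1)
      refine ⟨(c:ℝ), Set.mem_setOf.2 ⟨Nat.cast_nonneg c, ?_⟩⟩
      rw [fext_nat]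
      calc η/Q = (η/Q/f 1) * f 1 := by field_simp
        _ ≤ (c:ℝ) * f 1 := mul_le_mul_of_nonneg_right hc hf1.le
        _ ≤ f c := hgrow c
    · rintro b ⟨hb0, hbf⟩
      by_contra hlt
      push_neg at hlt
      have := fext_strictMonoOn hmono hconv hb0 hlt
      linarith
  have h2Q : (0:ℝ) < 2*Q := by positivity
  calc S = 2*Q * (S/(2*Q)) := by field_simp
    _ ≤ 2*Q * finv f (η/Q) := mul_le_mul_of_nonneg_left hfinv (by positivity)
end

section
/- For every randomized caching algorithm receiving at most 0.5·OPT action predictions in total, there exists a request sequence over a universe of k+1 pages on which the algorithm's expected cost is at least 0.5·OPT·ln k, where OPT is the optimal offline cost. Consequently no such algorithm has competitive ratio o(ln k). -/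
/-- An offline caching schedule with cache size `k` over the universe of `k + 1`
pages, serving requests `r 0, …, r (T-1)` and starting from the empty cache. -/
def IsOfflineRun (k : ℕ) (r : ℕ → Fin (k + 1)) (T : ℕ)
    (C : ℕ → Finset (Fin (k + 1))) : Prop :=
  C 0 = ∅ ∧ (∀ t, (C t).card ≤ k) ∧
    ∀ t < T, r t ∈ C (t + 1) ∧ C (t + 1) ⊆ insert (r t) (C t)

/-- Number of page faults of the schedule `C` on the first `T` requests. -/
def runCost (k : ℕ) (r : ℕ → Fin (k + 1)) (T : ℕ)
    (C : ℕ → Finset (Fin (k + 1))) : ℕ :=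
  ((Finset.range T).filter fun t => r t ∉ C t).card

/-- Optimal offline cost of the instance `r 0, …, r (T-1)`. -/
noncomputable def optCost (k : ℕ) (r : ℕ → Fin (k + 1)) (T : ℕ) : ℕ :=
  sInf {c : ℕ | ∃ C, IsOfflineRun k r T C ∧ runCost k r T C = c}

/-- A deterministic online caching algorithm with access to an action-prediction
oracle `o` (giving the cache content of an offline algorithm at each time):
`query t r o` tells whether the algorithm queries the oracle at time `t`, and
`cache t r o` is its cache content just before serving request `r t`.  Both may
depend only on the requests seen so far and on the oracle answers at the
previously queried times. -/
structure PredCachingAlg (k : ℕ) where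
  query : ℕ → (ℕ → Fin (k + 1)) → (ℕ → Finset (Fin (k + 1))) → Bool
  cache : ℕ → (ℕ → Fin (k + 1)) → (ℕ → Finset (Fin (k + 1))) → Finset (Fin (k + 1))
  query_online : ∀ n r r' o o', (∀ t < n, r t = r' t) →
    (∀ t < n, query t r o = true → o t = o' t) → query n r o = query n r' o'
  cache_online : ∀ n r r' o o', (∀ t < n, r t = r' t) →
    (∀ t < n, query t r o = true → o t = o' t) → cache n r o = cache n r' o'
  cache_card : ∀ n r o, (cache n r o).card ≤ k
  serves : ∀ n r o, r n ∈ cache (n + 1) r o ∧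
    cache (n + 1) r o ⊆ insert (r n) (cache n r o)

/-- Number of page faults of the algorithm on the first `T` requests. -/
def algCost (k : ℕ) (a : PredCachingAlg k) (r : ℕ → Fin (k + 1)) (T : ℕ)
    (o : ℕ → Finset (Fin (k + 1))) : ℕ :=
  ((Finset.range T).filter fun t => r t ∉ a.cache t r o).card

/-- Number of predictions the algorithm requests on the first `T` requests. -/
def numQueries (k : ℕ) (a : PredCachingAlg k) (r : ℕ → Fin (k + 1)) (T : ℕ)
    (o : ℕ → Finset (Fin (k + 1))) : ℕ :=
  ((Finset.range T).filter fun t => a.query t r o = true).card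


open Finset
namespace FPLB
noncomputable section
open Classical
variable {k : ℕ}


/-- One step of the window state: the set of pages seen in the current phase. -/
def nextS (σ : Finset (Fin (k + 1))) (v : Fin (k + 1)) : Finset (Fin (k + 1)) :=
  if insert v σ = univ then {v} else insert v σ

/-- seen-set of the current window just before time `t`. -/
def seenS (r : ℕ → Fin (k + 1)) : ℕ → Finset (Fin (k + 1))
  | 0 => ∅
  | (t + 1) => nextS (seenS r t) (r t)

/-- time `t` completes the current window (a "phase boundary"). -/
def isComp (r : ℕ → Fin (k + 1)) (t : ℕ) : Prop :=
  insert (r t) (seenS r t) = univ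

/-- number of completions before time `t`. -/
def ncount (r : ℕ → Fin (k + 1)) (t : ℕ) : ℕ :=
  ((range t).filter fun u => isComp r u).card

lemma seenS_ne_univ (hk : 1 ≤ k) (r : ℕ → Fin (k + 1)) (t : ℕ) :
    seenS r t ≠ univ := by
  induction t with
  | zero =>
      intro h
      have h' : (∅ : Finset (Fin (k+1))) = univ := h
      have := congrArg Finset.card h'
      simp at this
  | succ t ih =>
      show nextS (seenS r t) (r t) ≠ univ
      unfold nextS
      split_ifs with h
      · intro hcon
        have h1 := congrArg Finset.card hcon
        simp at h1
        omega
      · exact h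

lemma card_seenS_le (hk : 1 ≤ k) (r : ℕ → Fin (k + 1)) (t : ℕ) :
    (seenS r t).card ≤ k := by
  have h := seenS_ne_univ hk r t
  have hsub : seenS r t ⊂ univ := ssubset_univ_iff.mpr h
  have h2 := card_lt_card hsub
  rw [card_univ, Fintype.card_fin] at h2
  omega

lemma mem_seenS_succ (r : ℕ → Fin (k + 1)) (t : ℕ) : r t ∈ seenS r (t + 1) := by
  show r t ∈ nextS (seenS r t) (r t)
  unfold nextS; split_ifs <;> simp

lemma seenS_card_pos (r : ℕ → Fin (k + 1)) (t : ℕ) : 0 < (seenS r (t+1)).card :=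
  card_pos.mpr ⟨r t, mem_seenS_succ r t⟩

lemma seenS_succ_of_not_comp {r : ℕ → Fin (k + 1)} {t : ℕ} (h : ¬ isComp r t) :
    seenS r (t + 1) = insert (r t) (seenS r t) :=
  if_neg h

lemma seenS_succ_of_comp {r : ℕ → Fin (k + 1)} {t : ℕ} (h : isComp r t) :
    seenS r (t + 1) = {r t} :=
  if_pos h

lemma seenS_subset_of_no_comp {r : ℕ → Fin (k + 1)} {a b : ℕ} (hab : a ≤ b)
    (h : ∀ u, a ≤ u → u < b → ¬ isComp r u) : seenS r a ⊆ seenS r b := by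
  induction b with
  | zero => have : a = 0 := by omega
            subst this; exact subset_rfl
  | succ b ih =>
      rcases Nat.lt_or_ge a (b+1) with hlt | hge
      · have hab' : a ≤ b := by omega
        have h1 : seenS r a ⊆ seenS r b := ih hab' (fun u hu hub => h u hu (by omega))
        have h2 : seenS r (b+1) = insert (r b) (seenS r b) :=
          seenS_succ_of_not_comp (h b hab' (by omega))
        rw [h2]; exact h1.trans (subset_insert _ _)
      · have : a = b + 1 := by omega
        subst this; exact subset_rfl

lemma comp_not_mem (hk : 1 ≤ k) {r : ℕ → Fin (k + 1)} {t : ℕ} (h : isComp r t) :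
    r t ∉ seenS r t := by
  intro hmem
  have : insert (r t) (seenS r t) = seenS r t := insert_eq_self.mpr hmem
  exact seenS_ne_univ hk r t (this ▸ h)

lemma seenS_prefix {r r' : ℕ → Fin (k + 1)} {t : ℕ} (h : ∀ u < t, r u = r' u) :
    seenS r t = seenS r' t := by
  induction t with
  | zero => rfl
  | succ t ih =>
      have h1 : seenS r t = seenS r' t := ih (fun u hu => h u (by omega))
      show nextS (seenS r t) (r t) = nextS (seenS r' t) (r' t)
      rw [h1, h t (by omega)]

lemma isComp_prefix {r r' : ℕ → Fin (k + 1)} {t : ℕ} (h : ∀ u ≤ t, r u = r' u) :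
    (isComp r t ↔ isComp r' t) := by
  unfold isComp
  rw [seenS_prefix (fun u hu => h u (by omega)), h t le_rfl]

lemma ncount_prefix {r r' : ℕ → Fin (k + 1)} {t : ℕ} (h : ∀ u < t, r u = r' u) :
    ncount r t = ncount r' t := by
  unfold ncount
  congr 1
  apply filter_congr
  intro u hu
  simp only [mem_range] at hu
  exact isComp_prefix (fun v hv => h v (by omega))

/-- real harmonic number -/
def Hh (m : ℕ) : ℝ := (harmonic m : ℝ)

lemma Hh_zero : Hh 0 = 0 := by simp [Hh]

lemma Hh_succ (m : ℕ) : Hh (m + 1) = Hh m + 1 / (m + 1 : ℝ) := by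
  unfold Hh
  rw [harmonic_succ]
  push_cast
  ring

lemma Hh_nonneg (m : ℕ) : 0 ≤ Hh m := by
  induction m with
  | zero => rw [Hh_zero]
  | succ m ih =>
      rw [Hh_succ]
      have : (0:ℝ) ≤ 1/(m+1:ℝ) := by positivity
      linarith

lemma Hh_mono : Monotone Hh := by
  apply monotone_nat_of_le_succ
  intro m
  rw [Hh_succ]
  have : (0:ℝ) ≤ 1/(m+1:ℝ) := by positivity
  linarith

lemma Hh_pos {m : ℕ} (h : 0 < m) : 0 < Hh m := by
  have h2 : (0:ℚ) < harmonic m := harmonic_pos (by omega)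
  unfold Hh
  exact_mod_cast h2

lemma log_lt_Hh {m : ℕ} (h : 1 ≤ m) : Real.log m < Hh m := by
  have h1 : Real.log m < Real.log (m + 1) := by
    apply Real.log_lt_log (by exact_mod_cast h)
    norm_num
  have h2 : Real.log ((m:ℝ) + 1) ≤ Hh m := by
    have h3 := log_add_one_le_harmonic m
    push_cast at h3
    exact h3
  linarith

/-- the potential of a window state -/
def phi (k : ℕ) (σ : Finset (Fin (k + 1))) : ℝ := (k + 1 : ℝ) * Hh (k + 1 - σ.card)

/-- mean phase length -/
def lam (k : ℕ) : ℝ := (k + 1 : ℝ) * Hh k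

lemma lam_pos (hk : 1 ≤ k) : 0 < lam k := by
  have h1 : (0:ℝ) < (k+1:ℝ) := by positivity
  exact mul_pos h1 (Hh_pos (by omega))

lemma phi_nonneg (σ : Finset (Fin (k + 1))) : 0 ≤ phi k σ := by
  unfold phi
  have := Hh_nonneg (k + 1 - σ.card)
  positivity

lemma phi_le_max (σ : Finset (Fin (k + 1))) : phi k σ ≤ (k+1:ℝ) * Hh (k+1) := by
  unfold phi
  have h1 : Hh (k + 1 - σ.card) ≤ Hh (k+1) := Hh_mono (by omega)
  have hpos : (0:ℝ) ≤ (k+1:ℝ) := by positivity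
  exact mul_le_mul_of_nonneg_left h1 hpos

lemma phi_le_lam_of_card_pos {σ : Finset (Fin (k + 1))} (h : 0 < σ.card) :
    phi k σ ≤ lam k := by
  unfold phi lam
  have h1 : Hh (k + 1 - σ.card) ≤ Hh k := Hh_mono (by omega)
  have hpos : (0:ℝ) ≤ (k+1:ℝ) := by positivity
  exact mul_le_mul_of_nonneg_left h1 hpos

lemma phi_singleton (v : Fin (k+1)) : phi k ({v} : Finset (Fin (k+1))) = lam k := by
  unfold phi lam
  simp

lemma phi_empty : phi k (∅ : Finset (Fin (k+1))) = (k+1:ℝ) * Hh (k+1) := by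
  unfold phi; simp

/-- The key one-step identity for the potential. -/
lemma phi_step (σ : Finset (Fin (k + 1))) (hσ : σ ≠ univ) :
    ∑ v : Fin (k + 1), (phi k (nextS σ v) -
      lam k * (if insert v σ = univ then (1:ℝ) else 0)) =
    (k + 1 : ℝ) * (phi k σ - 1) := by
  classical
  have hcard : σ.card ≤ k := by
    have hsub : σ ⊂ univ := ssubset_univ_iff.mpr hσ
    have h2 := card_lt_card hsub
    rw [card_univ, Fintype.card_fin] at h2
    omega
  set m : ℕ := k + 1 - σ.card with hm
  have hm1 : 1 ≤ m := by omega
  have hmle : m ≤ k + 1 := by omega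
  have key : ∀ v : Fin (k+1),
      phi k (nextS σ v) - lam k * (if insert v σ = univ then (1:ℝ) else 0)
      = if v ∈ σ then (k+1:ℝ) * Hh m else (k+1:ℝ) * Hh (m - 1) := by
    intro v
    by_cases hv : v ∈ σ
    · have h1 : insert v σ = σ := insert_eq_self.mpr hv
      have h2 : ¬ insert v σ = univ := by rw [h1]; exact hσ
      rw [if_pos hv, if_neg h2]
      unfold nextS
      rw [if_neg h2, h1]
      unfold phi
      rw [← hm]
      ring
    · have hins : (insert v σ).card = σ.card + 1 := card_insert_of_notMem hv
      rw [if_neg hv]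
      by_cases hcomp : insert v σ = univ
      · have hmone : m = 1 := by
          have h3 := congrArg Finset.card hcomp
          rw [hins, card_univ, Fintype.card_fin] at h3
          omega
        rw [if_pos hcomp]
        unfold nextS
        rw [if_pos hcomp, phi_singleton, hmone]
        rw [Hh_zero]
        ring
      · rw [if_neg hcomp]
        unfold nextS
        rw [if_neg hcomp]
        have h4 : phi k (insert v σ) = (k+1:ℝ) * Hh (m - 1) := by
          unfold phi
          rw [hins]
          have h9 : k + 1 - (σ.card + 1) = m - 1 := by omega
          rw [h9]
        rw [h4]
        ring
  rw [Finset.sum_congr rfl (fun v _ => key v)]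
  rw [Finset.sum_ite]
  have e1 : (univ.filter (fun v => v ∈ σ)) = σ := by ext v; simp
  have e2 : (univ.filter (fun v => ¬ v ∈ σ)) = univ \ σ := by ext v; simp
  rw [e1, e2, Finset.sum_const, Finset.sum_const]
  have hcompl : (univ \ σ).card = m := by
    rw [card_sdiff_of_subset (subset_univ σ), card_univ, Fintype.card_fin, hm]
  rw [hcompl]
  have hsc : (σ.card : ℝ) = (k+1:ℝ) - m := by
    have h5 : σ.card = k + 1 - m := by omega
    rw [h5, Nat.cast_sub hmle]
    push_cast
    ring
  rw [nsmul_eq_mul, nsmul_eq_mul, hsc]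
  unfold phi
  rw [← hm]
  have hHm : Hh (m-1) = Hh m - 1/(m:ℝ) := by
    have h6 := Hh_succ (m-1)
    have h7 : m - 1 + 1 = m := by omega
    rw [h7] at h6
    have h8 : ((m-1 : ℕ):ℝ) + 1 = (m:ℝ) := by
      rw [Nat.cast_sub hm1]
      push_cast; ring
    rw [h8] at h6
    rw [h6]; ring
  rw [hHm]
  have hMne : (m:ℝ) ≠ 0 := by
    have : (0:ℝ) < m := by exact_mod_cast hm1
    linarith
  field_simp
  ring


/- ### Stage 2 : the explicit optimal schedule -/

/-- seen pages in phase 0 are exactly the requested pages so far -/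
lemma seenS_eq_image_of_no_comp {r : ℕ → Fin (k + 1)} {t : ℕ}
    (h : ∀ u < t, ¬ isComp r u) : seenS r t = Finset.image r (range t) := by
  induction t with
  | zero => simp [seenS]
  | succ t ih =>
      rw [seenS_succ_of_not_comp (h t (by omega)), ih (fun u hu => h u (by omega)),
        Finset.range_add_one, Finset.image_insert]

/-- pages seen in a completed window -/
lemma seenS_eq_image_Ico {r : ℕ → Fin (k + 1)} {a b : ℕ} (hab : a < b)
    (ha : isComp r a) (hmid : ∀ u, a < u → u < b → ¬ isComp r u) :
    seenS r b = Finset.image r (Finset.Ico a b) := by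
  induction b with
  | zero => omega
  | succ b ih =>
      rcases Nat.lt_or_ge a b with hb | hb
      · have h1 : seenS r b = Finset.image r (Finset.Ico a b) :=
          ih hb (fun u hu hub => hmid u hu (by omega))
        rw [seenS_succ_of_not_comp (hmid b hb (by omega)), h1]
        rw [Nat.Ico_succ_right_eq_insert_Ico (by omega), Finset.image_insert]
      · have : a = b := by omega
        subst this
        rw [seenS_succ_of_comp ha]
        simp [Nat.Ico_succ_right_eq_insert_Ico (le_refl a)]

/-- membership of a request in the seen set at a later time of the same window -/
lemma req_mem_seenS {r : ℕ → Fin (k + 1)} {t b : ℕ} (htb : t < b)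
    (hmid : ∀ u, t < u → u < b → ¬ isComp r u) : r t ∈ seenS r b := by
  have h1 : seenS r (t+1) ⊆ seenS r b :=
    seenS_subset_of_no_comp (by omega) (fun u hu hub => hmid u (by omega) hub)
  exact h1 (mem_seenS_succ r t)

variable (r : ℕ → Fin (k + 1)) (T : ℕ)

/-- there exists a completion before `u` -/
def compBefore (u : ℕ) : Prop := ∃ w, w < u ∧ isComp r w

/-- a page missing from the last (incomplete) window -/
def tailPage : Fin (k + 1) :=
  if h : (univ \ seenS r T).Nonempty then (univ \ seenS r T).min' h else ⟨0, by omega⟩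

lemma tailPage_not_mem (hk : 1 ≤ k) : tailPage r T ∉ seenS r T := by
  unfold tailPage
  have hne : (univ \ seenS r T).Nonempty := by
    rw [Finset.sdiff_nonempty]
    intro hsub
    exact seenS_ne_univ hk r T (Finset.eq_univ_iff_forall.mpr (fun x => hsub (mem_univ x)))
  rw [dif_pos hne]
  have := Finset.min'_mem _ hne
  rw [Finset.mem_sdiff] at this
  exact this.2

/-- the next missing page, as seen from time `u` -/
def nxt (u : ℕ) : Finset (Fin (k + 1)) :=
  if h2 : ∃ w, u ≤ w ∧ w < T ∧ isComp r w then univ \ {r (Nat.find h2)}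
  else univ \ {tailPage r T}

/-- The explicit optimal offline schedule. -/
def sched : ℕ → Finset (Fin (k + 1)) := fun u =>
  if compBefore r (min u T) then nxt r T (min u T)
  else Finset.image r (range (min u T))

lemma sched_beyond {u : ℕ} (hu : T ≤ u) : sched r T u = sched r T T := by
  unfold sched
  rw [Nat.min_eq_right hu, Nat.min_self]

lemma sched_spec1 {u : ℕ} (hu : u ≤ T) (h1 : ¬ compBefore r u) :
    sched r T u = Finset.image r (range u) := by
  unfold sched
  rw [Nat.min_eq_left hu, if_neg h1]

lemma sched_spec2 {u w : ℕ} (hu : u ≤ T) (h1 : compBefore r u)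
    (hw1 : u ≤ w) (hw2 : w < T) (hw3 : isComp r w)
    (hmin : ∀ v, u ≤ v → v < w → ¬ isComp r v) :
    sched r T u = univ \ {r w} := by
  unfold sched
  rw [Nat.min_eq_left hu, if_pos h1]
  unfold nxt
  have hex : ∃ w', u ≤ w' ∧ w' < T ∧ isComp r w' := ⟨w, hw1, hw2, hw3⟩
  rw [dif_pos hex]
  have hfw : Nat.find hex = w := by
    have h2 := Nat.find_spec hex
    have hle : Nat.find hex ≤ w := Nat.find_min' hex ⟨hw1, hw2, hw3⟩
    rcases Nat.lt_or_ge (Nat.find hex) w with hlt | hge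
    · exact absurd h2.2.2 (hmin _ h2.1 hlt)
    · omega
  rw [hfw]

lemma sched_spec3 {u : ℕ} (hu : u ≤ T) (h1 : compBefore r u)
    (h2 : ∀ w, u ≤ w → w < T → ¬ isComp r w) :
    sched r T u = univ \ {tailPage r T} := by
  unfold sched
  rw [Nat.min_eq_left hu, if_pos h1]
  unfold nxt
  have hnex : ¬ ∃ w, u ≤ w ∧ w < T ∧ isComp r w := by
    rintro ⟨w, hw1, hw2, hw3⟩
    exact h2 w hw1 hw2 hw3
  rw [dif_neg hnex]

lemma sched_zero : sched r T 0 = ∅ := by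
  unfold sched
  have h0 : min 0 T = 0 := by omega
  rw [h0]
  have h1 : ¬ compBefore r 0 := by rintro ⟨w, hw, _⟩; omega
  rw [if_neg h1]
  simp

lemma sched_card (hk : 1 ≤ k) (u : ℕ) : (sched r T u).card ≤ k := by
  unfold sched
  split_ifs with h1
  · unfold nxt
    split_ifs with h2
    · rw [Finset.card_sdiff_of_subset (by simp), card_univ, Fintype.card_fin]
      simp
    · rw [Finset.card_sdiff_of_subset (by simp), card_univ, Fintype.card_fin]
      simp
  · have h2 : ∀ u' < min u T, ¬ isComp r u' := by
      intro u' hu'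
      intro hc
      exact h1 ⟨u', hu', hc⟩
    rw [← seenS_eq_image_of_no_comp h2]
    exact card_seenS_le hk r _

/- ### Stage 2b : the schedule is a valid offline run; its cost; optimality -/

lemma insert_sdiff_self_univ (a : Fin (k+1)) :
    insert a (univ \ {a}) = (univ : Finset (Fin (k+1))) := by
  ext x
  simp [Finset.mem_insert, Finset.mem_sdiff]

lemma sched_run (hk : 1 ≤ k) : IsOfflineRun k r T (sched r T) := by
  refine ⟨sched_zero r T, fun u => sched_card r T hk u, fun t ht => ?_⟩
  have ht1 : t + 1 ≤ T := ht
  constructor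
  · -- r t ∈ sched r T (t+1)
    by_cases hcb : compBefore r (t+1)
    · by_cases hex : ∃ w, t+1 ≤ w ∧ w < T ∧ isComp r w
      · obtain ⟨W, hW1, hW2, hW3⟩ := hex
        -- take least such W
        have hexx : ∃ w, t+1 ≤ w ∧ w < T ∧ isComp r w := ⟨W, hW1, hW2, hW3⟩
        set W0 := Nat.find hexx with hW0
        have hspec := Nat.find_spec hexx
        have hmin : ∀ v, t+1 ≤ v → v < W0 → ¬ isComp r v := by
          intro v hv1 hv2 hcv
          exact Nat.find_min hexx hv2 ⟨hv1, by omega, hcv⟩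
        rw [sched_spec2 r T ht1 hcb hspec.1 hspec.2.1 hspec.2.2 hmin]
        rw [Finset.mem_sdiff]
        refine ⟨mem_univ _, ?_⟩
        simp only [Finset.mem_singleton]
        intro heq
        have hmem : r t ∈ seenS r W0 := by
          apply req_mem_seenS (by omega)
          intro u hu1 hu2
          exact hmin u (by omega) hu2
        rw [heq] at hmem
        exact comp_not_mem hk hspec.2.2 hmem
      · push_neg at hex
        rw [sched_spec3 r T ht1 hcb (fun w hw1 hw2 => hex w hw1 hw2)]
        rw [Finset.mem_sdiff]
        refine ⟨mem_univ _, ?_⟩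
        simp only [Finset.mem_singleton]
        intro heq
        have hmem : r t ∈ seenS r T := by
          apply req_mem_seenS ht
          intro u hu1 hu2
          exact hex u (by omega) hu2
        rw [heq] at hmem
        exact tailPage_not_mem r T hk hmem
    · -- no completion at all before t+1
      have hnt : ¬ compBefore r t := by
        intro ⟨w, hw, hcw⟩; exact hcb ⟨w, by omega, hcw⟩
      rw [sched_spec1 r T ht1 hcb]
      exact Finset.mem_image.mpr ⟨t, by simp, rfl⟩
  · -- subset condition
    by_cases hct : isComp r t
    · -- insert (r t) (sched t) = univ
      have hkey : insert (r t) (sched r T t) = univ := by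
        by_cases hcbt : compBefore r t
        · rw [sched_spec2 r T (le_of_lt ht) hcbt (le_refl t) ht hct (by omega)]
          exact insert_sdiff_self_univ (r t)
        · rw [sched_spec1 r T (le_of_lt ht) hcbt]
          rw [← seenS_eq_image_of_no_comp (fun u hu hcu => hcbt ⟨u, hu, hcu⟩)]
          exact hct
      rw [hkey]
      exact subset_univ _
    · -- miss-free step
      by_cases hcb : compBefore r (t+1)
      · have hkey : sched r T (t+1) = sched r T t := by
          have hcbt : compBefore r t := by
            obtain ⟨w, hw, hcw⟩ := hcb
            rcases Nat.lt_or_ge w t with h1 | h1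
            · exact ⟨w, h1, hcw⟩
            · have : w = t := by omega
              subst this; exact absurd hcw hct
          by_cases hex : ∃ w, t+1 ≤ w ∧ w < T ∧ isComp r w
          · obtain ⟨W, hW1, hW2, hW3⟩ := hex
            have hexx : ∃ w, t+1 ≤ w ∧ w < T ∧ isComp r w := ⟨W, hW1, hW2, hW3⟩
            set W0 := Nat.find hexx with hW0
            have hspec := Nat.find_spec hexx
            have hmin : ∀ v, t+1 ≤ v → v < W0 → ¬ isComp r v := by
              intro v hv1 hv2 hcv
              exact Nat.find_min hexx hv2 ⟨hv1, by omega, hcv⟩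
            rw [sched_spec2 r T ht1 hcb hspec.1 hspec.2.1 hspec.2.2 hmin]
            rw [sched_spec2 r T (le_of_lt ht) hcbt (by omega) hspec.2.1 hspec.2.2 ?_]
            intro v hv1 hv2
            rcases Nat.lt_or_ge v (t+1) with h1 | h1
            · have : v = t := by omega
              subst this; exact hct
            · exact hmin v h1 hv2
          · push_neg at hex
            rw [sched_spec3 r T ht1 hcb (fun w hw1 hw2 => hex w hw1 hw2)]
            rw [sched_spec3 r T (le_of_lt ht) hcbt ?_]
            intro w hw1 hw2
            rcases Nat.lt_or_ge w (t+1) with h1 | h1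
            · have : w = t := by omega
              subst this; exact hct
            · exact hex w h1 hw2
        rw [hkey]
        exact subset_insert _ _
      · have hcbt : ¬ compBefore r t := by
          intro ⟨w, hw, hcw⟩; exact hcb ⟨w, by omega, hcw⟩
        rw [sched_spec1 r T ht1 hcb, sched_spec1 r T (le_of_lt ht) hcbt,
          Finset.range_add_one, Finset.image_insert]

/- ### cost of the explicit schedule -/

lemma sched_fault_iff (hk : 1 ≤ k) {t : ℕ} (ht : t < T) :
    (r t ∉ sched r T t) ↔
      (if compBefore r t then isComp r t else r t ∉ Finset.image r (range t)) := by
  by_cases hcbt : compBefore r t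
  · rw [if_pos hcbt]
    by_cases hct : isComp r t
    · rw [sched_spec2 r T (le_of_lt ht) hcbt (le_refl t) ht hct (by omega)]
      simp [hct]
    · simp only [hct, iff_false, not_not]
      by_cases hex : ∃ w, t ≤ w ∧ w < T ∧ isComp r w
      · obtain ⟨W, hW1, hW2, hW3⟩ := hex
        have hexx : ∃ w, t ≤ w ∧ w < T ∧ isComp r w := ⟨W, hW1, hW2, hW3⟩
        set W0 := Nat.find hexx with hW0
        have hspec := Nat.find_spec hexx
        have hmin : ∀ v, t ≤ v → v < W0 → ¬ isComp r v := by
          intro v hv1 hv2 hcv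
          exact Nat.find_min hexx hv2 ⟨hv1, by omega, hcv⟩
        rw [sched_spec2 r T (le_of_lt ht) hcbt hspec.1 hspec.2.1 hspec.2.2 hmin]
        rw [Finset.mem_sdiff]
        refine ⟨mem_univ _, ?_⟩
        simp only [Finset.mem_singleton]
        intro heq
        have hsle : t ≤ W0 := hspec.1
        have hscomp : isComp r W0 := hspec.2.2
        have htW : t < W0 := by
          rcases Nat.lt_or_ge t W0 with h1 | h1
          · exact h1
          · exfalso
            have h2 : W0 = t := by omega
            rw [h2] at hscomp
            exact hct hscomp
        have hmem : r t ∈ seenS r W0 := by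
          apply req_mem_seenS htW
          intro u hu1 hu2
          exact hmin u (by omega) hu2
        rw [heq] at hmem
        exact comp_not_mem hk hspec.2.2 hmem
      · push_neg at hex
        rw [sched_spec3 r T (le_of_lt ht) hcbt (fun w hw1 hw2 => hex w hw1 hw2)]
        rw [Finset.mem_sdiff]
        refine ⟨mem_univ _, ?_⟩
        simp only [Finset.mem_singleton]
        intro heq
        have hmem : r t ∈ seenS r T := by
          apply req_mem_seenS ht
          intro u hu1 hu2
          apply hex u (by omega) hu2
        rw [heq] at hmem
        exact tailPage_not_mem r T hk hmem
  · rw [if_neg hcbt, sched_spec1 r T (le_of_lt ht) hcbt]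

/-- the set of first occurrences -/
def FOset : Finset ℕ := (range T).filter (fun t => r t ∉ Finset.image r (range t))

lemma card_FOset : (FOset r T).card = (Finset.image r (range T)).card := by
  apply Finset.card_bij (fun t _ => r t)
  · intro a ha
    rw [FOset, Finset.mem_filter, mem_range] at ha
    exact Finset.mem_image.mpr ⟨a, Finset.mem_range.mpr ha.1, rfl⟩
  · intro a ha b hb hab
    rw [FOset, Finset.mem_filter] at ha hb
    by_contra hne
    rcases Nat.lt_or_ge a b with h1 | h1
    · exact hb.2 (Finset.mem_image.mpr ⟨a, Finset.mem_range.mpr h1, hab⟩)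
    · have h2 : b < a := by omega
      exact ha.2 (Finset.mem_image.mpr ⟨b, Finset.mem_range.mpr h2, hab.symm⟩)
  · intro p hp
    rw [Finset.mem_image] at hp
    obtain ⟨t, ht, hrt⟩ := hp
    rw [mem_range] at ht
    have hexp : ∃ u, u < T ∧ r u = p := ⟨t, ht, hrt⟩
    set u0 := Nat.find hexp with hu0
    have hspec := Nat.find_spec hexp
    refine ⟨u0, ?_, hspec.2⟩
    rw [FOset, Finset.mem_filter, mem_range]
    refine ⟨hspec.1, ?_⟩
    intro hmem
    rw [Finset.mem_image] at hmem
    obtain ⟨v, hv, hrv⟩ := hmem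
    rw [mem_range] at hv
    exact Nat.find_min hexp hv ⟨by omega, by rw [hrv, hspec.2]⟩

lemma image_univ_of_first_comp {w : ℕ} (hw : w < T) (hcomp : isComp r w)
    (hmin : ∀ v < w, ¬ isComp r v) : Finset.image r (range (w+1)) = univ := by
  rw [Finset.range_add_one, Finset.image_insert, ← seenS_eq_image_of_no_comp hmin]
  exact hcomp

lemma image_univ_of_compBefore (hcb : compBefore r T) :
    Finset.image r (range T) = univ := by
  obtain ⟨w, hw, hcw⟩ := hcb
  have hexc : ∃ v, isComp r v := ⟨w, hcw⟩
  set fc := Nat.find hexc with hfc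
  have hfcc := Nat.find_spec hexc
  have hfcle : fc ≤ w := Nat.find_min' hexc hcw
  have h1 : Finset.image r (range (fc+1)) = univ :=
    image_univ_of_first_comp r T (by omega) hfcc (fun v hv => Nat.find_min hexc hv)
  apply Finset.univ_subset_iff.mp
  rw [← h1]
  exact Finset.image_subset_image (Finset.range_subset_range.mpr (by omega))

lemma runCost_sched (hk : 1 ≤ k) :
    runCost k r T (sched r T) =
      if compBefore r T then k + ncount r T else (Finset.image r (range T)).card := by
  by_cases hcb : compBefore r T
  · rw [if_pos hcb]
    obtain ⟨w, hw, hcw⟩ := hcb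
    have hexc : ∃ v, isComp r v := ⟨w, hcw⟩
    set fc := Nat.find hexc with hfc
    have hfcc : isComp r fc := Nat.find_spec hexc
    have hfcT : fc < T := by
      have := Nat.find_min' hexc hcw
      omega
    have hiff : ∀ t, compBefore r t ↔ fc < t := by
      intro t
      constructor
      · rintro ⟨v, hv, hcv⟩
        have := Nat.find_min' hexc hcv
        omega
      · intro h
        exact ⟨fc, h, hfcc⟩
    have hset : (range T).filter (fun t => r t ∉ sched r T t) =
        FOset r T ∪ (((range T).filter (fun t => isComp r t)).erase fc) := by
      ext t
      simp only [Finset.mem_filter, mem_range, Finset.mem_union, Finset.mem_erase, FOset]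
      constructor
      · rintro ⟨htT, hfault⟩
        rw [sched_fault_iff r T hk htT] at hfault
        by_cases hcbt : compBefore r t
        · rw [if_pos hcbt] at hfault
          right
          refine ⟨?_, htT, hfault⟩
          have := (hiff t).mp hcbt
          omega
        · rw [if_neg hcbt] at hfault
          exact Or.inl ⟨htT, hfault⟩
      · rintro (⟨htT, hFO⟩ | ⟨hne, htT, hcomp⟩)
        · refine ⟨htT, ?_⟩
          rw [sched_fault_iff r T hk htT]
          have hcbt : ¬ compBefore r t := by
            intro hc
            have h2 := (hiff t).mp hc
            have h3 : Finset.image r (range (fc+1)) = univ :=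
              image_univ_of_first_comp r T hfcT hfcc (fun v hv => Nat.find_min hexc hv)
            apply hFO
            have : Finset.image r (range (fc+1)) ⊆ Finset.image r (range t) :=
              Finset.image_subset_image (Finset.range_subset_range.mpr (by omega))
            rw [h3] at this
            exact this (mem_univ _)
          rw [if_neg hcbt]
          exact hFO
        · refine ⟨htT, ?_⟩
          rw [sched_fault_iff r T hk htT]
          have h4 : fc ≤ t := Nat.find_min' hexc hcomp
          have hcbt : compBefore r t := (hiff t).mpr (by omega)
          rw [if_pos hcbt]
          exact hcomp
    rw [runCost, hset, Finset.card_union_of_disjoint, card_FOset r T]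
    · have h5 : Finset.image r (range T) = univ := image_univ_of_compBefore r T ⟨w, hw, hcw⟩
      rw [h5, card_univ, Fintype.card_fin]
      have h6 : fc ∈ (range T).filter (fun t => isComp r t) := by
        rw [Finset.mem_filter, mem_range]
        exact ⟨hfcT, hfcc⟩
      rw [Finset.card_erase_of_mem h6]
      have h7 : 0 < ((range T).filter (fun t => isComp r t)).card :=
        Finset.card_pos.mpr ⟨fc, h6⟩
      rw [ncount]
      omega
    · rw [Finset.disjoint_left]
      intro t ht1 ht2
      rw [FOset, Finset.mem_filter] at ht1
      rw [Finset.mem_erase, Finset.mem_filter] at ht2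
      have h4 : fc ≤ t := Nat.find_min' hexc ht2.2.2
      have h5 : fc < t := by omega
      have h3 : Finset.image r (range (fc+1)) = univ :=
        image_univ_of_first_comp r T hfcT hfcc (fun v hv => Nat.find_min hexc hv)
      apply ht1.2
      have : Finset.image r (range (fc+1)) ⊆ Finset.image r (range t) :=
        Finset.image_subset_image (Finset.range_subset_range.mpr (by omega))
      rw [h3] at this
      exact this (mem_univ _)
  · rw [if_neg hcb]
    rw [runCost, ← card_FOset r T]
    congr 1
    apply filter_congr
    intro t ht
    rw [mem_range] at ht
    rw [sched_fault_iff r T hk ht]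
    have hcbt : ¬ compBefore r t := by
      rintro ⟨v, hv, hcv⟩
      exact hcb ⟨v, by omega, hcv⟩
    rw [if_neg hcbt]

/- ### lower bound on the cost of any offline run -/

lemma run_cache_subset {C' : ℕ → Finset (Fin (k+1))} (hC' : IsOfflineRun k r T C') :
    ∀ t, t ≤ T → C' t ⊆ Finset.image r (range t) := by
  intro t
  induction t with
  | zero => intro _; rw [hC'.1]; exact Finset.empty_subset _
  | succ t ih =>
      intro ht
      have h1 := (hC'.2.2 t (by omega)).2
      have h2 := ih (by omega)
      calc C' (t+1) ⊆ insert (r t) (C' t) := h1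
        _ ⊆ insert (r t) (Finset.image r (range t)) := Finset.insert_subset_insert _ h2
        _ = Finset.image r (range (t+1)) := by rw [Finset.range_add_one, Finset.image_insert]

lemma exists_fault_between {C' : ℕ → Finset (Fin (k+1))} (hC' : IsOfflineRun k r T C')
    {a b : ℕ} (hab : a < b) (hbT : b < T) (ha : isComp r a) (hb : isComp r b)
    (hmid : ∀ u, a < u → u < b → ¬ isComp r u) :
    ∃ u, a < u ∧ u ≤ b ∧ r u ∉ C' u := by
  by_contra hcon
  push_neg at hcon
  have chain : ∀ d, a + 1 + d ≤ b + 1 → C' (a+1+d) ⊆ C' (a+1) := by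
    intro d
    induction d with
    | zero => intro _; exact subset_rfl
    | succ d ih =>
        intro hle
        have hu : a + 1 + d < T := by omega
        have h1 := (hC'.2.2 (a+1+d) hu).2
        have h2 : r (a+1+d) ∈ C' (a+1+d) := hcon (a+1+d) (by omega) (by omega)
        have h3 : insert (r (a+1+d)) (C' (a+1+d)) = C' (a+1+d) := Finset.insert_eq_self.mpr h2
        have h4 : C' (a+1+d+1) ⊆ C' (a+1+d) := by rw [← h3]; exact h1
        have : a+1+(d+1) = a+1+d+1 := by omega
        rw [this]
        exact h4.trans (ih (by omega))
  have chain' : ∀ u, a + 1 ≤ u → u ≤ b + 1 → C' u ⊆ C' (a+1) := by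
    intro u h1 h2
    have : u = a + 1 + (u - (a+1)) := by omega
    rw [this]
    exact chain _ (by omega)
  have huniv : ∀ x : Fin (k+1), x ∈ C' (a+1) := by
    intro x
    have hx : x ∈ insert (r b) (seenS r b) := by
      rw [hb]; exact mem_univ x
    rcases Finset.mem_insert.mp hx with hx1 | hx2
    · have h5 : r b ∈ C' b := hcon b (by omega) (by omega)
      rw [hx1]
      exact chain' b (by omega) (by omega) h5
    · rw [seenS_eq_image_Ico hab ha hmid] at hx2
      rw [Finset.mem_image] at hx2
      obtain ⟨v, hv, hrv⟩ := hx2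
      rw [Finset.mem_Ico] at hv
      rcases Nat.lt_or_ge a v with h6 | h6
      · have h7 : r v ∈ C' v := hcon v h6 (by omega)
        rw [← hrv]
        exact chain' v (by omega) (by omega) h7
      · have h8 : v = a := by omega
        subst h8
        rw [← hrv]
        exact (hC'.2.2 v (by omega)).1
  have h9 : (univ : Finset (Fin (k+1))).card ≤ (C' (a+1)).card :=
    Finset.card_le_card (fun x _ => huniv x)
  rw [card_univ, Fintype.card_fin] at h9
  have h10 := hC'.2.1 (a+1)
  omega

lemma opt_lb_aux {C' : ℕ → Finset (Fin (k+1))} (hC' : IsOfflineRun k r T C') :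
    ∀ T', T' ≤ T →
      (if compBefore r T' then k + ncount r T' else (Finset.image r (range T')).card)
        ≤ ((range T').filter (fun t => r t ∉ C' t)).card := by
  intro T'
  induction T' using Nat.strong_induction_on with
  | _ T' IH =>
  intro hT'
  by_cases hcb : compBefore r T'
  · rw [if_pos hcb]
    obtain ⟨w, hwT, hwc⟩ := hcb
    have hT'pos : 1 ≤ T' := by omega
    set b := Nat.findGreatest (fun v => isComp r v) (T'-1) with hbdef
    have hbc : isComp r b := Nat.findGreatest_spec (m := w) (by omega) hwc
    have hbub : b ≤ T' - 1 := Nat.findGreatest_le _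
    have hbmax : ∀ v, b < v → v < T' → ¬ isComp r v := by
      intro v h1 h2
      exact Nat.findGreatest_is_greatest h1 (by omega)
    by_cases hcbb : compBefore r b
    · obtain ⟨w2, hw2b, hw2c⟩ := hcbb
      have hbpos : 1 ≤ b := by omega
      set a := Nat.findGreatest (fun v => isComp r v) (b-1) with hadef
      have hac : isComp r a := Nat.findGreatest_spec (m := w2) (by omega) hw2c
      have haub : a ≤ b - 1 := Nat.findGreatest_le _
      have hamax : ∀ v, a < v → v < b → ¬ isComp r v := by
        intro v h1 h2
        exact Nat.findGreatest_is_greatest h1 (by omega)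
      have hab : a < b := by omega
      -- induction hypothesis at a+1
      have hIH := IH (a+1) (by omega) (by omega)
      have hcba1 : compBefore r (a+1) := ⟨a, by omega, hac⟩
      rw [if_pos hcba1] at hIH
      -- a fault inside (a, b]
      obtain ⟨u, hu1, hu2, hu3⟩ :=
        exists_fault_between r T hC' hab (by omega) hac hbc hamax
      -- counting completions
      have hcnt : ncount r T' = ncount r (a+1) + 1 := by
        rw [ncount, ncount]
        have hset : (range T').filter (fun v => isComp r v) =
            insert b ((range (a+1)).filter (fun v => isComp r v)) := by
          ext v
          simp only [Finset.mem_filter, mem_range, Finset.mem_insert]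
          constructor
          · rintro ⟨h1, h2⟩
            rcases Nat.lt_or_ge v (a+1) with h3 | h3
            · exact Or.inr ⟨h3, h2⟩
            · left
              by_contra hne
              rcases Nat.lt_or_ge v b with h4 | h4
              · exact hamax v (by omega) h4 h2
              · exact hbmax v (by omega) h1 h2
          · rintro (h1 | ⟨h1, h2⟩)
            · subst h1; exact ⟨by omega, hbc⟩
            · exact ⟨by omega, h2⟩
        rw [hset, Finset.card_insert_of_notMem]
        simp only [Finset.mem_filter, mem_range]
        intro hmem
        omega
      -- counting faults
      have hfsub : insert u ((range (a+1)).filter (fun t => r t ∉ C' t)) ⊆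
          (range T').filter (fun t => r t ∉ C' t) := by
        apply Finset.insert_subset
        · rw [Finset.mem_filter, mem_range]
          exact ⟨by omega, hu3⟩
        · intro t ht
          rw [Finset.mem_filter, mem_range] at ht ⊢
          exact ⟨by omega, ht.2⟩
      have hcard1 : ((range (a+1)).filter (fun t => r t ∉ C' t)).card + 1 ≤
          ((range T').filter (fun t => r t ∉ C' t)).card := by
        have h5 := Finset.card_le_card hfsub
        rw [Finset.card_insert_of_notMem] at h5
        · exact h5
        · simp only [Finset.mem_filter, mem_range]
          intro hmem
          omega
      omega
    · -- b is the unique completion before T'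
      have hcnt : ncount r T' = 1 := by
        rw [ncount]
        have hset : (range T').filter (fun v => isComp r v) = {b} := by
          ext v
          simp only [Finset.mem_filter, mem_range, Finset.mem_singleton]
          constructor
          · rintro ⟨h1, h2⟩
            by_contra hne
            rcases Nat.lt_or_ge v b with h3 | h3
            · exact hcbb ⟨v, h3, h2⟩
            · exact hbmax v (by omega) h1 h2
          · intro h1; subst h1; exact ⟨by omega, hbc⟩
        rw [hset, Finset.card_singleton]
      rw [hcnt]
      -- all k+1 first occurrences are faults
      have hFOsub : FOset r T' ⊆ (range T').filter (fun t => r t ∉ C' t) := by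
        intro t ht
        rw [FOset, Finset.mem_filter, mem_range] at ht
        rw [Finset.mem_filter, mem_range]
        refine ⟨ht.1, ?_⟩
        intro hmem
        exact ht.2 (run_cache_subset r T hC' t (by omega) hmem)
      have hcFO := Finset.card_le_card hFOsub
      rw [card_FOset r T'] at hcFO
      have himg : Finset.image r (range T') = univ := by
        apply Finset.univ_subset_iff.mp
        have h1 : Finset.image r (range (b+1)) = univ :=
          image_univ_of_first_comp r T' (by omega) hbc
            (fun v hv hcv => hcbb ⟨v, hv, hcv⟩)
        rw [← h1]
        exact Finset.image_subset_image (Finset.range_subset_range.mpr (by omega))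
      rw [himg, card_univ, Fintype.card_fin] at hcFO
      omega
  · rw [if_neg hcb]
    have hFOsub : FOset r T' ⊆ (range T').filter (fun t => r t ∉ C' t) := by
      intro t ht
      rw [FOset, Finset.mem_filter, mem_range] at ht
      rw [Finset.mem_filter, mem_range]
      refine ⟨ht.1, ?_⟩
      intro hmem
      exact ht.2 (run_cache_subset r T hC' t (by omega) hmem)
    have hcFO := Finset.card_le_card hFOsub
    rw [card_FOset r T'] at hcFO
    exact hcFO

/- ### optimal cost facts -/

lemma optCost_eq_sched (hk : 1 ≤ k) :
    optCost k r T = runCost k r T (sched r T) := by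
  have hmem : runCost k r T (sched r T) ∈
      {c : ℕ | ∃ C, IsOfflineRun k r T C ∧ runCost k r T C = c} :=
    ⟨sched r T, sched_run r T hk, rfl⟩
  apply le_antisymm
  · exact Nat.sInf_le hmem
  · have hne : {c : ℕ | ∃ C, IsOfflineRun k r T C ∧ runCost k r T C = c}.Nonempty :=
      ⟨_, hmem⟩
    obtain ⟨C0, hC0, hC0c⟩ := Nat.sInf_mem hne
    rw [optCost, ← hC0c]
    calc runCost k r T (sched r T)
        = if compBefore r T then k + ncount r T else (Finset.image r (range T)).card :=
          runCost_sched r T hk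
      _ ≤ runCost k r T C0 := opt_lb_aux r T hC0 T le_rfl

lemma optCost_le (hk : 1 ≤ k) : optCost k r T ≤ k + ncount r T := by
  rw [optCost_eq_sched r T hk, runCost_sched r T hk]
  by_cases hcb : compBefore r T
  · rw [if_pos hcb]
  · rw [if_neg hcb]
    have h1 : Finset.image r (range T) = seenS r T :=
      (seenS_eq_image_of_no_comp (fun u hu hcu => hcb ⟨u, hu, hcu⟩)).symm
    rw [h1]
    have := card_seenS_le hk r T
    omega

lemma optCost_pos (hk : 1 ≤ k) (hT : 1 ≤ T) : 0 < optCost k r T := by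
  rw [optCost_eq_sched r T hk]
  apply Finset.card_pos.mpr
  refine ⟨0, ?_⟩
  rw [Finset.mem_filter, mem_range]
  refine ⟨by omega, ?_⟩
  rw [sched_zero r T]
  simp

/- ### Stage 3 : the algorithm, its query times, and the contamination flag -/

variable (A : PredCachingAlg k)

/-- whether the algorithm queries at time `t` (on oracle = the explicit schedule) -/
def qb (t : ℕ) : Bool := A.query t r (sched r T)

/-- contamination flag: true if some query has happened in the current window -/
def fflag : ℕ → Bool
  | 0 => false
  | (t+1) => if isComp r t then false else (fflag t || qb r T A t)

lemma fflag_false_iff : ∀ t, (fflag r T A t = false ↔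
    ∀ u < t, qb r T A u = true → ∃ w, u ≤ w ∧ w < t ∧ isComp r w) := by
  intro t
  induction t with
  | zero => simp [fflag]
  | succ t ih =>
      show (if isComp r t then false else (fflag r T A t || qb r T A t)) = false ↔ _
      by_cases hc : isComp r t
      · rw [if_pos hc]
        simp only [true_iff]
        intro u hu hq
        exact ⟨t, by omega, by omega, hc⟩
      · rw [if_neg hc]
        rw [Bool.or_eq_false_iff]
        constructor
        · rintro ⟨h1, h2⟩ u hu hq
          rcases Nat.lt_or_ge u t with h3 | h3
          · obtain ⟨w, hw1, hw2, hw3⟩ := (ih.mp h1) u h3 hq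
            exact ⟨w, hw1, by omega, hw3⟩
          · have : u = t := by omega
            subst this
            rw [hq] at h2
            simp at h2
        · intro h
          constructor
          · apply ih.mpr
            intro u hu hq
            obtain ⟨w, hw1, hw2, hw3⟩ := h u (by omega) hq
            rcases Nat.lt_or_ge w t with h4 | h4
            · exact ⟨w, hw1, h4, hw3⟩
            · have : w = t := by omega
              subst this
              exact absurd hw3 hc
          · by_contra hq
            rw [Bool.not_eq_false] at hq
            obtain ⟨w, hw1, hw2, hw3⟩ := h t (by omega) hq
            have : w = t := by omega
            subst this
            exact hc hw3

/-- The key "measurability" lemma: on clean histories everything the algorithm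
does up to time `t` is determined by the requests before time `t`. -/
lemma clean_agree (hk : 1 ≤ k) :
    ∀ t, t ≤ T → ∀ r r' : ℕ → Fin (k+1), (∀ u < t, r u = r' u) →
      fflag r T A t = false →
      fflag r' T A t = false ∧
        A.query t r (sched r T) = A.query t r' (sched r' T) ∧
        A.cache t r (sched r T) = A.cache t r' (sched r' T) := by
  intro t
  induction t using Nat.strong_induction_on with
  | _ t IH =>
  intro htT r r' hagree hflag
  have hchar := (fflag_false_iff r T A t).mp hflag
  have hcompiff : ∀ v < t, (isComp r v ↔ isComp r' v) := by
    intro v hv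
    exact isComp_prefix (fun u hu => hagree u (by omega))
  -- answers at queried times agree
  have hans : ∀ u < t, A.query u r (sched r T) = true → sched r T u = sched r' T u := by
    intro u hu hq
    obtain ⟨w, hw1, hw2, hw3⟩ := hchar u hu hq
    -- least completion at or after u
    have hexw : ∃ w', u ≤ w' ∧ w' < t ∧ isComp r w' := ⟨w, hw1, hw2, hw3⟩
    have hspec := Nat.find_spec hexw
    have hmin : ∀ v, u ≤ v → v < Nat.find hexw → ¬ isComp r v := by
      intro v h1 h2 hcv
      exact Nat.find_min hexw h2 ⟨h1, by omega, hcv⟩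
    set w0 := Nat.find hexw
    have hw0u : u ≤ w0 := hspec.1
    have hw0t : w0 < t := hspec.2.1
    have hw0c : isComp r w0 := hspec.2.2
    by_cases hcbu : compBefore r u
    · have hcbu' : compBefore r' u := by
        obtain ⟨v, hv, hcv⟩ := hcbu
        exact ⟨v, hv, (hcompiff v (by omega)).mp hcv⟩
      rw [sched_spec2 r T (by omega) hcbu hw0u (by omega) hw0c hmin]
      rw [sched_spec2 r' T (by omega) hcbu' hw0u (by omega)
        ((hcompiff w0 hw0t).mp hw0c)
        (fun v h1 h2 hcv => hmin v h1 h2 ((hcompiff v (by omega)).mpr hcv))]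
      rw [hagree w0 hw0t]
    · have hcbu' : ¬ compBefore r' u := by
        rintro ⟨v, hv, hcv⟩
        exact hcbu ⟨v, hv, (hcompiff v (by omega)).mpr hcv⟩
      rw [sched_spec1 r T (by omega) hcbu, sched_spec1 r' T (by omega) hcbu']
      apply Finset.image_congr
      intro x hx
      rw [Finset.mem_coe, mem_range] at hx
      exact hagree x (by omega)
  refine ⟨?_, ?_, ?_⟩
  · -- the flag for r' is also false
    apply (fflag_false_iff r' T A t).mpr
    intro u hu hq'
    by_cases hex : ∃ w, u ≤ w ∧ w < t ∧ isComp r w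
    · obtain ⟨w, hw1, hw2, hw3⟩ := hex
      exact ⟨w, hw1, hw2, (hcompiff w hw2).mp hw3⟩
    · exfalso
      push_neg at hex
      -- then u itself is clean for r, so the query bits agree, and r queries at u
      have hfu : fflag r T A u = false := by
        apply (fflag_false_iff r T A u).mpr
        intro v hv hqv
        obtain ⟨w, hw1, hw2, hw3⟩ := hchar v (by omega) hqv
        rcases Nat.lt_or_ge w u with h4 | h4
        · exact ⟨w, hw1, h4, hw3⟩
        · exact absurd hw3 (hex w h4 hw2)
      obtain ⟨_, hqagree, _⟩ := IH u hu (by omega) r r' (fun v hv => hagree v (by omega)) hfu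
      have hq2 : qb r T A u = true := by
        unfold qb
        rw [hqagree]
        exact hq'
      obtain ⟨w, hw1, hw2, hw3⟩ := hchar u hu hq2
      exact absurd hw3 (hex w hw1 hw2)
  · exact A.query_online t r r' (sched r T) (sched r' T) hagree hans
  · exact A.cache_online t r r' (sched r T) (sched r' T) hagree hans

/-- dirty-time count -/
def Dcount (t : ℕ) : ℕ := ((range t).filter (fun u => fflag r T A u = true)).card

/-- count of clean queries -/
def Qcount (t : ℕ) : ℕ :=
  ((range t).filter (fun u => fflag r T A u = false ∧ qb r T A u = true)).card

lemma Qcount_le_numQueries : Qcount r T A T ≤ numQueries k A r T (sched r T) := by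
  apply Finset.card_le_card
  intro u hu
  rw [Finset.mem_filter] at hu ⊢
  exact ⟨hu.1, hu.2.2⟩

/-- prefix determinism of the flag -/
lemma fflag_prefix (hk : 1 ≤ k) {t : ℕ} (htT : t ≤ T) {r r' : ℕ → Fin (k+1)}
    (hagree : ∀ u < t, r u = r' u) : fflag r T A t = fflag r' T A t := by
  by_cases h1 : fflag r T A t = false
  · rw [h1, (clean_agree T A hk t htT r r' hagree h1).1]
  · by_cases h2 : fflag r' T A t = false
    · rw [(clean_agree T A hk t htT r' r (fun u hu => (hagree u hu).symm) h2).1] at h1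
      simp at h1
    · rw [Bool.not_eq_false] at h1 h2
      rw [h1, h2]

/- ### Stage 4 : averaging over random request sequences -/

/-- extension of a finite request vector -/
def pext {T : ℕ} (ρ : Fin T → Fin (k+1)) : ℕ → Fin (k+1) :=
  fun n => if h : n < T then ρ ⟨n, h⟩ else ⟨0, by omega⟩

lemma pext_update_eq {T : ℕ} (ρ : Fin T → Fin (k+1)) (i : Fin T) (v : Fin (k+1))
    {u : ℕ} (hu : u ≠ i.val) : pext (Function.update ρ i v) u = pext ρ u := by
  unfold pext
  by_cases h : u < T
  · rw [dif_pos h, dif_pos h]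
    have : (⟨u, h⟩ : Fin T) ≠ i := by
      intro hc
      apply hu
      rw [← hc]
    rw [Function.update_of_ne this]
  · rw [dif_neg h, dif_neg h]

lemma pext_update_self {T : ℕ} (ρ : Fin T → Fin (k+1)) (i : Fin T) (v : Fin (k+1)) :
    pext (Function.update ρ i v) i.val = v := by
  unfold pext
  rw [dif_pos i.isLt]
  have : (⟨i.val, i.isLt⟩ : Fin T) = i := by
    apply Fin.ext
    rfl
  rw [this, Function.update_self]

/-- resampling one coordinate uniformly leaves the uniform sum invariant -/
lemma sum_update {T : ℕ} (g : (Fin T → Fin (k+1)) → ℝ) (i : Fin T) :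
    ∑ ρ : Fin T → Fin (k+1), ∑ v : Fin (k+1), g (Function.update ρ i v)
      = (k+1 : ℝ) * ∑ ρ : Fin T → Fin (k+1), g ρ := by
  classical
  have hinv : Function.LeftInverse
      (fun p : (Fin T → Fin (k+1)) × Fin (k+1) => (Function.update p.1 i p.2, p.1 i))
      (fun p : (Fin T → Fin (k+1)) × Fin (k+1) => (Function.update p.1 i p.2, p.1 i)) := by
    rintro ⟨ρ, v⟩
    simp only
    rw [Function.update_self, Function.update_idem, Function.update_eq_self]
  have h1 : ∑ p : (Fin T → Fin (k+1)) × Fin (k+1), g (Function.update p.1 i p.2)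
      = ∑ p : (Fin T → Fin (k+1)) × Fin (k+1), g p.1 :=
    Equiv.sum_comp
      (⟨fun p => (Function.update p.1 i p.2, p.1 i),
        fun p => (Function.update p.1 i p.2, p.1 i), hinv, hinv⟩ :
        ((Fin T → Fin (k+1)) × Fin (k+1)) ≃ ((Fin T → Fin (k+1)) × Fin (k+1)))
      (fun p => g p.1)
  calc ∑ ρ : Fin T → Fin (k+1), ∑ v : Fin (k+1), g (Function.update ρ i v)
      = ∑ p : (Fin T → Fin (k+1)) × Fin (k+1), g (Function.update p.1 i p.2) := by
        rw [Fintype.sum_prod_type]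
    _ = ∑ p : (Fin T → Fin (k+1)) × Fin (k+1), g p.1 := h1
    _ = ∑ ρ : Fin T → Fin (k+1), ∑ v : Fin (k+1), g ρ := by
        rw [Fintype.sum_prod_type]
    _ = (k+1 : ℝ) * ∑ ρ : Fin T → Fin (k+1), g ρ := by
        have h3 : ∀ ρ : Fin T → Fin (k+1), ∑ _v : Fin (k+1), g ρ = (k+1:ℝ) * g ρ := by
          intro ρ
          rw [Finset.sum_const, card_univ, Fintype.card_fin, nsmul_eq_mul]
          push_cast
          ring
        rw [Finset.sum_congr rfl (fun ρ _ => h3 ρ), ← Finset.mul_sum]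

lemma ncount_succ (r : ℕ → Fin (k+1)) (t : ℕ) :
    ncount r (t+1) = ncount r t + (if isComp r t then 1 else 0) := by
  unfold ncount
  rw [Finset.range_add_one, Finset.filter_insert]
  split_ifs with h
  · rw [Finset.card_insert_of_notMem]
    simp only [Finset.mem_filter, mem_range]
    intro hc
    omega
  · omega

/- ### the renewal martingale : expected number of completions -/

lemma card_paths (T : ℕ) : ((univ : Finset (Fin T → Fin (k+1)))).card = (k+1)^T := by
  rw [card_univ, Fintype.card_fun, Fintype.card_fin, Fintype.card_fin]

def Mart (r : ℕ → Fin (k+1)) (t : ℕ) : ℝ :=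
  phi k (seenS r t) + t - lam k * (ncount r t)

lemma mart_step (hk : 1 ≤ k) (T : ℕ) {t : ℕ} (ht : t < T) :
    ∑ ρ : Fin T → Fin (k+1), Mart (pext ρ) (t+1)
      = ∑ ρ : Fin T → Fin (k+1), Mart (pext ρ) t := by
  set i : Fin T := ⟨t, ht⟩ with hi
  have key : ∀ ρ : Fin T → Fin (k+1),
      ∑ v : Fin (k+1), Mart (pext (Function.update ρ i v)) (t+1)
        = (k+1:ℝ) * Mart (pext ρ) t := by
    intro ρ
    set σ := seenS (pext ρ) t with hσdef
    have hσ : σ ≠ univ := seenS_ne_univ hk _ t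
    have hterm : ∀ v : Fin (k+1), Mart (pext (Function.update ρ i v)) (t+1)
        = (phi k (nextS σ v) - lam k * (if insert v σ = univ then (1:ℝ) else 0))
          + ((t+1:ℝ) - lam k * (ncount (pext ρ) t)) := by
      intro v
      have hpre : ∀ u < t, pext (Function.update ρ i v) u = pext ρ u := by
        intro u hu
        exact pext_update_eq ρ i v (by simp [hi]; omega)
      have hat : pext (Function.update ρ i v) t = v := pext_update_self ρ i v
      have hseen_t : seenS (pext (Function.update ρ i v)) t = σ := seenS_prefix hpre
      have hseen_t1 : seenS (pext (Function.update ρ i v)) (t+1) = nextS σ v := by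
        show nextS (seenS (pext (Function.update ρ i v)) t)
          ((pext (Function.update ρ i v)) t) = _
        rw [hseen_t, hat]
      have hcompv : isComp (pext (Function.update ρ i v)) t ↔ insert v σ = univ := by
        unfold isComp
        rw [hseen_t, hat]
      have hnc : ncount (pext (Function.update ρ i v)) (t+1)
          = ncount (pext ρ) t + (if insert v σ = univ then 1 else 0) := by
        rw [ncount_succ, ncount_prefix hpre]
        congr 1
        by_cases hcv : insert v σ = univ
        · rw [if_pos hcv, if_pos (hcompv.mpr hcv)]
        · rw [if_neg hcv, if_neg (fun hc => hcv (hcompv.mp hc))]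
      unfold Mart
      rw [hseen_t1, hnc]
      push_cast
      by_cases hcv : insert v σ = univ
      · rw [if_pos hcv]
        ring
      · rw [if_neg hcv]
        ring
    rw [Finset.sum_congr rfl (fun v _ => hterm v), Finset.sum_add_distrib,
      phi_step σ hσ, Finset.sum_const, card_univ, Fintype.card_fin, nsmul_eq_mul]
    unfold Mart
    push_cast
    ring
  have h1 := sum_update (fun ρ : Fin T → Fin (k+1) => Mart (pext ρ) (t+1)) i
  have h2 : ∑ ρ : Fin T → Fin (k+1), ∑ v : Fin (k+1),
      Mart (pext (Function.update ρ i v)) (t+1)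
      = (k+1:ℝ) * ∑ ρ : Fin T → Fin (k+1), Mart (pext ρ) t := by
    rw [Finset.sum_congr rfl (fun ρ _ => key ρ), ← Finset.mul_sum]
  have h3 : (k+1:ℝ) ≠ 0 := by positivity
  apply mul_left_cancel₀ h3
  rw [← h1, h2]

lemma mart_zero (T : ℕ) :
    ∑ ρ : Fin T → Fin (k+1), Mart (pext ρ) 0
      = ((k+1:ℝ)^T) * ((k+1:ℝ) * Hh (k+1)) := by
  have h1 : ∀ ρ : Fin T → Fin (k+1), Mart (pext ρ) 0 = (k+1:ℝ) * Hh (k+1) := by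
    intro ρ
    unfold Mart
    have h2 : seenS (pext ρ) 0 = ∅ := rfl
    have h3 : ncount (pext ρ) 0 = 0 := by simp [ncount]
    rw [h2, h3, phi_empty]
    push_cast
    ring
  rw [Finset.sum_congr rfl (fun ρ _ => h1 ρ), Finset.sum_const, card_paths, nsmul_eq_mul]
  push_cast
  ring

lemma sum_ncount_le (hk : 1 ≤ k) (T : ℕ) :
    lam k * ∑ ρ : Fin T → Fin (k+1), (ncount (pext ρ) T : ℝ)
      ≤ (T:ℝ) * (k+1:ℝ)^T := by
  have hmart : ∑ ρ : Fin T → Fin (k+1), Mart (pext ρ) T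
      = ((k+1:ℝ)^T) * ((k+1:ℝ) * Hh (k+1)) := by
    have : ∀ t ≤ T, ∑ ρ : Fin T → Fin (k+1), Mart (pext ρ) t
        = ((k+1:ℝ)^T) * ((k+1:ℝ) * Hh (k+1)) := by
      intro t
      induction t with
      | zero => intro _; exact mart_zero T
      | succ t ih =>
          intro ht
          rw [mart_step hk T (by omega)]
          exact ih (by omega)
    exact this T le_rfl
  have hexpand : ∑ ρ : Fin T → Fin (k+1), Mart (pext ρ) T
      = (∑ ρ : Fin T → Fin (k+1), phi k (seenS (pext ρ) T))
        + (T:ℝ) * (k+1:ℝ)^T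
        - lam k * ∑ ρ : Fin T → Fin (k+1), (ncount (pext ρ) T : ℝ) := by
    unfold Mart
    rw [Finset.sum_sub_distrib, Finset.sum_add_distrib, ← Finset.mul_sum,
      Finset.sum_const, card_paths, nsmul_eq_mul]
    push_cast
    ring
  have hphile : ∑ ρ : Fin T → Fin (k+1), phi k (seenS (pext ρ) T)
      ≥ ((k+1:ℝ)^T) * 0 := by
    rw [mul_zero]
    apply Finset.sum_nonneg
    intro ρ _
    exact phi_nonneg _
  have hphimax : ∀ ρ : Fin T → Fin (k+1),
      phi k (seenS (pext ρ) T) ≤ (k+1:ℝ) * Hh (k+1) := fun ρ => phi_le_max _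
  have h4 : ∑ ρ : Fin T → Fin (k+1), phi k (seenS (pext ρ) T)
      ≤ ((k+1:ℝ)^T) * ((k+1:ℝ) * Hh (k+1)) := by
    calc ∑ ρ : Fin T → Fin (k+1), phi k (seenS (pext ρ) T)
        ≤ ∑ _ρ : Fin T → Fin (k+1), (k+1:ℝ) * Hh (k+1) :=
          Finset.sum_le_sum (fun ρ _ => hphimax ρ)
      _ = ((k+1:ℝ)^T) * ((k+1:ℝ) * Hh (k+1)) := by
          rw [Finset.sum_const, card_paths, nsmul_eq_mul]
          push_cast
          ring
  rw [hexpand] at hmart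
  linarith

/- ### the contamination supermartingale -/

lemma fflag_succ (r : ℕ → Fin (k+1)) (T : ℕ) (A : PredCachingAlg k) (t : ℕ) :
    fflag r T A (t+1) = if isComp r t then false else (fflag r T A t || qb r T A t) :=
  rfl

lemma phi_le_lam_add_one (σ : Finset (Fin (k+1))) : phi k σ ≤ lam k + 1 := by
  have h1 := phi_le_max σ
  have h2 : (k+1:ℝ) * Hh (k+1) = lam k + 1 := by
    rw [Hh_succ k]
    unfold lam
    have h3 : (k+1:ℝ) ≠ 0 := by positivity
    field_simp
  rw [h2] at h1
  exact h1

lemma qb_prefix_clean (T : ℕ) (A : PredCachingAlg k) (hk : 1 ≤ k) {t : ℕ} (htT : t ≤ T)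
    {r r' : ℕ → Fin (k+1)} (hagree : ∀ u < t, r u = r' u)
    (hf : fflag r T A t = false) : qb r T A t = qb r' T A t :=
  (clean_agree T A hk t htT r r' hagree hf).2.1

lemma cache_prefix_clean (T : ℕ) (A : PredCachingAlg k) (hk : 1 ≤ k) {t : ℕ} (htT : t ≤ T)
    {r r' : ℕ → Fin (k+1)} (hagree : ∀ u < t, r u = r' u)
    (hf : fflag r T A t = false) :
    A.cache t r (sched r T) = A.cache t r' (sched r' T) :=
  (clean_agree T A hk t htT r r' hagree hf).2.2

lemma Dcount_succ (r : ℕ → Fin (k+1)) (T : ℕ) (A : PredCachingAlg k) (t : ℕ) :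
    Dcount r T A (t+1) = Dcount r T A t + (if fflag r T A t = true then 1 else 0) := by
  unfold Dcount
  rw [Finset.range_add_one, Finset.filter_insert]
  split_ifs with h
  · rw [Finset.card_insert_of_notMem]
    simp only [Finset.mem_filter, mem_range]
    intro hc
    omega
  · omega

lemma Qcount_succ (r : ℕ → Fin (k+1)) (T : ℕ) (A : PredCachingAlg k) (t : ℕ) :
    Qcount r T A (t+1) = Qcount r T A t +
      (if (fflag r T A t = false ∧ qb r T A t = true) then 1 else 0) := by
  unfold Qcount
  rw [Finset.range_add_one, Finset.filter_insert]
  split_ifs with h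
  · rw [Finset.card_insert_of_notMem]
    simp only [Finset.mem_filter, mem_range]
    intro hc
    omega
  · omega

lemma Dcount_prefix (T : ℕ) (A : PredCachingAlg k) (hk : 1 ≤ k) {t : ℕ} (htT : t ≤ T)
    {r r' : ℕ → Fin (k+1)} (hagree : ∀ u < t, r u = r' u) :
    Dcount r T A t = Dcount r' T A t := by
  unfold Dcount
  congr 1
  apply filter_congr
  intro u hu
  rw [mem_range] at hu
  rw [fflag_prefix T A hk (by omega) (fun v hv => hagree v (by omega))]

lemma Qcount_prefix (T : ℕ) (A : PredCachingAlg k) (hk : 1 ≤ k) {t : ℕ} (htT : t ≤ T)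
    {r r' : ℕ → Fin (k+1)} (hagree : ∀ u < t, r u = r' u) :
    Qcount r T A t = Qcount r' T A t := by
  unfold Qcount
  congr 1
  apply filter_congr
  intro u hu
  rw [mem_range] at hu
  have hagr : ∀ v < u, r v = r' v := fun v hv => hagree v (by omega)
  have hff : fflag r T A u = fflag r' T A u := fflag_prefix T A hk (by omega) hagr
  constructor
  · rintro ⟨h1, h2⟩
    refine ⟨by rw [← hff]; exact h1, ?_⟩
    rw [← qb_prefix_clean T A hk (by omega) hagr h1]
    exact h2
  · rintro ⟨h1, h2⟩
    have h3 : fflag r T A u = false := by rw [hff]; exact h1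
    refine ⟨h3, ?_⟩
    rw [qb_prefix_clean T A hk (by omega) hagr h3]
    exact h2

/-- the supermartingale for the dirty-time count -/
def Zfun (r : ℕ → Fin (k+1)) (T : ℕ) (A : PredCachingAlg k) (t : ℕ) : ℝ :=
  (Dcount r T A t : ℝ) + (if fflag r T A t = true then phi k (seenS r t) else 0)
    - lam k * (Qcount r T A t : ℝ)

lemma Z_step (hk : 1 ≤ k) (T : ℕ) (A : PredCachingAlg k) {t : ℕ} (ht : t < T) :
    ∑ ρ : Fin T → Fin (k+1), Zfun (pext ρ) T A (t+1)
      ≤ ∑ ρ : Fin T → Fin (k+1), Zfun (pext ρ) T A t := by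
  set i : Fin T := ⟨t, ht⟩ with hi
  have key : ∀ ρ : Fin T → Fin (k+1),
      ∑ v : Fin (k+1), Zfun (pext (Function.update ρ i v)) T A (t+1)
        ≤ (k+1:ℝ) * Zfun (pext ρ) T A t := by
    intro ρ
    set r0 := pext ρ with hr0
    set σ := seenS r0 t with hσdef
    have hσ : σ ≠ univ := seenS_ne_univ hk _ t
    -- common facts about a one-coordinate update
    have hpre : ∀ v : Fin (k+1), ∀ u < t, pext (Function.update ρ i v) u = r0 u := by
      intro v u hu
      exact pext_update_eq ρ i v (by simp [hi]; omega)
    have hat : ∀ v : Fin (k+1), pext (Function.update ρ i v) t = v :=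
      fun v => pext_update_self ρ i v
    have hseen_t : ∀ v : Fin (k+1), seenS (pext (Function.update ρ i v)) t = σ :=
      fun v => seenS_prefix (hpre v)
    have hseen_t1 : ∀ v : Fin (k+1),
        seenS (pext (Function.update ρ i v)) (t+1) = nextS σ v := by
      intro v
      show nextS (seenS (pext (Function.update ρ i v)) t)
        ((pext (Function.update ρ i v)) t) = _
      rw [hseen_t v, hat v]
    have hcompv : ∀ v : Fin (k+1),
        isComp (pext (Function.update ρ i v)) t ↔ insert v σ = univ := by
      intro v
      unfold isComp
      rw [hseen_t v, hat v]
    have hF : ∀ v : Fin (k+1), fflag (pext (Function.update ρ i v)) T A t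
        = fflag r0 T A t :=
      fun v => fflag_prefix T A hk (by omega) (hpre v)
    have hD : ∀ v : Fin (k+1), Dcount (pext (Function.update ρ i v)) T A t
        = Dcount r0 T A t :=
      fun v => Dcount_prefix T A hk (by omega) (hpre v)
    have hQ : ∀ v : Fin (k+1), Qcount (pext (Function.update ρ i v)) T A t
        = Qcount r0 T A t :=
      fun v => Qcount_prefix T A hk (by omega) (hpre v)
    -- the sum over v of the "conditional" potential term
    have hsum_ite : ∑ v : Fin (k+1),
        (if insert v σ = univ then (0:ℝ) else phi k (nextS σ v))
        = (k+1:ℝ) * (phi k σ - 1) := by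
      have hpt : ∀ v : Fin (k+1),
          (if insert v σ = univ then (0:ℝ) else phi k (nextS σ v))
          = phi k (nextS σ v) - lam k * (if insert v σ = univ then (1:ℝ) else 0) := by
        intro v
        by_cases hcv : insert v σ = univ
        · rw [if_pos hcv, if_pos hcv]
          have : nextS σ v = {v} := if_pos hcv
          rw [this, phi_singleton]
          ring
        · rw [if_neg hcv, if_neg hcv]
          ring
      rw [Finset.sum_congr rfl (fun v _ => hpt v), phi_step σ hσ]
    by_cases hFt : fflag r0 T A t = true
    · -- already dirty : equality
      have hterm : ∀ v : Fin (k+1), Zfun (pext (Function.update ρ i v)) T A (t+1)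
          = ((Dcount r0 T A t : ℝ) + 1 - lam k * (Qcount r0 T A t : ℝ))
            + (if insert v σ = univ then (0:ℝ) else phi k (nextS σ v)) := by
        intro v
        have e1 : Dcount (pext (Function.update ρ i v)) T A (t+1) = Dcount r0 T A t + 1 := by
          rw [Dcount_succ, hD v]
          congr 1
          rw [hF v, hFt]
          simp
        have e2 : Qcount (pext (Function.update ρ i v)) T A (t+1) = Qcount r0 T A t := by
          rw [Qcount_succ, hQ v]
          have hneg : ¬ (fflag (pext (Function.update ρ i v)) T A t = false ∧
              qb (pext (Function.update ρ i v)) T A t = true) := by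
            rintro ⟨h1, _⟩
            rw [hF v, hFt] at h1
            exact absurd h1 (by simp)
          rw [if_neg hneg]; omega
        have e3 : (if fflag (pext (Function.update ρ i v)) T A (t+1) = true
              then phi k (seenS (pext (Function.update ρ i v)) (t+1)) else 0)
            = (if insert v σ = univ then (0:ℝ) else phi k (nextS σ v)) := by
          by_cases hcv : insert v σ = univ
          · have hc : isComp (pext (Function.update ρ i v)) t := (hcompv v).mpr hcv
            have hflag : fflag (pext (Function.update ρ i v)) T A (t+1) = false := by
              rw [fflag_succ, if_pos hc]
            rw [hflag, if_pos hcv]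
            simp
          · have hc : ¬ isComp (pext (Function.update ρ i v)) t :=
              fun h => hcv ((hcompv v).mp h)
            have hflag : fflag (pext (Function.update ρ i v)) T A (t+1) = true := by
              rw [fflag_succ, if_neg hc, hF v, hFt]
              simp
            rw [hflag, if_neg hcv, hseen_t1 v]
            simp
        unfold Zfun
        rw [e1, e2, e3]
        push_cast
        ring
      rw [Finset.sum_congr rfl (fun v _ => hterm v), Finset.sum_add_distrib,
        Finset.sum_const, card_univ, Fintype.card_fin, nsmul_eq_mul, hsum_ite]
      apply le_of_eq
      unfold Zfun
      rw [hFt]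
      simp only [if_pos rfl]
      rw [← hσdef]
      push_cast
      ring
    · -- clean at time t
      rw [Bool.not_eq_true] at hFt
      have hqv : ∀ v : Fin (k+1), qb (pext (Function.update ρ i v)) T A t = qb r0 T A t := by
        intro v
        apply qb_prefix_clean T A hk (by omega) (hpre v)
        rw [hF v]
        exact hFt
      by_cases hq : qb r0 T A t = true
      · -- clean query : pay lam
        have hterm : ∀ v : Fin (k+1), Zfun (pext (Function.update ρ i v)) T A (t+1)
            = ((Dcount r0 T A t : ℝ) - lam k * (Qcount r0 T A t : ℝ) - lam k)
              + (if insert v σ = univ then (0:ℝ) else phi k (nextS σ v)) := by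
          intro v
          have e1 : Dcount (pext (Function.update ρ i v)) T A (t+1) = Dcount r0 T A t := by
            rw [Dcount_succ, hD v]
            have hneg : ¬ (fflag (pext (Function.update ρ i v)) T A t = true) := by
              rw [hF v, hFt]
              simp
            rw [if_neg hneg]; omega
          have e2 : Qcount (pext (Function.update ρ i v)) T A (t+1)
              = Qcount r0 T A t + 1 := by
            rw [Qcount_succ, hQ v]
            congr 1
            have hpos : fflag (pext (Function.update ρ i v)) T A t = false ∧
                qb (pext (Function.update ρ i v)) T A t = true :=
              ⟨by rw [hF v]; exact hFt, by rw [hqv v]; exact hq⟩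
            rw [if_pos hpos]
          have e3 : (if fflag (pext (Function.update ρ i v)) T A (t+1) = true
                then phi k (seenS (pext (Function.update ρ i v)) (t+1)) else 0)
              = (if insert v σ = univ then (0:ℝ) else phi k (nextS σ v)) := by
            by_cases hcv : insert v σ = univ
            · have hc : isComp (pext (Function.update ρ i v)) t := (hcompv v).mpr hcv
              have hflag : fflag (pext (Function.update ρ i v)) T A (t+1) = false := by
                rw [fflag_succ, if_pos hc]
              rw [hflag, if_pos hcv]
              simp
            · have hc : ¬ isComp (pext (Function.update ρ i v)) t :=
                fun h => hcv ((hcompv v).mp h)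
              have hflag : fflag (pext (Function.update ρ i v)) T A (t+1) = true := by
                rw [fflag_succ, if_neg hc, hF v, hFt, hqv v, hq]
                simp
              rw [hflag, if_neg hcv, hseen_t1 v]
              simp
          unfold Zfun
          rw [e1, e2, e3]
          push_cast
          ring
        rw [Finset.sum_congr rfl (fun v _ => hterm v), Finset.sum_add_distrib,
          Finset.sum_const, card_univ, Fintype.card_fin, nsmul_eq_mul, hsum_ite]
        have hbound : phi k σ - 1 ≤ lam k := by
          have := phi_le_lam_add_one σ
          linarith
        unfold Zfun
        rw [hFt]
        rw [if_neg (by simp : ¬ (false : Bool) = true)]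
        have hk1 : (0:ℝ) < (k+1:ℝ) := by positivity
        have hmul : (k+1:ℝ) * (phi k σ - 1) ≤ (k+1:ℝ) * lam k :=
          mul_le_mul_of_nonneg_left hbound (le_of_lt hk1)
        push_cast
        nlinarith [hmul]
      · -- clean, no query : equality
        rw [Bool.not_eq_true] at hq
        have hterm : ∀ v : Fin (k+1), Zfun (pext (Function.update ρ i v)) T A (t+1)
            = (Dcount r0 T A t : ℝ) - lam k * (Qcount r0 T A t : ℝ) := by
          intro v
          have e1 : Dcount (pext (Function.update ρ i v)) T A (t+1) = Dcount r0 T A t := by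
            rw [Dcount_succ, hD v]
            have hneg : ¬ (fflag (pext (Function.update ρ i v)) T A t = true) := by
              rw [hF v, hFt]
              simp
            rw [if_neg hneg]; omega
          have e2 : Qcount (pext (Function.update ρ i v)) T A (t+1) = Qcount r0 T A t := by
            rw [Qcount_succ, hQ v]
            have hneg : ¬ (fflag (pext (Function.update ρ i v)) T A t = false ∧
                qb (pext (Function.update ρ i v)) T A t = true) := by
              rintro ⟨_, h2⟩
              rw [hqv v, hq] at h2
              exact absurd h2 (by simp)
            rw [if_neg hneg]; omega
          have e3 : (if fflag (pext (Function.update ρ i v)) T A (t+1) = true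
                then phi k (seenS (pext (Function.update ρ i v)) (t+1)) else 0) = (0:ℝ) := by
            have hflag : fflag (pext (Function.update ρ i v)) T A (t+1) = false := by
              rw [fflag_succ, hF v, hFt, hqv v, hq]
              split_ifs <;> simp
            rw [hflag]
            simp
          unfold Zfun
          rw [e1, e2, e3]
          push_cast
          ring
        rw [Finset.sum_congr rfl (fun v _ => hterm v), Finset.sum_const, card_univ,
          Fintype.card_fin, nsmul_eq_mul]
        apply le_of_eq
        unfold Zfun
        rw [hFt]
        rw [if_neg (by simp : ¬ (false : Bool) = true)]
        push_cast
        ring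
  have h1 := sum_update (fun ρ : Fin T → Fin (k+1) => Zfun (pext ρ) T A (t+1)) i
  have h2 : ∑ ρ : Fin T → Fin (k+1), ∑ v : Fin (k+1),
      Zfun (pext (Function.update ρ i v)) T A (t+1)
      ≤ (k+1:ℝ) * ∑ ρ : Fin T → Fin (k+1), Zfun (pext ρ) T A t := by
    calc ∑ ρ : Fin T → Fin (k+1), ∑ v : Fin (k+1),
        Zfun (pext (Function.update ρ i v)) T A (t+1)
        ≤ ∑ ρ : Fin T → Fin (k+1), (k+1:ℝ) * Zfun (pext ρ) T A t :=
          Finset.sum_le_sum (fun ρ _ => key ρ)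
      _ = (k+1:ℝ) * ∑ ρ : Fin T → Fin (k+1), Zfun (pext ρ) T A t := by
          rw [← Finset.mul_sum]
  have h3 : (0:ℝ) < (k+1:ℝ) := by positivity
  have h4 : (k+1:ℝ) * ∑ ρ : Fin T → Fin (k+1), Zfun (pext ρ) T A (t+1)
      ≤ (k+1:ℝ) * ∑ ρ : Fin T → Fin (k+1), Zfun (pext ρ) T A t := by
    rw [← h1]
    exact h2
  exact le_of_mul_le_mul_left h4 h3

lemma sum_Dcount_le (hk : 1 ≤ k) (T : ℕ) (A : PredCachingAlg k) :
    ∑ ρ : Fin T → Fin (k+1), (Dcount (pext ρ) T A T : ℝ)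
      ≤ lam k * ∑ ρ : Fin T → Fin (k+1), (Qcount (pext ρ) T A T : ℝ) := by
  have hZT : ∑ ρ : Fin T → Fin (k+1), Zfun (pext ρ) T A T ≤ 0 := by
    have hstep : ∀ t ≤ T, ∑ ρ : Fin T → Fin (k+1), Zfun (pext ρ) T A t ≤ 0 := by
      intro t
      induction t with
      | zero =>
          intro _
          apply le_of_eq
          apply Finset.sum_eq_zero
          intro ρ _
          unfold Zfun
          have h1 : Dcount (pext ρ) T A 0 = 0 := by simp [Dcount]
          have h2 : Qcount (pext ρ) T A 0 = 0 := by simp [Qcount]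
          have h3 : fflag (pext ρ) T A 0 = false := rfl
          rw [h1, h2, h3]
          simp
      | succ t ih =>
          intro ht
          calc ∑ ρ : Fin T → Fin (k+1), Zfun (pext ρ) T A (t+1)
              ≤ ∑ ρ : Fin T → Fin (k+1), Zfun (pext ρ) T A t := Z_step hk T A (by omega)
            _ ≤ 0 := ih (by omega)
    exact hstep T le_rfl
  have hsep : ∑ ρ : Fin T → Fin (k+1), (Dcount (pext ρ) T A T : ℝ)
      - lam k * ∑ ρ : Fin T → Fin (k+1), (Qcount (pext ρ) T A T : ℝ)
      ≤ ∑ ρ : Fin T → Fin (k+1), Zfun (pext ρ) T A T := by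
    rw [Finset.mul_sum, ← Finset.sum_sub_distrib]
    apply Finset.sum_le_sum
    intro ρ _
    unfold Zfun
    have : (0:ℝ) ≤ (if fflag (pext ρ) T A T = true then phi k (seenS (pext ρ) T) else 0) := by
      split_ifs
      · exact phi_nonneg _
      · exact le_refl 0
    linarith
  linarith

/- ### clean steps miss with probability at least 1/(k+1) -/

lemma clean_step_bound (hk : 1 ≤ k) (T : ℕ) (A : PredCachingAlg k) {t : ℕ} (ht : t < T) :
    ∑ ρ : Fin T → Fin (k+1), (if fflag (pext ρ) T A t = false then (1:ℝ) else 0)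
      ≤ (k+1:ℝ) * ∑ ρ : Fin T → Fin (k+1),
          (if (fflag (pext ρ) T A t = false ∧
            pext ρ t ∉ A.cache t (pext ρ) (sched (pext ρ) T)) then (1:ℝ) else 0) := by
  set i : Fin T := ⟨t, ht⟩ with hi
  have h1 := sum_update (fun ρ : Fin T → Fin (k+1) =>
    (if (fflag (pext ρ) T A t = false ∧
      pext ρ t ∉ A.cache t (pext ρ) (sched (pext ρ) T)) then (1:ℝ) else 0)) i
  rw [← h1]
  apply Finset.sum_le_sum
  intro ρ _
  by_cases hFt : fflag (pext ρ) T A t = false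
  · have hpre : ∀ v : Fin (k+1), ∀ u < t, pext (Function.update ρ i v) u = pext ρ u := by
      intro v u hu
      exact pext_update_eq ρ i v (by simp [hi]; omega)
    have hat : ∀ v : Fin (k+1), pext (Function.update ρ i v) t = v :=
      fun v => pext_update_self ρ i v
    have hFv : ∀ v : Fin (k+1), fflag (pext (Function.update ρ i v)) T A t = false := by
      intro v
      rw [fflag_prefix T A hk (by omega) (hpre v)]
      exact hFt
    have hSv : ∀ v : Fin (k+1),
        A.cache t (pext (Function.update ρ i v)) (sched (pext (Function.update ρ i v)) T)
          = A.cache t (pext ρ) (sched (pext ρ) T) := by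
      intro v
      exact cache_prefix_clean T A hk (by omega) (hpre v) (hFv v)
    set S := A.cache t (pext ρ) (sched (pext ρ) T) with hS
    have hcard : S.card ≤ k := A.cache_card t (pext ρ) (sched (pext ρ) T)
    have hex : ∃ v0 : Fin (k+1), v0 ∉ S := by
      by_contra hcon
      push_neg at hcon
      have h2 : (univ : Finset (Fin (k+1))).card ≤ S.card :=
        Finset.card_le_card (fun x _ => hcon x)
      rw [card_univ, Fintype.card_fin] at h2
      omega
    obtain ⟨v0, hv0⟩ := hex
    rw [if_pos hFt]
    have hterm : (if (fflag (pext (Function.update ρ i v0)) T A t = false ∧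
        pext (Function.update ρ i v0) t ∉
          A.cache t (pext (Function.update ρ i v0))
            (sched (pext (Function.update ρ i v0)) T)) then (1:ℝ) else 0) = 1 := by
      rw [if_pos]
      refine ⟨hFv v0, ?_⟩
      rw [hSv v0, hat v0]
      exact hv0
    calc (1:ℝ) = _ := hterm.symm
      _ ≤ ∑ v : Fin (k+1), (if (fflag (pext (Function.update ρ i v)) T A t = false ∧
            pext (Function.update ρ i v) t ∉
              A.cache t (pext (Function.update ρ i v))
                (sched (pext (Function.update ρ i v)) T)) then (1:ℝ) else 0) := by
          apply Finset.single_le_sum (f := fun v : Fin (k+1) =>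
            (if (fflag (pext (Function.update ρ i v)) T A t = false ∧
              pext (Function.update ρ i v) t ∉
                A.cache t (pext (Function.update ρ i v))
                  (sched (pext (Function.update ρ i v)) T)) then (1:ℝ) else 0))
          · intro v _
            split_ifs
            · exact zero_le_one
            · exact le_refl 0
          · exact mem_univ v0
  · rw [if_neg hFt]
    apply Finset.sum_nonneg
    intro v _
    split_ifs
    · exact zero_le_one
    · exact le_refl 0

lemma sum_ind_clean (T : ℕ) (A : PredCachingAlg k) (r : ℕ → Fin (k+1)) :
    ∑ t ∈ range T, (if fflag r T A t = false then (1:ℝ) else 0)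
      = (T:ℝ) - (Dcount r T A T : ℝ) := by
  have h1 : ∑ t ∈ range T, (if fflag r T A t = false then (1:ℝ) else 0)
      = (((range T).filter (fun t => fflag r T A t = false)).card : ℝ) := by
    rw [Finset.sum_boole]
  have h2 := Finset.card_filter_add_card_filter_not
    (s := range T) (p := fun t => fflag r T A t = true)
  have h3 : (range T).filter (fun t => ¬ fflag r T A t = true)
      = (range T).filter (fun t => fflag r T A t = false) := by
    apply filter_congr
    intro u _
    rw [Bool.not_eq_true]
  rw [h3] at h2
  rw [h1]
  have h4 : Dcount r T A T + ((range T).filter (fun t => fflag r T A t = false)).card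
      = T := by
    rw [Dcount]
    rw [Finset.card_range] at h2
    omega
  have h5 : (((range T).filter (fun t => fflag r T A t = false)).card : ℝ)
      = (T:ℝ) - (Dcount r T A T : ℝ) := by
    have := congrArg (fun n : ℕ => (n:ℝ)) h4
    push_cast at this
    linarith
  rw [h5]

lemma sum_ind_miss_le (T : ℕ) (A : PredCachingAlg k) (r : ℕ → Fin (k+1)) :
    ∑ t ∈ range T, (if (fflag r T A t = false ∧
        r t ∉ A.cache t r (sched r T)) then (1:ℝ) else 0)
      ≤ (algCost k A r T (sched r T) : ℝ) := by
  rw [Finset.sum_boole]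
  have h1 : ((range T).filter (fun t => fflag r T A t = false ∧
      r t ∉ A.cache t r (sched r T))).card
      ≤ ((range T).filter (fun t => r t ∉ A.cache t r (sched r T))).card := by
    apply Finset.card_le_card
    intro u hu
    rw [Finset.mem_filter] at hu ⊢
    exact ⟨hu.1, hu.2.2⟩
  unfold algCost
  exact_mod_cast h1

lemma cost_bound_per_alg (hk : 1 ≤ k) (T : ℕ) (A : PredCachingAlg k) :
    (T:ℝ) * (k+1:ℝ)^T - lam k * ∑ ρ : Fin T → Fin (k+1), (Qcount (pext ρ) T A T : ℝ)
      ≤ (k+1:ℝ) * ∑ ρ : Fin T → Fin (k+1),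
          (algCost k A (pext ρ) T (sched (pext ρ) T) : ℝ) := by
  have s1 : (T:ℝ) * (k+1:ℝ)^T - ∑ ρ : Fin T → Fin (k+1), (Dcount (pext ρ) T A T : ℝ)
      = ∑ ρ : Fin T → Fin (k+1), ((T:ℝ) - (Dcount (pext ρ) T A T : ℝ)) := by
    rw [Finset.sum_sub_distrib, Finset.sum_const, card_paths, nsmul_eq_mul]
    push_cast
    ring
  have s2 : ∑ ρ : Fin T → Fin (k+1), ((T:ℝ) - (Dcount (pext ρ) T A T : ℝ))
      = ∑ t ∈ range T, ∑ ρ : Fin T → Fin (k+1),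
          (if fflag (pext ρ) T A t = false then (1:ℝ) else 0) := by
    rw [Finset.sum_comm]
    apply Finset.sum_congr rfl
    intro ρ _
    rw [sum_ind_clean T A (pext ρ)]
  have s3 : ∑ t ∈ range T, ∑ ρ : Fin T → Fin (k+1),
        (if fflag (pext ρ) T A t = false then (1:ℝ) else 0)
      ≤ (k+1:ℝ) * ∑ t ∈ range T, ∑ ρ : Fin T → Fin (k+1),
          (if (fflag (pext ρ) T A t = false ∧
            pext ρ t ∉ A.cache t (pext ρ) (sched (pext ρ) T)) then (1:ℝ) else 0) := by
    rw [Finset.mul_sum]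
    apply Finset.sum_le_sum
    intro t ht
    rw [mem_range] at ht
    exact clean_step_bound hk T A ht
  have s4 : ∑ t ∈ range T, ∑ ρ : Fin T → Fin (k+1),
        (if (fflag (pext ρ) T A t = false ∧
          pext ρ t ∉ A.cache t (pext ρ) (sched (pext ρ) T)) then (1:ℝ) else 0)
      ≤ ∑ ρ : Fin T → Fin (k+1), (algCost k A (pext ρ) T (sched (pext ρ) T) : ℝ) := by
    rw [Finset.sum_comm]
    apply Finset.sum_le_sum
    intro ρ _
    exact sum_ind_miss_le T A (pext ρ)
  have s5 := sum_Dcount_le hk T A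
  have hk1 : (0:ℝ) ≤ (k+1:ℝ) := by positivity
  have s6 : (k+1:ℝ) * (∑ t ∈ range T, ∑ ρ : Fin T → Fin (k+1),
        (if (fflag (pext ρ) T A t = false ∧
          pext ρ t ∉ A.cache t (pext ρ) (sched (pext ρ) T)) then (1:ℝ) else 0))
      ≤ (k+1:ℝ) * ∑ ρ : Fin T → Fin (k+1),
          (algCost k A (pext ρ) T (sched (pext ρ) T) : ℝ) :=
    mul_le_mul_of_nonneg_left s4 hk1
  linarith
end
end FPLB


open FPLB Finset in
/-- For every randomized caching algorithm (a finite mixture `alg ω` with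
weights `w ω`) which on every instance receives at most `0.5 · OPT` action
predictions in total, there is a request sequence over `k + 1` pages — with the
predictions coming from an actual optimal offline schedule `C` — on which the
algorithm's expected cost is at least `0.5 · OPT · ln k` (and `OPT > 0`), so no
such algorithm is `o(ln k)`-competitive. -/
theorem few_predictions_lower_bound (k : ℕ) (hk : 2 ≤ k)
    (Ω : Type) [Fintype Ω] (w : Ω → ℝ) (hw : ∀ ω, 0 ≤ w ω)
    (hw1 : ∑ ω, w ω = 1) (alg : Ω → PredCachingAlg k)
    (hbudget : ∀ (T : ℕ) (r : ℕ → Fin (k + 1)) (o : ℕ → Finset (Fin (k + 1))) (ω : Ω),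
      (numQueries k (alg ω) r T o : ℝ) ≤ (optCost k r T : ℝ) / 2) :
    ∃ (T : ℕ) (r : ℕ → Fin (k + 1)) (C : ℕ → Finset (Fin (k + 1))),
      IsOfflineRun k r T C ∧ runCost k r T C = optCost k r T ∧
      0 < optCost k r T ∧
      (optCost k r T : ℝ) / 2 * Real.log k ≤
        ∑ ω, w ω * (algCost k (alg ω) r T C : ℝ) := by
  classical
  have hk1 : 1 ≤ k := by omega
  have hkR : (1:ℝ) ≤ (k:ℝ) := by exact_mod_cast hk1
  have hlog0 : 0 ≤ Real.log k := Real.log_nonneg hkR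
  set β : ℝ := (k+1:ℝ) * Real.log k with hbdef
  have hb0 : 0 ≤ β := by
    apply mul_nonneg _ hlog0
    positivity
  have hlampos : 0 < lam k := lam_pos hk1
  have hbl : β < lam k := by
    have h1 : Real.log k < Hh k := log_lt_Hh hk1
    have h2 : (0:ℝ) < (k+1:ℝ) := by positivity
    unfold lam
    rw [hbdef]
    nlinarith
  set c : ℝ := lam k - β with hc
  have hcpos : 0 < c := by rw [hc]; linarith
  set A0 : ℝ := lam k * k * (lam k + β) with hA0
  have hA0nn : 0 ≤ A0 := by
    apply mul_nonneg
    · apply mul_nonneg (le_of_lt hlampos)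
      positivity
    · linarith
  set T : ℕ := max 1 (Nat.ceil (A0 / c)) with hTdef
  have hT1 : 1 ≤ T := le_max_left _ _
  have hTc : A0 ≤ (T:ℝ) * c := by
    have h1 : A0 / c ≤ (Nat.ceil (A0/c) : ℝ) := Nat.le_ceil _
    have h2 : (Nat.ceil (A0/c) : ℕ) ≤ T := le_max_right _ _
    have h3 : ((Nat.ceil (A0/c) : ℕ):ℝ) ≤ (T:ℝ) := by exact_mod_cast h2
    have h4 : A0 / c ≤ (T:ℝ) := le_trans h1 h3
    calc A0 = (A0/c)*c := by field_simp
      _ ≤ (T:ℝ)*c := by nlinarith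
  set K : ℝ := (k+1:ℝ)^T with hK
  have hKpos : 0 < K := by rw [hK]; positivity
  set SN : ℝ := ∑ ρ : Fin T → Fin (k+1), (ncount (pext ρ) T : ℝ) with hSN
  have hSNnn : 0 ≤ SN := by
    rw [hSN]
    apply Finset.sum_nonneg
    intro ρ _
    positivity
  have hSNle : lam k * SN ≤ (T:ℝ) * K := sum_ncount_le hk1 T
  set Sopt : ℝ := ∑ ρ : Fin T → Fin (k+1), (optCost k (pext ρ) T : ℝ) with hSopt
  have hSoptle : Sopt ≤ (k:ℝ)*K + SN := by
    rw [hSopt, hSN]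
    have h5 : ∀ ρ : Fin T → Fin (k+1),
        (optCost k (pext ρ) T : ℝ) ≤ (k:ℝ) + (ncount (pext ρ) T : ℝ) := by
      intro ρ
      have := optCost_le (pext ρ) T hk1
      push_cast
      exact_mod_cast this
    calc ∑ ρ : Fin T → Fin (k+1), (optCost k (pext ρ) T : ℝ)
        ≤ ∑ ρ : Fin T → Fin (k+1), ((k:ℝ) + (ncount (pext ρ) T : ℝ)) :=
          Finset.sum_le_sum (fun ρ _ => h5 ρ)
      _ = (k:ℝ)*K + ∑ ρ : Fin T → Fin (k+1), (ncount (pext ρ) T : ℝ) := by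
          rw [Finset.sum_add_distrib, Finset.sum_const, card_paths, nsmul_eq_mul]
          push_cast
          ring
  -- main numeric inequality
  have hmain : ((k:ℝ)*K + SN) * (β + lam k) ≤ 2*(T:ℝ)*K := by
    have h2 : lam k * SN * (β + lam k) ≤ (T:ℝ)*K*(β + lam k) :=
      mul_le_mul_of_nonneg_right hSNle (by linarith)
    have h3 : K * (lam k * k * (lam k + β)) ≤ K * ((T:ℝ)*c) :=
      mul_le_mul_of_nonneg_left hTc (le_of_lt hKpos)
    have h4 : lam k * (((k:ℝ)*K + SN) * (β + lam k)) ≤ lam k * (2*(T:ℝ)*K) := by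
      have e1 : lam k * (((k:ℝ)*K + SN) * (β + lam k))
          = K * (lam k * k * (lam k + β)) + lam k * SN * (β + lam k) := by ring
      have e2 : K * ((T:ℝ)*c) + (T:ℝ)*K*(β + lam k) = lam k * (2*(T:ℝ)*K) := by
        rw [hc]; ring
      linarith
    exact le_of_mul_le_mul_left h4 hlampos
  -- per-algorithm expected cost bound
  have hcost : ∀ ω : Ω, ((T:ℝ)*K - lam k * (((k:ℝ)*K + SN)/2)) / (k+1:ℝ)
      ≤ ∑ ρ : Fin T → Fin (k+1),
          (algCost k (alg ω) (pext ρ) T (sched (pext ρ) T) : ℝ) := by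
    intro ω
    have hb := cost_bound_per_alg hk1 T (alg ω)
    have hQle : ∑ ρ : Fin T → Fin (k+1), (Qcount (pext ρ) T (alg ω) T : ℝ)
        ≤ ((k:ℝ)*K + SN)/2 := by
      have h6 : ∀ ρ : Fin T → Fin (k+1),
          (Qcount (pext ρ) T (alg ω) T : ℝ) ≤ ((k:ℝ) + (ncount (pext ρ) T : ℝ))/2 := by
        intro ρ
        have ha : (Qcount (pext ρ) T (alg ω) T : ℝ)
            ≤ (numQueries k (alg ω) (pext ρ) T (sched (pext ρ) T) : ℝ) := by
          exact_mod_cast Qcount_le_numQueries (pext ρ) T (alg ω)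
        have hb2 := hbudget T (pext ρ) (sched (pext ρ) T) ω
        have hc2 : (optCost k (pext ρ) T : ℝ) ≤ (k:ℝ) + (ncount (pext ρ) T : ℝ) := by
          exact_mod_cast optCost_le (pext ρ) T hk1
        calc (Qcount (pext ρ) T (alg ω) T : ℝ)
            ≤ (numQueries k (alg ω) (pext ρ) T (sched (pext ρ) T) : ℝ) := ha
          _ ≤ (optCost k (pext ρ) T : ℝ) / 2 := hb2
          _ ≤ ((k:ℝ) + (ncount (pext ρ) T : ℝ))/2 := by linarith
      calc ∑ ρ : Fin T → Fin (k+1), (Qcount (pext ρ) T (alg ω) T : ℝ)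
          ≤ ∑ ρ : Fin T → Fin (k+1), ((k:ℝ) + (ncount (pext ρ) T : ℝ))/2 :=
            Finset.sum_le_sum (fun ρ _ => h6 ρ)
        _ = ((k:ℝ)*K + SN)/2 := by
            rw [hSN, ← Finset.sum_div, Finset.sum_add_distrib, Finset.sum_const,
              card_paths, nsmul_eq_mul]
            push_cast
            ring
    have h7 : (T:ℝ)*K - lam k * (((k:ℝ)*K + SN)/2)
        ≤ (k+1:ℝ) * ∑ ρ : Fin T → Fin (k+1),
            (algCost k (alg ω) (pext ρ) T (sched (pext ρ) T) : ℝ) := by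
      have h8 : lam k * ∑ ρ : Fin T → Fin (k+1), (Qcount (pext ρ) T (alg ω) T : ℝ)
          ≤ lam k * (((k:ℝ)*K + SN)/2) :=
        mul_le_mul_of_nonneg_left hQle (le_of_lt hlampos)
      linarith
    rw [div_le_iff₀ (by positivity : (0:ℝ) < (k+1:ℝ))]
    linarith
  -- averaging over the mixture
  have hmix : (Real.log k / 2) * Sopt
      ≤ ∑ ρ : Fin T → Fin (k+1), ∑ ω : Ω, w ω *
          (algCost k (alg ω) (pext ρ) T (sched (pext ρ) T) : ℝ) := by
    have hswap : ∑ ρ : Fin T → Fin (k+1), ∑ ω : Ω, w ω *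
        (algCost k (alg ω) (pext ρ) T (sched (pext ρ) T) : ℝ)
        = ∑ ω : Ω, w ω * ∑ ρ : Fin T → Fin (k+1),
            (algCost k (alg ω) (pext ρ) T (sched (pext ρ) T) : ℝ) := by
      rw [Finset.sum_comm]
      apply Finset.sum_congr rfl
      intro ω _
      rw [Finset.mul_sum]
    rw [hswap]
    set R : ℝ := ((T:ℝ)*K - lam k * (((k:ℝ)*K + SN)/2)) / (k+1:ℝ) with hR
    have h9 : ∑ ω : Ω, w ω * R ≤ ∑ ω : Ω, w ω * ∑ ρ : Fin T → Fin (k+1),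
        (algCost k (alg ω) (pext ρ) T (sched (pext ρ) T) : ℝ) := by
      apply Finset.sum_le_sum
      intro ω _
      exact mul_le_mul_of_nonneg_left (hcost ω) (hw ω)
    have h10 : ∑ ω : Ω, w ω * R = R := by
      rw [← Finset.sum_mul, hw1, one_mul]
    have h11 : (Real.log k / 2) * Sopt ≤ R := by
      rw [hR, le_div_iff₀ (by positivity : (0:ℝ) < (k+1:ℝ))]
      have h12 : (Real.log k / 2) * Sopt * (k+1:ℝ)
          ≤ (Real.log k / 2) * ((k:ℝ)*K + SN) * (k+1:ℝ) := by
        apply mul_le_mul_of_nonneg_right _ (by positivity)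
        exact mul_le_mul_of_nonneg_left hSoptle (by positivity)
      have h13 : (Real.log k / 2) * ((k:ℝ)*K + SN) * (k+1:ℝ)
          = (β/2) * ((k:ℝ)*K + SN) := by
        rw [hbdef]; ring
      have h14 : (β/2) * ((k:ℝ)*K + SN) + (lam k/2) * ((k:ℝ)*K + SN)
          ≤ (T:ℝ)*K := by
        have := hmain
        nlinarith
      have h15 : lam k * (((k:ℝ)*K + SN)/2) = (lam k/2) * ((k:ℝ)*K + SN) := by ring
      linarith
    linarith
  -- pick a good request sequence
  have hex : ∃ ρ ∈ (univ : Finset (Fin T → Fin (k+1))),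
      (Real.log k / 2) * (optCost k (pext ρ) T : ℝ)
        ≤ ∑ ω : Ω, w ω * (algCost k (alg ω) (pext ρ) T (sched (pext ρ) T) : ℝ) := by
    apply Finset.exists_le_of_sum_le Finset.univ_nonempty
    calc ∑ ρ : Fin T → Fin (k+1), (Real.log k / 2) * (optCost k (pext ρ) T : ℝ)
        = (Real.log k / 2) * Sopt := by rw [hSopt, Finset.mul_sum]
      _ ≤ ∑ ρ : Fin T → Fin (k+1), ∑ ω : Ω, w ω *
          (algCost k (alg ω) (pext ρ) T (sched (pext ρ) T) : ℝ) := hmix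
  obtain ⟨ρ0, _, hρ0⟩ := hex
  refine ⟨T, pext ρ0, sched (pext ρ0) T, sched_run (pext ρ0) T hk1,
    (optCost_eq_sched (pext ρ0) T hk1).symm, optCost_pos (pext ρ0) T hk1 hT1, ?_⟩
  have heq : (optCost k (pext ρ0) T : ℝ) / 2 * Real.log k
      = (Real.log k / 2) * (optCost k (pext ρ0) T : ℝ) := by ring
  rw [heq]
  exact hρ0
end

section
/- Let (M,d) be a metric space and consider an MTS instance served in blocks of a steps. For block i, let wf_i(x) denote the work function at the end of block i with initial state q_{i-1}, and define q_i = argmin{ wf_i(x) : wf_i(x) = wf_i(p_i) − d(x,p_i) }, where p_i is the predicted state. Let OFF be any offline algorithm with state o_i at time i·a, and set η = Σ_i d(p_i,o_i). Let Q be the cheapest algorithm that is at q_i at time i·a for every i. Then cost(Q) ≤ cost(OFF) + 2η. -/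
open scoped ENNReal

/-- Work function of the `i`-th block of `a` time steps of an MTS instance with
cost functions `ℓ` : `blockWF ℓ a i start x` is the minimum cost of serving the
cost functions `ℓ ((i-1)a + 1), …, ℓ (i a)` starting in `start` and ending in
`x`. -/
noncomputable def blockWF {M : Type*} [PseudoMetricSpace M]
    (ℓ : ℕ → M → ℝ≥0∞) (a i : ℕ) (start x : M) : ℝ≥0∞ :=
  ⨅ (y : ℕ → M) (_ : y ((i - 1) * a) = start),
    (∑ j ∈ Finset.Ico ((i - 1) * a) (i * a),
      (edist (y j) (y (j + 1)) + ℓ (j + 1) (y (j + 1)))) + edist (y (i * a)) x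

lemma blockWF_lip {M : Type*} [PseudoMetricSpace M]
    (ℓ : ℕ → M → ℝ≥0∞) (a i : ℕ) (s x o : M) :
    blockWF ℓ a i s x ≤ blockWF ℓ a i s o + edist o x := by
  unfold blockWF
  rw [ENNReal.iInf_add]
  refine iInf_mono fun y => ?_
  rw [ENNReal.iInf_add]
  refine iInf_mono fun hy => ?_
  rw [add_assoc]
  gcongr
  exact edist_triangle _ _ _

lemma blockWF_off {M : Type*} [PseudoMetricSpace M]
    (ℓ : ℕ → M → ℝ≥0∞) (a i : ℕ) (ha : 0 < a) (hi : 1 ≤ i) (s : M) (z : ℕ → M) :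
    blockWF ℓ a i s (z (i * a)) ≤ edist s (z ((i - 1) * a)) +
      ∑ j ∈ Finset.Ico ((i - 1) * a) (i * a),
        (edist (z j) (z (j + 1)) + ℓ (j + 1) (z (j + 1))) := by
  set m := (i - 1) * a with hm
  set k := i * a with hk
  have hmk : m < k := (Nat.mul_lt_mul_right ha).2 (Nat.sub_lt hi one_pos)
  set y : ℕ → M := fun t => if t = m then s else z t with hy
  have h1 : blockWF ℓ a i s (z k) ≤
      (∑ j ∈ Finset.Ico m k, (edist (y j) (y (j + 1)) + ℓ (j + 1) (y (j + 1)))) +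
        edist (y k) (z k) := by
    unfold blockWF
    exact iInf₂_le y (by simp [hy, hm])
  have hyk : y k = z k := by simp [hy, hmk.ne']
  rw [hyk, edist_self, add_zero] at h1
  refine h1.trans ?_
  rw [Finset.sum_eq_sum_Ico_succ_bot hmk, Finset.sum_eq_sum_Ico_succ_bot hmk]
  have htail : ∀ j ∈ Finset.Ico (m + 1) k,
      edist (y j) (y (j + 1)) + ℓ (j + 1) (y (j + 1)) =
      edist (z j) (z (j + 1)) + ℓ (j + 1) (z (j + 1)):= by
    intro j hj
    have h1 : j ≠ m := by have := (Finset.mem_Ico.1 hj).1; omega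
    have h2 : j + 1 ≠ m := by have := (Finset.mem_Ico.1 hj).1; omega
    simp [hy, h1, h2]
  rw [Finset.sum_congr rfl htail]
  have hym : y m = s := by simp [hy]
  have hym1 : y (m + 1) = z (m + 1) := by
    have : m + 1 ≠ m := by omega
    simp [hy, this]
  rw [hym, hym1, ← add_assoc]
  refine add_le_add_left ?_ _
  rw [← add_assoc]
  exact add_le_add_left (edist_triangle _ _ _) _

/-- FtSP lemma.  `z` is the path of an arbitrary offline algorithm `OFF`
(`o i := z (i a)` are its states at block ends), `p i` are the predicted states,
and `q i` is a cheapest state supporting `p i` in the block work function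
`wf_i = blockWF ℓ a i (q (i-1)) ·` (hypotheses `hsupp`, `hmin`), with
`q 0 = z 0` the common initial state.  Then the cost of the cheapest algorithm
`Q` that is at `q i` at time `i a` for every `i`, namely `∑ i wf_i (q i)`,
is at most `cost(OFF) + 2 η`, where `η = ∑ i d(p i, o i)`. -/
theorem ftsp_cost_le (M : Type*) [PseudoMetricSpace M]
    (ℓ : ℕ → M → ℝ≥0∞) (a n : ℕ) (ha : 0 < a)
    (p q z : ℕ → M) (hq0 : q 0 = z 0)
    (hsupp : ∀ i ∈ Finset.Icc 1 n,
      blockWF ℓ a i (q (i - 1)) (q i) + edist (q i) (p i) =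
        blockWF ℓ a i (q (i - 1)) (p i))
    (hmin : ∀ i ∈ Finset.Icc 1 n, ∀ x : M,
      blockWF ℓ a i (q (i - 1)) x + edist x (p i) =
          blockWF ℓ a i (q (i - 1)) (p i) →
        blockWF ℓ a i (q (i - 1)) (q i) ≤ blockWF ℓ a i (q (i - 1)) x) :
    ∑ i ∈ Finset.Icc 1 n, blockWF ℓ a i (q (i - 1)) (q i) ≤
      (∑ t ∈ Finset.range (n * a),
        (edist (z t) (z (t + 1)) + ℓ (t + 1) (z (t + 1)))) +
      2 * ∑ i ∈ Finset.Icc 1 n, edist (p i) (z (i * a)) := by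
  -- per-block bound: wf_i(q i) + d(q i, p i) ≤ d(q (i-1), o (i-1)) + C_i + η_i
  have key : ∀ i, 1 ≤ i → i ≤ n →
      blockWF ℓ a i (q (i - 1)) (q i) + edist (q i) (p i) ≤
        edist (q (i - 1)) (z ((i - 1) * a)) +
        (∑ t ∈ Finset.Ico ((i - 1) * a) (i * a),
          (edist (z t) (z (t + 1)) + ℓ (t + 1) (z (t + 1)))) +
        edist (p i) (z (i * a)) := by
    intro i h1 h2
    rw [hsupp i (Finset.mem_Icc.2 ⟨h1, h2⟩)]
    calc blockWF ℓ a i (q (i - 1)) (p i)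
        ≤ blockWF ℓ a i (q (i - 1)) (z (i * a)) + edist (z (i * a)) (p i) :=
          blockWF_lip ℓ a i _ _ _
      _ ≤ (edist (q (i - 1)) (z ((i - 1) * a)) +
            ∑ t ∈ Finset.Ico ((i - 1) * a) (i * a),
              (edist (z t) (z (t + 1)) + ℓ (t + 1) (z (t + 1)))) +
            edist (p i) (z (i * a)) := by
          rw [edist_comm (z (i * a))]
          exact add_le_add_left (blockWF_off ℓ a i ha h1 _ z) _
  -- telescoping induction
  have aux : ∀ m, 1 ≤ m → m ≤ n →
      ∑ i ∈ Finset.Icc 1 m, blockWF ℓ a i (q (i - 1)) (q i) +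
        (edist (q m) (p m) + edist (p m) (z (m * a))) ≤
      (∑ t ∈ Finset.range (m * a),
        (edist (z t) (z (t + 1)) + ℓ (t + 1) (z (t + 1)))) +
      2 * ∑ i ∈ Finset.Icc 1 m, edist (p i) (z (i * a)) := by
    intro m hm1
    induction m with
    | zero => omega
    | succ m ih =>
      intro hmn
      rcases Nat.eq_or_lt_of_le hm1 with h | h
      · -- base case m + 1 = 1, i.e. m = 0
        have hm0 : m = 0 := by omega
        subst hm0
        have := key 1 le_rfl hmn
        simp only [Finset.Icc_self, Finset.sum_singleton] at *
        simp only [Nat.sub_self, zero_mul, one_mul, hq0, edist_self, zero_add,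
          Finset.range_eq_Ico] at *
        calc blockWF ℓ a 1 (z 0) (q 1) + (edist (q 1) (p 1) + edist (p 1) (z a)) =
            blockWF ℓ a 1 (z 0) (q 1) + edist (q 1) (p 1) + edist (p 1) (z a) := by
              rw [add_assoc]
          _ ≤ (∑ t ∈ Finset.Ico 0 a, (edist (z t) (z (t + 1)) + ℓ (t + 1) (z (t + 1)))) +
              edist (p 1) (z a) + edist (p 1) (z a) := by
              exact add_le_add_left this _
          _ = (∑ t ∈ Finset.Ico 0 a, (edist (z t) (z (t + 1)) + ℓ (t + 1) (z (t + 1)))) +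
              2 * edist (p 1) (z a) := by ring
      · -- inductive step, 1 ≤ m
        have hm : 1 ≤ m := by omega
        have IH := ih hm (by omega)
        have hk := key (m + 1) (by omega) hmn
        simp only [Nat.add_sub_cancel] at hk
        have tri : edist (q m) (z (m * a)) ≤ edist (q m) (p m) + edist (p m) (z (m * a)) :=
          edist_triangle _ _ _
        have hsum : ∑ i ∈ Finset.Icc 1 (m + 1), blockWF ℓ a i (q (i - 1)) (q i) =
            ∑ i ∈ Finset.Icc 1 m, blockWF ℓ a i (q (i - 1)) (q i) +
              blockWF ℓ a (m + 1) (q m) (q (m + 1)) := by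
          rw [Finset.sum_Icc_succ_top (by omega)]
          simp
        have hrs : ∑ t ∈ Finset.range ((m + 1) * a),
              (edist (z t) (z (t + 1)) + ℓ (t + 1) (z (t + 1))) =
            (∑ t ∈ Finset.range (m * a),
              (edist (z t) (z (t + 1)) + ℓ (t + 1) (z (t + 1)))) +
            ∑ t ∈ Finset.Ico (m * a) ((m + 1) * a),
              (edist (z t) (z (t + 1)) + ℓ (t + 1) (z (t + 1))) := by
          rw [Finset.range_eq_Ico, Finset.range_eq_Ico]
          rw [Finset.sum_Ico_consecutive _ (Nat.zero_le _) (Nat.mul_le_mul_right a (by omega))]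
        have hes : ∑ i ∈ Finset.Icc 1 (m + 1), edist (p i) (z (i * a)) =
            ∑ i ∈ Finset.Icc 1 m, edist (p i) (z (i * a)) +
              edist (p (m + 1)) (z ((m + 1) * a)) := by
          rw [Finset.sum_Icc_succ_top (by omega)]
        rw [hsum, hrs, hes]
        calc ∑ i ∈ Finset.Icc 1 m, blockWF ℓ a i (q (i - 1)) (q i) +
              blockWF ℓ a (m + 1) (q m) (q (m + 1)) +
              (edist (q (m + 1)) (p (m + 1)) + edist (p (m + 1)) (z ((m + 1) * a)))
            = ∑ i ∈ Finset.Icc 1 m, blockWF ℓ a i (q (i - 1)) (q i) +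
              (blockWF ℓ a (m + 1) (q m) (q (m + 1)) + edist (q (m + 1)) (p (m + 1))) +
              edist (p (m + 1)) (z ((m + 1) * a)) := by ring
          _ ≤ ∑ i ∈ Finset.Icc 1 m, blockWF ℓ a i (q (i - 1)) (q i) +
              (edist (q m) (z (m * a)) +
               (∑ t ∈ Finset.Ico (m * a) ((m + 1) * a),
                 (edist (z t) (z (t + 1)) + ℓ (t + 1) (z (t + 1)))) +
               edist (p (m + 1)) (z ((m + 1) * a))) +
              edist (p (m + 1)) (z ((m + 1) * a)) := by gcongr
          _ ≤ ∑ i ∈ Finset.Icc 1 m, blockWF ℓ a i (q (i - 1)) (q i) +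
              ((edist (q m) (p m) + edist (p m) (z (m * a))) +
               (∑ t ∈ Finset.Ico (m * a) ((m + 1) * a),
                 (edist (z t) (z (t + 1)) + ℓ (t + 1) (z (t + 1)))) +
               edist (p (m + 1)) (z ((m + 1) * a))) +
              edist (p (m + 1)) (z ((m + 1) * a)) := by gcongr
          _ = (∑ i ∈ Finset.Icc 1 m, blockWF ℓ a i (q (i - 1)) (q i) +
               (edist (q m) (p m) + edist (p m) (z (m * a)))) +
              (∑ t ∈ Finset.Ico (m * a) ((m + 1) * a),
                 (edist (z t) (z (t + 1)) + ℓ (t + 1) (z (t + 1)))) +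
              2 * edist (p (m + 1)) (z ((m + 1) * a)) := by ring
          _ ≤ ((∑ t ∈ Finset.range (m * a),
                 (edist (z t) (z (t + 1)) + ℓ (t + 1) (z (t + 1)))) +
               2 * ∑ i ∈ Finset.Icc 1 m, edist (p i) (z (i * a))) +
              (∑ t ∈ Finset.Ico (m * a) ((m + 1) * a),
                 (edist (z t) (z (t + 1)) + ℓ (t + 1) (z (t + 1)))) +
              2 * edist (p (m + 1)) (z ((m + 1) * a)) := by gcongr
          _ = (∑ t ∈ Finset.range (m * a),
                 (edist (z t) (z (t + 1)) + ℓ (t + 1) (z (t + 1)))) +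
              (∑ t ∈ Finset.Ico (m * a) ((m + 1) * a),
                 (edist (z t) (z (t + 1)) + ℓ (t + 1) (z (t + 1)))) +
              2 * (∑ i ∈ Finset.Icc 1 m, edist (p i) (z (i * a)) +
                  edist (p (m + 1)) (z ((m + 1) * a))) := by ring
  rcases Nat.eq_zero_or_pos n with h | h
  · subst h; simp
  · exact le_trans (le_add_right le_rfl) (aux n h le_rfl)
end

section
/- Consider one execution interval of the Follower algorithm with FitF-oracle predictions, starting with the same cache content P as a Belady run begun at the same time, on request subsequence σ. Then: (1) Follower and this Belady run incur exactly the same cost on σ; and (2) there is a tie-breaking rule for Belady such that, if φ of the predictions received during the interval are incorrect (do not name the true furthest-in-the-future page of the algorithm's current cache), the cache contents of Follower and Belady after σ differ in at most φ pages. -/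
/-! ### nextReq lemmas -/

lemma nextReq_le (r : ℕ → ℕ) (T t p : ℕ) : nextReq r T t p ≤ T :=
  Nat.sInf_le (Or.inr rfl)

lemma nextReq_ge (r : ℕ → ℕ) {T t : ℕ} (p : ℕ) (h : t ≤ T) : t ≤ nextReq r T t p := by
  refine le_csInf ⟨T, Or.inr rfl⟩ ?_
  rintro b (⟨hb, _⟩ | rfl)
  · exact hb
  · exact h

lemma nextReq_spec (r : ℕ → ℕ) {T t p : ℕ} (h : nextReq r T t p < T) :
    t ≤ nextReq r T t p ∧ r (nextReq r T t p) = p := by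
  have hne : ({s | t ≤ s ∧ s < T ∧ r s = p} ∪ {T} : Set ℕ).Nonempty := ⟨T, Or.inr rfl⟩
  rcases Nat.sInf_mem hne with h1 | h2
  · exact ⟨h1.1, h1.2.2⟩
  · simp only [Set.mem_singleton_iff] at h2
    rw [nextReq] at h
    omega

lemma nextReq_self (r : ℕ → ℕ) {T t : ℕ} (h : t < T) : nextReq r T t (r t) = t := by
  refine le_antisymm (Nat.sInf_le (Or.inl ⟨le_refl t, h, rfl⟩)) (nextReq_ge r _ h.le)

lemma nextReq_succ (r : ℕ → ℕ) {T t p : ℕ} (h : r t ≠ p) :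
    nextReq r T (t+1) p = nextReq r T t p := by
  unfold nextReq
  congr 1
  ext s
  simp only [Set.mem_union, Set.mem_setOf_eq, Set.mem_singleton_iff]
  constructor
  · rintro (⟨h1, h2, h3⟩ | rfl)
    · exact Or.inl ⟨by omega, h2, h3⟩
    · exact Or.inr rfl
  · rintro (⟨h1, h2, h3⟩ | rfl)
    · rcases eq_or_lt_of_le h1 with rfl | hlt
      · exact absurd h3 h
      · exact Or.inl ⟨hlt, h2, h3⟩
    · exact Or.inr rfl

lemma nextReq_inj (r : ℕ → ℕ) {T t p q : ℕ} (hp : nextReq r T t p < T)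
    (h : nextReq r T t p = nextReq r T t q) : p = q := by
  have h1 := (nextReq_spec r hp).2
  have h2 := (nextReq_spec r (h ▸ hp)).2
  rw [← h] at h2
  rw [← h1, ← h2]

/-! ### faultCount lemmas -/

lemma faultCount_zero (r : ℕ → ℕ) (C : ℕ → Finset ℕ) (n : ℕ) : faultCount r C n n = 0 := by
  simp [faultCount]

lemma faultCount_succ (r : ℕ → ℕ) (C : ℕ → Finset ℕ) {t n : ℕ} (h : t < n) :
    faultCount r C t n = (if r t ∈ C t then 0 else 1) + faultCount r C (t+1) n := by
  unfold faultCount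
  have hIco : Finset.Ico t n = insert t (Finset.Ico (t+1) n) := by
    ext x; simp [Finset.mem_Ico]; omega
  rw [hIco, Finset.filter_insert]
  by_cases h1 : r t ∈ C t
  · rw [if_neg (by simp [h1]), if_pos h1]
    omega
  · rw [if_pos h1, if_neg h1, Finset.card_insert_of_notMem (by simp)]
    omega

/-! ### The "always evict one" optimal cost function -/

noncomputable def optAux (r : ℕ → ℕ) : ℕ → ℕ → Finset ℕ → ℕ
  | 0, _, _ => 0
  | m+1, t, Q =>
    if r t ∈ Q then optAux r m (t+1) Q
    else 1 + sInf ((fun W => optAux r m (t+1) W) ''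
      ((Q.image fun e => insert (r t) (Q.erase e)) : Finset (Finset ℕ)))

lemma optAux_hit (r : ℕ → ℕ) {m t : ℕ} {Q : Finset ℕ} (h : r t ∈ Q) :
    optAux r (m+1) t Q = optAux r m (t+1) Q := by
  simp [optAux, h]

lemma optAux_fault_le (r : ℕ → ℕ) {m t : ℕ} {Q : Finset ℕ} {e : ℕ} (hr : r t ∉ Q)
    (he : e ∈ Q) :
    optAux r (m+1) t Q ≤ 1 + optAux r m (t+1) (insert (r t) (Q.erase e)) := by
  rw [optAux, if_neg hr]
  have hmem : optAux r m (t+1) (insert (r t) (Q.erase e)) ∈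
      ((fun W => optAux r m (t+1) W) ''
        ((Q.image fun e => insert (r t) (Q.erase e)) : Finset (Finset ℕ))) := by
    exact ⟨insert (r t) (Q.erase e), by simp; exact ⟨e, he, rfl⟩, rfl⟩
  exact Nat.add_le_add_left (Nat.sInf_le hmem) 1

lemma optAux_fault_eq (r : ℕ → ℕ) {m t : ℕ} {Q : Finset ℕ} (hr : r t ∉ Q)
    (hQ : Q.Nonempty) :
    ∃ e ∈ Q, optAux r (m+1) t Q = 1 + optAux r m (t+1) (insert (r t) (Q.erase e)) := by
  rw [optAux, if_neg hr]
  have hne : ((fun W => optAux r m (t+1) W) ''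
      ((Q.image fun e => insert (r t) (Q.erase e)) : Finset (Finset ℕ))).Nonempty := by
    obtain ⟨e, he⟩ := hQ
    exact ⟨_, ⟨insert (r t) (Q.erase e), by simp; exact ⟨e, he, rfl⟩, rfl⟩⟩
  obtain ⟨W, hW, hval⟩ := Nat.sInf_mem hne
  simp only [Finset.coe_image, Set.mem_image, Finset.mem_coe] at hW
  obtain ⟨e, he, rfl⟩ := hW
  exact ⟨e, he, by simp only at hval; rw [← hval]⟩

/-- monotonicity : a larger cache never costs more -/
lemma optAux_mono (r : ℕ → ℕ) : ∀ (m t : ℕ) (Q Q' : Finset ℕ), Q'.Nonempty → Q' ⊆ Q →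
    optAux r m t Q ≤ optAux r m t Q'
  | 0, t, Q, Q', _, _ => le_refl _
  | m+1, t, Q, Q', hne, hsub => by
    by_cases h1 : r t ∈ Q'
    · rw [optAux_hit r h1, optAux_hit r (hsub h1)]
      exact optAux_mono r m (t+1) Q Q' hne hsub
    · by_cases h2 : r t ∈ Q
      · rw [optAux_hit r h2]
        obtain ⟨e, he, heq⟩ := optAux_fault_eq r h1 hne
        rw [heq]
        have hWsub : insert (r t) (Q'.erase e) ⊆ Q := by
          intro x hx
          rcases Finset.mem_insert.1 hx with rfl | hx
          · exact h2
          · exact hsub (Finset.erase_subset _ _ hx)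
        calc optAux r m (t+1) Q ≤ optAux r m (t+1) (insert (r t) (Q'.erase e)) :=
              optAux_mono r m (t+1) _ _ ⟨r t, Finset.mem_insert_self _ _⟩ hWsub
          _ ≤ 1 + _ := Nat.le_add_left _ 1
      · obtain ⟨e, he, heq⟩ := optAux_fault_eq r h1 hne
        rw [heq]
        have hle := optAux_fault_le r (m := m) h2 (hsub he)
        refine hle.trans (Nat.add_le_add_left ?_ 1)
        refine optAux_mono r m (t+1) _ _ ⟨r t, Finset.mem_insert_self _ _⟩ ?_
        exact Finset.insert_subset_insert _ (Finset.erase_subset_erase _ hsub)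

lemma sdiff_singleton_facts {Q1 Q2 : Finset ℕ} (hcard : Q1.card = Q2.card)
    (hne : Q1 ≠ Q2) (hd : (Q1 \ Q2).card ≤ 1) :
    ∃ y z, Q1 \ Q2 = {y} ∧ Q2 \ Q1 = {z} ∧ y ≠ z ∧ y ∈ Q1 ∧ y ∉ Q2 ∧ z ∈ Q2 ∧ z ∉ Q1 ∧
      Q1.erase y = Q2.erase z := by
  have hd2 : (Q2 \ Q1).card = (Q1 \ Q2).card := (Finset.card_sdiff_comm hcard).symm
  have h1 : (Q1 \ Q2).card = 1 := by
    rcases Nat.lt_or_ge (Q1 \ Q2).card 1 with h | h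
    · exfalso
      have : Q1 \ Q2 = ∅ := Finset.card_eq_zero.1 (by omega)
      have hsub : Q1 ⊆ Q2 := by
        intro x hx
        by_contra hx2
        exact absurd (Finset.mem_sdiff.2 ⟨hx, hx2⟩) (by simp [this])
      exact hne (Finset.eq_of_subset_of_card_le hsub hcard.ge)
    · omega
  obtain ⟨y, hy⟩ := Finset.card_eq_one.1 h1
  obtain ⟨z, hz⟩ := Finset.card_eq_one.1 (by omega : (Q2 \ Q1).card = 1)
  have hy1 : y ∈ Q1 ∧ y ∉ Q2 := by
    have := Finset.mem_sdiff.1 (hy ▸ Finset.mem_singleton_self y); exact this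
  have hz1 : z ∈ Q2 ∧ z ∉ Q1 := by
    have := Finset.mem_sdiff.1 (hz ▸ Finset.mem_singleton_self z); exact this
  refine ⟨y, z, hy, hz, fun hc => hy1.2 (hc ▸ hz1.1), hy1.1, hy1.2, hz1.1, hz1.2, ?_⟩
  ext x
  simp only [Finset.mem_erase]
  constructor
  · rintro ⟨hxy, hx1⟩
    have hx2 : x ∈ Q2 := by
      by_contra hc
      have : x ∈ Q1 \ Q2 := Finset.mem_sdiff.2 ⟨hx1, hc⟩
      rw [hy] at this
      exact hxy (Finset.mem_singleton.1 this)
    refine ⟨fun hc => hz1.2 (hc ▸ hx1), hx2⟩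
  · rintro ⟨hxz, hx2⟩
    have hx1 : x ∈ Q1 := by
      by_contra hc
      have : x ∈ Q2 \ Q1 := Finset.mem_sdiff.2 ⟨hx2, hc⟩
      rw [hz] at this
      exact hxz (Finset.mem_singleton.1 this)
    refine ⟨fun hc => hy1.2 (hc ▸ hx2), hx1⟩

/-- caches that differ by swapping a single page have costs within 1 -/
lemma optAux_close (r : ℕ → ℕ) : ∀ (m t : ℕ) (Q1 Q2 : Finset ℕ), Q1.Nonempty → Q2.Nonempty →
    Q1.card = Q2.card → (Q1 \ Q2).card ≤ 1 →
    optAux r m t Q1 ≤ 1 + optAux r m t Q2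
  | 0, _, _, _, _, _, _, _ => by simp [optAux]
  | m+1, t, Q1, Q2, hne1, hne2, hcard, hd => by
    by_cases heq : Q1 = Q2
    · subst heq; exact Nat.le_add_left _ 1
    obtain ⟨y, z, hyd, hzd, hyz, hy1, hy2, hz2, hz1, herase⟩ :=
      sdiff_singleton_facts hcard heq hd
    by_cases h1 : r t ∈ Q1
    · by_cases h2 : r t ∈ Q2
      · rw [optAux_hit r h1, optAux_hit r h2]
        exact optAux_close r m (t+1) Q1 Q2 hne1 hne2 hcard hd
      · -- r t ∈ Q1 \ Q2, so r t = y : LHS hit, RHS fault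
        have hrty : r t = y := by
          have : r t ∈ Q1 \ Q2 := Finset.mem_sdiff.2 ⟨h1, h2⟩
          rw [hyd] at this; exact Finset.mem_singleton.1 this
        rw [optAux_hit r h1]
        obtain ⟨w, hw, heqw⟩ := optAux_fault_eq r h2 hne2
        rw [heqw]
        have hrec : optAux r m (t+1) Q1 ≤
            1 + optAux r m (t+1) (insert (r t) (Q2.erase w)) := by
          refine optAux_close r m (t+1) Q1 _ hne1 ⟨r t, Finset.mem_insert_self _ _⟩ ?_ ?_
          · rw [Finset.card_insert_of_notMem (fun hc => h2 (Finset.erase_subset _ _ hc)),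
              Finset.card_erase_of_mem hw, hcard]
            have : 0 < Q2.card := Finset.card_pos.2 hne2
            omega
          · have hsub : Q1 \ insert (r t) (Q2.erase w) ⊆ {w} := by
              intro x hx
              obtain ⟨hx1, hx2⟩ := Finset.mem_sdiff.1 hx
              simp only [Finset.mem_insert, Finset.mem_erase, not_or, not_and] at hx2
              by_cases hxw : x = w
              · simp [hxw]
              · exfalso
                have hx2' : x ∉ Q2 := fun hc => (hx2.2 hxw) hc
                have : x ∈ Q1 \ Q2 := Finset.mem_sdiff.2 ⟨hx1, hx2'⟩
                rw [hyd] at this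
                exact hx2.1 ((Finset.mem_singleton.1 this) ▸ hrty.symm)
            exact (Finset.card_le_card hsub).trans (by simp)
        omega
    · by_cases h2 : r t ∈ Q2
      · -- r t = z : LHS fault, RHS hit ; evict y, reaching Q2
        have hrtz : r t = z := by
          have : r t ∈ Q2 \ Q1 := Finset.mem_sdiff.2 ⟨h2, h1⟩
          rw [hzd] at this; exact Finset.mem_singleton.1 this
        have hQ2 : insert (r t) (Q1.erase y) = Q2 := by
          rw [herase, hrtz, Finset.insert_erase hz2]
        rw [optAux_hit r h2]
        have := optAux_fault_le r (m := m) h1 hy1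
        rw [hQ2] at this
        exact this
      · -- both fault
        obtain ⟨w, hw, heqw⟩ := optAux_fault_eq r h2 hne2
        rw [heqw]
        by_cases hwz : w = z
        · -- evict y on the left : caches coincide
          have hVW : insert (r t) (Q1.erase y) = insert (r t) (Q2.erase w) := by
            rw [herase, hwz]
          have := optAux_fault_le r (m := m) h1 hy1
          rw [hVW] at this
          omega
        · -- w ∈ Q1 ∩ Q2 ; evict w on the left and recurse
          have hwQ1 : w ∈ Q1 := by
            by_contra hc
            have : w ∈ Q2 \ Q1 := Finset.mem_sdiff.2 ⟨hw, hc⟩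
            rw [hzd] at this
            exact hwz (Finset.mem_singleton.1 this)
          have hle := optAux_fault_le r (m := m) h1 hwQ1
          refine hle.trans ?_
          have hrec : optAux r m (t+1) (insert (r t) (Q1.erase w)) ≤
              1 + optAux r m (t+1) (insert (r t) (Q2.erase w)) := by
            refine optAux_close r m (t+1) _ _ ⟨r t, Finset.mem_insert_self _ _⟩
              ⟨r t, Finset.mem_insert_self _ _⟩ ?_ ?_
            · rw [Finset.card_insert_of_notMem (fun hc => h1 (Finset.erase_subset _ _ hc)),
                Finset.card_insert_of_notMem (fun hc => h2 (Finset.erase_subset _ _ hc)),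
                Finset.card_erase_of_mem hwQ1, Finset.card_erase_of_mem hw, hcard]
            · have hsub : insert (r t) (Q1.erase w) \ insert (r t) (Q2.erase w) ⊆ {y} := by
                intro x hx
                obtain ⟨hx1, hx2⟩ := Finset.mem_sdiff.1 hx
                simp only [Finset.mem_insert, Finset.mem_erase, not_or, not_and] at hx1 hx2
                rcases hx1 with rfl | ⟨hxw, hxQ1⟩
                · exact absurd rfl hx2.1
                · by_cases hxQ2 : x ∈ Q2
                  · exact absurd hxQ2 (hx2.2 hxw)
                  · have : x ∈ Q1 \ Q2 := Finset.mem_sdiff.2 ⟨hxQ1, hxQ2⟩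
                    rw [hyd] at this; simpa using this
              exact (Finset.card_le_card hsub).trans (by simp)
          omega

/-- exchange: keeping an earlier-requested page instead of a later one never costs more -/
lemma optAux_exchange (r : ℕ → ℕ) (n : ℕ) : ∀ (m t : ℕ) (Q : Finset ℕ) (a b : ℕ),
    t + m ≤ n → a ∉ Q → b ∉ Q → nextReq r n t a ≤ nextReq r n t b →
    optAux r m t (insert a Q) ≤ optAux r m t (insert b Q)
  | 0, _, _, _, _, _, _, _, _ => le_refl _
  | m+1, t, Q, a, b, htm, ha, hb, hab => by
    by_cases hab' : a = b
    · subst hab'; exact le_refl _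
    have ht : t < n := by omega
    by_cases hQ : r t ∈ Q
    · rw [optAux_hit r (Finset.mem_insert_of_mem hQ),
        optAux_hit r (Finset.mem_insert_of_mem hQ)]
      have hra : r t ≠ a := fun hc => ha (hc ▸ hQ)
      have hrb : r t ≠ b := fun hc => hb (hc ▸ hQ)
      exact optAux_exchange r n m (t+1) Q a b (by omega) ha hb
        (by rwa [nextReq_succ r hra, nextReq_succ r hrb])
    by_cases hrA : r t = a
    · -- LHS hit, RHS fault
      rw [optAux_hit r (hrA ▸ Finset.mem_insert_self a Q)]
      have hrB : r t ∉ insert b Q := by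
        simp only [Finset.mem_insert, not_or]
        exact ⟨fun hc => hab' (hrA.symm.trans hc), hQ⟩
      obtain ⟨w, hw, heqw⟩ := optAux_fault_eq r hrB ⟨b, Finset.mem_insert_self _ _⟩
      rw [heqw]
      rcases Finset.mem_insert.1 hw with rfl | hwQ
      · -- w = b : target cache equals insert a Q
        rw [Finset.erase_insert hb, hrA]
        exact Nat.le_add_left _ 1
      · -- w ∈ Q : use closeness
        have hrec : optAux r m (t+1) (insert a Q) ≤
            1 + optAux r m (t+1) (insert (r t) ((insert b Q).erase w)) := by
          refine optAux_close r m (t+1) _ _ ⟨a, Finset.mem_insert_self _ _⟩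
            ⟨r t, Finset.mem_insert_self _ _⟩ ?_ ?_
          · rw [Finset.card_insert_of_notMem ha,
              Finset.card_insert_of_notMem (by
                simp only [Finset.mem_erase, Finset.mem_insert, not_and, not_or]
                intro _; exact ⟨fun hc => hab' (hrA.symm.trans hc), hQ⟩),
              Finset.card_erase_of_mem hw,
              Finset.card_insert_of_notMem hb]
            have : 0 < (insert b Q).card := Finset.card_pos.2 ⟨b, Finset.mem_insert_self _ _⟩
            omega
          · have hsub : insert a Q \ insert (r t) ((insert b Q).erase w) ⊆ {w} := by
              intro x hx
              obtain ⟨hx1, hx2⟩ := Finset.mem_sdiff.1 hx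
              simp only [Finset.mem_insert, Finset.mem_erase, not_or, not_and] at hx2
              rcases Finset.mem_insert.1 hx1 with rfl | hxQ
              · exact absurd hrA.symm hx2.1
              · by_cases hxw : x = w
                · simp [hxw]
                · exact absurd hxQ (hx2.2 hxw).2
            exact (Finset.card_le_card hsub).trans (by simp)
        omega
    by_cases hrB : r t = b
    · -- impossible : b requested now but a's next request is not later
      exfalso
      have h1 : nextReq r n t b = t := hrB ▸ nextReq_self r ht
      have h2 : t ≤ nextReq r n t a := nextReq_ge r a ht.le
      have h3 : nextReq r n t a = t := by omega
      have hspec := (nextReq_spec r (by omega : nextReq r n t a < n)).2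
      rw [h3] at hspec
      exact hrA hspec
    · -- both fault
      have hfA : r t ∉ insert a Q := by simp [Finset.mem_insert, hrA, hQ]
      have hfB : r t ∉ insert b Q := by simp [Finset.mem_insert, hrB, hQ]
      obtain ⟨w, hw, heqw⟩ := optAux_fault_eq r hfB ⟨b, Finset.mem_insert_self _ _⟩
      rw [heqw]
      rcases Finset.mem_insert.1 hw with rfl | hwQ
      · -- w = b
        rw [Finset.erase_insert hb]
        have := optAux_fault_le r (m := m) hfA (Finset.mem_insert_self a Q)
        rw [Finset.erase_insert ha] at this
        exact this
      · -- w ∈ Q : evict w on the left too and use IH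
        have hV : (insert a Q).erase w = insert a (Q.erase w) :=
          Finset.erase_insert_of_ne (fun hc => ha (hc ▸ hwQ))
        have hW : (insert b Q).erase w = insert b (Q.erase w) :=
          Finset.erase_insert_of_ne (fun hc => hb (hc ▸ hwQ))
        have hle := optAux_fault_le r (m := m) hfA (Finset.mem_insert_of_mem hwQ)
        refine hle.trans ?_
        rw [hV, hW, Finset.insert_comm (r t) a, Finset.insert_comm (r t) b]
        have hanotin : a ∉ insert (r t) (Q.erase w) := by
          simp only [Finset.mem_insert, Finset.mem_erase, not_or, not_and]
          exact ⟨fun hc => hrA hc.symm, fun _ hc => ha hc⟩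
        have hbnotin : b ∉ insert (r t) (Q.erase w) := by
          simp only [Finset.mem_insert, Finset.mem_erase, not_or, not_and]
          exact ⟨fun hc => hrB hc.symm, fun _ hc => hb hc⟩
        have hrec := optAux_exchange r n m (t+1) (insert (r t) (Q.erase w)) a b (by omega)
          hanotin hbnotin
          (by rwa [nextReq_succ r (fun hc => hrA hc), nextReq_succ r (fun hc => hrB hc)])
        omega

/-- Any "always evict exactly one" run costs at least `optAux`. -/
lemma optAux_le_run (r : ℕ → ℕ) (n : ℕ) (C : ℕ → Finset ℕ)
    (hC : ∀ s < n, (r s ∈ C s → C (s+1) = C s) ∧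
      (r s ∉ C s → ∃ e ∈ C s, C (s+1) = insert (r s) ((C s).erase e))) :
    ∀ (m t : ℕ), t + m = n → optAux r m t (C t) ≤ faultCount r C t n
  | 0, t, htm => by
    subst htm
    simp [optAux, faultCount_zero]
  | m+1, t, htm => by
    have ht : t < n := by omega
    by_cases h1 : r t ∈ C t
    · rw [optAux_hit r h1, faultCount_succ r C ht, if_pos h1, ← (hC t ht).1 h1]
      have := optAux_le_run r n C hC m (t+1) (by omega)
      omega
    · obtain ⟨e, he, heq⟩ := (hC t ht).2 h1
      rw [faultCount_succ r C ht, if_neg h1]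
      have hle := optAux_fault_le r (m := m) h1 he
      rw [← heq] at hle
      exact hle.trans (Nat.add_le_add_left (optAux_le_run r n C hC m (t+1) (by omega)) 1)

lemma erase_comm' (s : Finset ℕ) (a b : ℕ) : (s.erase a).erase b = (s.erase b).erase a := by
  ext x
  simp only [Finset.mem_erase]
  tauto

lemma lazy_fault_eq {D S : Finset ℕ} {x : ℕ} (hmem : x ∈ D) (hsub : D ⊆ insert x S) :
    D = insert x (S \ (S \ D)) := by
  ext y
  simp only [Finset.mem_insert, Finset.mem_sdiff, not_and, not_not]
  constructor
  · intro hy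
    rcases Finset.mem_insert.1 (hsub hy) with rfl | hyS
    · exact Or.inl rfl
    · exact Or.inr ⟨hyS, fun _ => hy⟩
  · rintro (rfl | ⟨hyS, hy⟩)
    · exact hmem
    · exact hy hyS

/-- A Belady run costs at most `optAux`. -/
lemma belady_le_optAux (k : ℕ) (r : ℕ → ℕ) (n : ℕ) (B : ℕ → Finset ℕ)
    (hB : IsBeladyRun k r n B) :
    ∀ (m t : ℕ), t + m = n → (B t).Nonempty → faultCount r B t n ≤ optAux r m t (B t)
  | 0, t, htm, _ => by
    subst htm
    simp [faultCount_zero]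
  | m+1, t, htm, hne => by
    have ht : t < n := by omega
    by_cases h1 : r t ∈ B t
    · rw [optAux_hit r h1, faultCount_succ r B ht, if_pos h1]
      have hstep := (hB.1.2 t ht).1 h1
      have := belady_le_optAux k r n B hB m (t+1) (by omega) (hstep ▸ hne)
      rw [hstep] at this
      omega
    · rw [faultCount_succ r B ht, if_neg h1]
      obtain ⟨hmem, hsub, hcard1⟩ := (hB.1.2 t ht).2 h1
      obtain ⟨y, hy, heqy⟩ := optAux_fault_eq r (m := m) h1 hne
      rw [heqy]
      have hIH := belady_le_optAux k r n B hB m (t+1) (by omega) ⟨r t, hmem⟩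
      have hkey : optAux r m (t+1) (B (t+1)) ≤
          optAux r m (t+1) (insert (r t) ((B t).erase y)) := by
        have hBt1 : B (t+1) = insert (r t) (B t \ (B t \ B (t+1))) := lazy_fault_eq hmem hsub
        rcases Finset.eq_empty_or_nonempty (B t \ B (t+1)) with hS | hS
        · -- no eviction : B(t+1) ⊇ any one-eviction successor
          rw [hS, Finset.sdiff_empty] at hBt1
          refine optAux_mono r m (t+1) _ _ ⟨r t, Finset.mem_insert_self _ _⟩ ?_
          rw [hBt1]
          exact Finset.insert_subset_insert _ (Finset.erase_subset _ _)
        · -- eviction of e'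
          obtain ⟨e', he'⟩ := Finset.card_eq_one.1 (le_antisymm hcard1 (Finset.card_pos.2 hS))
          have he'mem : e' ∈ B t := by
            have := he' ▸ Finset.mem_singleton_self e'; exact (Finset.mem_sdiff.1 this).1
          have he'notin : e' ∉ B (t+1) := by
            have := he' ▸ Finset.mem_singleton_self e'; exact (Finset.mem_sdiff.1 this).2
          rw [he'] at hBt1
          rw [show B t \ {e'} = (B t).erase e' from Finset.erase_eq (B t) e' ▸ rfl] at hBt1
          by_cases hye : y = e'
          · rw [hBt1, hye]
          · -- exchange y and e'
            have hyBt : y ∈ B t := hy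
            have hyne : y ≠ r t := fun hc => h1 (hc ▸ hyBt)
            have he'ne : e' ≠ r t := fun hc => h1 (hc ▸ he'mem)
            have hid1 : B (t+1) = insert y (insert (r t) (((B t).erase e').erase y)) := by
              rw [hBt1, Finset.insert_comm, Finset.insert_erase
                (Finset.mem_erase.2 ⟨hye, hyBt⟩)]
            have hid2 : insert (r t) ((B t).erase y) =
                insert e' (insert (r t) (((B t).erase e').erase y)) := by
              rw [Finset.insert_comm, erase_comm', Finset.insert_erase
                (Finset.mem_erase.2 ⟨fun hc => hye hc.symm, he'mem⟩)]
            rw [hid1, hid2]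
            refine optAux_exchange r n m (t+1) _ y e' (by omega) ?_ ?_ ?_
            · intro hc
              rcases Finset.mem_insert.1 hc with h | h
              · exact hyne h
              · exact (Finset.mem_erase.1 h).1 rfl
            · intro hc
              rcases Finset.mem_insert.1 hc with h | h
              · exact he'ne h
              · exact (Finset.mem_erase.1 (Finset.mem_erase.1 h).2).1 rfl
            · have := hB.2 t ht h1 e' he'mem he'notin y hyBt
              rwa [nextReq_succ r (fun hc => hyne hc.symm),
                nextReq_succ r (fun hc => he'ne hc.symm)]
      omega

/-! ### Construction of the coupled Belady run -/

noncomputable def evictB (r pred : ℕ → ℕ) (n : ℕ) (B' : ℕ → Finset ℕ) (t : ℕ)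
    (Bt : Finset ℕ) : ℕ :=
  if pred t ∈ Bt ∧ nextReq r n t (pred t) = n then pred t
  else if sInf ↑(B' t \ B' (t+1)) ∈ Bt then sInf ↑(B' t \ B' (t+1))
  else sInf ↑(Bt \ B' t)

noncomputable def Bfun (r pred : ℕ → ℕ) (n : ℕ) (B' : ℕ → Finset ℕ) (P : Finset ℕ) :
    ℕ → Finset ℕ
  | 0 => P
  | t+1 =>
    if n ≤ t then Bfun r pred n B' P t
    else if r t ∈ Bfun r pred n B' P t then Bfun r pred n B' P t
    else if (B' t \ B' (t+1)).Nonempty then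
      insert (r t) (Bfun r pred n B' P t \ {evictB r pred n B' t (Bfun r pred n B' P t)})
    else insert (r t) (Bfun r pred n B' P t)

lemma Bfun_zero (r pred : ℕ → ℕ) (n : ℕ) (B' : ℕ → Finset ℕ) (P : Finset ℕ) :
    Bfun r pred n B' P 0 = P := rfl

lemma Bfun_ge (r pred : ℕ → ℕ) (n : ℕ) (B' : ℕ → Finset ℕ) (P : Finset ℕ) {t : ℕ}
    (h : n ≤ t) : Bfun r pred n B' P (t+1) = Bfun r pred n B' P t := by
  rw [Bfun, if_pos h]

lemma Bfun_hit (r pred : ℕ → ℕ) (n : ℕ) (B' : ℕ → Finset ℕ) (P : Finset ℕ) {t : ℕ}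
    (h : t < n) (hmem : r t ∈ Bfun r pred n B' P t) :
    Bfun r pred n B' P (t+1) = Bfun r pred n B' P t := by
  rw [Bfun, if_neg (by omega), if_pos hmem]

lemma Bfun_fault_evict (r pred : ℕ → ℕ) (n : ℕ) (B' : ℕ → Finset ℕ) (P : Finset ℕ) {t : ℕ}
    (h : t < n) (hmem : r t ∉ Bfun r pred n B' P t) (hS : (B' t \ B' (t+1)).Nonempty) :
    Bfun r pred n B' P (t+1) =
      insert (r t) (Bfun r pred n B' P t \ {evictB r pred n B' t (Bfun r pred n B' P t)}) := by
  rw [Bfun, if_neg (by omega), if_neg hmem, if_pos hS]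

lemma Bfun_fault_keep (r pred : ℕ → ℕ) (n : ℕ) (B' : ℕ → Finset ℕ) (P : Finset ℕ) {t : ℕ}
    (h : t < n) (hmem : r t ∉ Bfun r pred n B' P t) (hS : ¬(B' t \ B' (t+1)).Nonempty) :
    Bfun r pred n B' P (t+1) = insert (r t) (Bfun r pred n B' P t) := by
  rw [Bfun, if_neg (by omega), if_neg hmem, if_neg hS]

/-- Follower with a FitF oracle, over one execution interval on the request
subsequence `σ 0, …, σ (n-1)`.  `A` is Follower's cache sequence: it starts
with `P` and at each page fault evicts the page `pred t` returned by the
oracle (`hAstep`); throughout the interval, whenever Follower faults so does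
the Belady run `B'` started at the same time with the same content `P`
(`halign`; otherwise the interval would have ended).  Then: (1) Follower
incurs exactly the same cost as Belady; and (2) there is a tie-breaking rule
for Belady, i.e. a Belady run `B` starting from `P`, such that the final cache
contents of Follower and Belady differ in at most `φ` pages, where `φ` is the
number of incorrect predictions received (times where `pred t` is not a true
furthest-in-the-future page of Follower's current cache). -/
theorem follower_fitf_oracle (k n : ℕ) (σ pred : ℕ → ℕ) (P : Finset ℕ)
    (A B' : ℕ → Finset ℕ)
    (hA0 : A 0 = P) (hAcard : ∀ t, (A t).card ≤ k)
    (hAstep : ∀ t < n, (σ t ∈ A t → A (t + 1) = A t) ∧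
      (σ t ∉ A t → pred t ∈ A t ∧ A (t + 1) = insert (σ t) (A t \ {pred t})))
    (hB' : IsBeladyRun k σ n B') (hB'0 : B' 0 = P)
    (halign : ∀ t < n, σ t ∉ A t → σ t ∉ B' t) :
    faultCount σ A 0 n = faultCount σ B' 0 n ∧
    ∃ B : ℕ → Finset ℕ, IsBeladyRun k σ n B ∧ B 0 = P ∧
      faultCount σ B 0 n = faultCount σ B' 0 n ∧
      (A n \ B n).card ≤
        ((Finset.range n).filter fun t => σ t ∉ A t ∧
          ∃ q ∈ A t, nextReq σ n t (pred t) < nextReq σ n t q).card := by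
  rcases Nat.eq_zero_or_pos n with rfl | hn
  · refine ⟨by simp [faultCount], B', hB', hB'0, rfl, ?_⟩
    simp [hA0, hB'0]
  -- n ≥ 1 : the starting cache is nonempty
  have hPne : P.Nonempty := by
    by_cases h : σ 0 ∈ A 0
    · exact ⟨σ 0, hA0 ▸ h⟩
    · exact ⟨pred 0, hA0 ▸ ((hAstep 0 hn).2 h).1⟩
  -- part (1)
  have hArun : ∀ s < n, (σ s ∈ A s → A (s+1) = A s) ∧
      (σ s ∉ A s → ∃ e ∈ A s, A (s+1) = insert (σ s) ((A s).erase e)) := by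
    intro s hs
    refine ⟨(hAstep s hs).1, fun hf => ⟨pred s, ((hAstep s hs).2 hf).1, ?_⟩⟩
    rw [((hAstep s hs).2 hf).2, Finset.erase_eq]
  have hcost1 : faultCount σ A 0 n ≤ faultCount σ B' 0 n := by
    refine Finset.card_le_card ?_
    intro t ht
    simp only [Finset.mem_filter, Finset.mem_Ico] at ht ⊢
    exact ⟨ht.1, halign t ht.1.2 ht.2⟩
  have hcost2 : faultCount σ B' 0 n ≤ faultCount σ A 0 n := by
    have h1 := belady_le_optAux k σ n B' hB' n 0 (by omega) (hB'0 ▸ hPne)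
    have h2 := optAux_le_run σ n A hArun n 0 (by omega)
    rw [hB'0] at h1
    rw [hA0] at h2
    exact h1.trans h2
  have hpart1 : faultCount σ A 0 n = faultCount σ B' 0 n := le_antisymm hcost1 hcost2
  refine ⟨hpart1, ?_⟩
  -- part (2) : the constructed run
  set Bf := Bfun σ pred n B' P with hBfdef
  -- B' fault structure
  have hB'hit : ∀ t < n, σ t ∈ B' t → B' (t+1) = B' t := fun t ht h => (hB'.1.2 t ht).1 h
  have hSsing : ∀ t, t < n → σ t ∉ B' t → (B' t \ B' (t+1)).Nonempty →
      ∃ x, B' t \ B' (t+1) = {x} ∧ B' (t+1) = insert (σ t) ((B' t).erase x) := by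
    intro t ht hf hS
    obtain ⟨hmem, hsub, hcard1⟩ := (hB'.1.2 t ht).2 hf
    obtain ⟨x, hx⟩ := Finset.card_eq_one.1 (le_antisymm hcard1 (Finset.card_pos.2 hS))
    refine ⟨x, hx, ?_⟩
    have := lazy_fault_eq hmem hsub
    rw [hx] at this
    rw [this, Finset.erase_eq]
  have hkeep : ∀ t, t < n → σ t ∉ B' t → ¬(B' t \ B' (t+1)).Nonempty →
      B' (t+1) = insert (σ t) (B' t) := by
    intro t ht hf hS
    obtain ⟨hmem, hsub, _⟩ := (hB'.1.2 t ht).2 hf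
    have hSe : B' t \ B' (t+1) = ∅ := Finset.not_nonempty_iff_eq_empty.1 hS
    have := lazy_fault_eq hmem hsub
    rw [hSe, Finset.sdiff_empty] at this
    exact this
  -- the eviction-validity package
  have hvalid : ∀ t x, t < n →
      (Bf t).card = (B' t).card →
      (∀ p, p ∈ Bf t → p ∉ B' t → nextReq σ n t p = n) →
      (∀ p, p ∈ B' t → p ∉ Bf t → nextReq σ n t p = n) →
      σ t ∉ Bf t → σ t ∉ B' t →
      B' t \ B' (t+1) = {x} →
      (evictB σ pred n B' t (Bf t) ∈ Bf t ∧
       (∀ p ∈ Bf t, nextReq σ n t p ≤ nextReq σ n t (evictB σ pred n B' t (Bf t))) ∧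
       (x ∈ Bf t → evictB σ pred n B' t (Bf t) ≠ x → nextReq σ n t x = n) ∧
       (evictB σ pred n B' t (Bf t) ∈ B' t → evictB σ pred n B' t (Bf t) ≠ x →
         nextReq σ n t (evictB σ pred n B' t (Bf t)) = n)) := by
    intro t x ht IHcard IH1 IH2 hBm hB'm hxsing
    have hxmem : x ∈ B' t ∧ x ∉ B' (t+1) := by
      have := hxsing ▸ Finset.mem_singleton_self x
      exact Finset.mem_sdiff.1 this
    have hBel : ∀ p ∈ B' t, nextReq σ n t p ≤ nextReq σ n t x :=
      hB'.2 t ht hB'm x hxmem.1 hxmem.2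
    have hsinf : sInf ↑(B' t \ B' (t+1)) = x := by rw [hxsing]; simp
    -- the "never requested witness" trick
    have hwitness : ∀ z ∈ Bf t, z ∉ B' t → n ≤ nextReq σ n t x := by
      intro z hz1 hz2
      have hzd : (Bf t \ B' t).Nonempty := ⟨z, Finset.mem_sdiff.2 ⟨hz1, hz2⟩⟩
      have hcd : (B' t \ Bf t).card = (Bf t \ B' t).card :=
        Finset.card_sdiff_comm IHcard.symm
      have : (B' t \ Bf t).Nonempty := by
        rw [← Finset.card_pos, hcd, Finset.card_pos]; exact hzd
      obtain ⟨w, hw⟩ := this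
      obtain ⟨hw1, hw2⟩ := Finset.mem_sdiff.1 hw
      have h1 := IH2 w hw1 hw2
      have h2 := hBel w hw1
      omega
    by_cases hP : pred t ∈ Bf t ∧ nextReq σ n t (pred t) = n
    · rw [evictB, if_pos hP]
      have hP2 := hP.2
      refine ⟨hP.1, fun p _ => by have := nextReq_le σ n t p; omega, ?_, fun _ _ => hP.2⟩
      intro hxB _
      refine le_antisymm (nextReq_le σ n t x) ?_
      by_cases hpB' : pred t ∈ B' t
      · have := hBel (pred t) hpB'
        omega
      · exact hwitness (pred t) hP.1 hpB'
    · rw [evictB, if_neg hP, hsinf]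
      by_cases hxB : x ∈ Bf t
      · rw [if_pos hxB]
        refine ⟨hxB, ?_, fun _ h => absurd rfl h, fun _ h => absurd rfl h⟩
        intro p hp
        by_cases hxn : nextReq σ n t x = n
        · have := nextReq_le σ n t p
          omega
        · -- all of B' t is requested again : B' t = Bf t
          have hsub : B' t ⊆ Bf t := by
            intro z hz
            by_contra hzB
            have h1 := IH2 z hz hzB
            have h2 := hBel z hz
            have h3 := nextReq_le σ n t x
            omega
          have heq : B' t = Bf t := Finset.eq_of_subset_of_card_le hsub IHcard.le
          exact hBel p (heq ▸ hp)
      · rw [if_neg hxB]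
        have hne : (Bf t \ B' t).Nonempty := by
          have hcd : (Bf t \ B' t).card = (B' t \ Bf t).card :=
            Finset.card_sdiff_comm IHcard
          rw [← Finset.card_pos, hcd, Finset.card_pos]
          exact ⟨x, Finset.mem_sdiff.2 ⟨hxmem.1, hxB⟩⟩
        have hwmem : sInf ↑(Bf t \ B' t) ∈ Bf t \ B' t := by
          have := Nat.sInf_mem (Finset.coe_nonempty.2 hne)
          exact Finset.mem_coe.1 this
        obtain ⟨hw1, hw2⟩ := Finset.mem_sdiff.1 hwmem
        have hwn : nextReq σ n t (sInf ↑(Bf t \ B' t)) = n := IH1 _ hw1 hw2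
        exact ⟨hw1, fun p _ => by have := nextReq_le σ n t p; omega,
          fun hc _ => absurd hc hxB, fun _ _ => hwn⟩
  -- the coupling invariant
  have hMAIN : ∀ t, t ≤ n → (Bf t).card = (B' t).card ∧
      (∀ p, p ∈ Bf t → p ∉ B' t → nextReq σ n t p = n) ∧
      (∀ p, p ∈ B' t → p ∉ Bf t → nextReq σ n t p = n) := by
    intro t
    induction t with
    | zero =>
      intro _
      refine ⟨by rw [hBfdef, Bfun_zero, hB'0], ?_, ?_⟩
      · intro p h1 h2
        rw [hBfdef, Bfun_zero] at h1
        exact absurd (hB'0 ▸ h1) h2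
      · intro p h1 h2
        rw [hBfdef, Bfun_zero] at h2
        exact absurd (hB'0.symm ▸ h1) h2
    | succ t IH =>
      intro ht1
      have ht : t < n := by omega
      obtain ⟨IHcard, IH1, IH2⟩ := IH (by omega)
      have hpers : ∀ p, p ≠ σ t → nextReq σ n t p = n → nextReq σ n (t+1) p = n := by
        intro p hp h
        rw [nextReq_succ σ (fun hc => hp hc.symm)]
        exact h
      by_cases hBm : σ t ∈ Bf t
      · have hB'm : σ t ∈ B' t := by
          by_contra hc
          have := IH1 (σ t) hBm hc
          rw [nextReq_self σ ht] at this
          omega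
        have e1 : Bf (t+1) = Bf t := Bfun_hit σ pred n B' P ht hBm
        have e2 : B' (t+1) = B' t := hB'hit t ht hB'm
        rw [e1, e2]
        refine ⟨IHcard, ?_, ?_⟩
        · intro p h1 h2
          have hne : p ≠ σ t := fun hc => h2 (hc ▸ hB'm)
          exact hpers p hne (IH1 p h1 h2)
        · intro p h1 h2
          have hne : p ≠ σ t := fun hc => h2 (hc ▸ hBm)
          exact hpers p hne (IH2 p h1 h2)
      · have hB'm : σ t ∉ B' t := by
          by_contra hc
          have := IH2 (σ t) hc hBm
          rw [nextReq_self σ ht] at this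
          omega
        by_cases hS : (B' t \ B' (t+1)).Nonempty
        · obtain ⟨x, hxsing, hB't1⟩ := hSsing t ht hB'm hS
          have hxmem : x ∈ B' t ∧ x ∉ B' (t+1) :=
            Finset.mem_sdiff.1 (hxsing ▸ Finset.mem_singleton_self x)
          obtain ⟨hemem, hebound, hxn, hen⟩ :=
            hvalid t x ht IHcard IH1 IH2 hBm hB'm hxsing
          set e := evictB σ pred n B' t (Bf t) with hedef
          have hBf1 : Bf (t+1) = insert (σ t) (Bf t \ {e}) :=
            Bfun_fault_evict σ pred n B' P ht hBm hS
          have hxsigma : x ≠ σ t := fun hc => hB'm (hc ▸ hxmem.1)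
          have hesigma : e ≠ σ t := fun hc => hBm (hc ▸ hemem)
          refine ⟨?_, ?_, ?_⟩
          · -- cards
            rw [hBf1, hB't1]
            rw [Finset.card_insert_of_notMem (by
              simp only [Finset.mem_sdiff, Finset.mem_singleton, not_and]
              intro hc; exact absurd hc hBm)]
            rw [Finset.card_insert_of_notMem (by
              intro hc; exact hB'm (Finset.erase_subset _ _ hc))]
            rw [← Finset.erase_eq, Finset.card_erase_of_mem hemem,
              Finset.card_erase_of_mem hxmem.1, IHcard]
          · -- Bf (t+1) \ B' (t+1)
            intro p h1 h2
            rw [hBf1] at h1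
            rcases Finset.mem_insert.1 h1 with rfl | h1'
            · exact absurd (hB't1 ▸ Finset.mem_insert_self _ _) h2
            obtain ⟨hpB, hpe⟩ := Finset.mem_sdiff.1 h1'
            rw [Finset.mem_singleton] at hpe
            have hpsigma : p ≠ σ t := fun hc => hBm (hc ▸ hpB)
            rw [hB't1] at h2
            simp only [Finset.mem_insert, Finset.mem_erase, not_or, not_and] at h2
            by_cases hpx : p = x
            · subst hpx
              exact hpers p hxsigma (hxn hpB (fun hc => hpe hc.symm))
            · have hpB' : p ∉ B' t := fun hc => (h2.2 hpx) hc
              exact hpers p hpsigma (IH1 p hpB hpB')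
          · -- B' (t+1) \ Bf (t+1)
            intro p h1 h2
            rw [hB't1] at h1
            rcases Finset.mem_insert.1 h1 with rfl | h1'
            · exact absurd (hBf1 ▸ Finset.mem_insert_self _ _) h2
            obtain ⟨hpx, hpB'⟩ := Finset.mem_erase.1 h1'
            have hpsigma : p ≠ σ t := fun hc => hB'm (hc ▸ hpB')
            rw [hBf1] at h2
            simp only [Finset.mem_insert, Finset.mem_sdiff, Finset.mem_singleton,
              not_or, not_and, not_not] at h2
            by_cases hpBf : p ∈ Bf t
            · have hpe : p = e := h2.2 hpBf
              exact hpers p hpsigma (by rw [hpe]; exact hen (hpe ▸ hpB') (hpe ▸ hpx))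
            · exact hpers p hpsigma (IH2 p hpB' hpBf)
        · have e2 : B' (t+1) = insert (σ t) (B' t) := hkeep t ht hB'm hS
          have e1 : Bf (t+1) = insert (σ t) (Bf t) :=
            Bfun_fault_keep σ pred n B' P ht hBm hS
          rw [e1, e2]
          refine ⟨?_, ?_, ?_⟩
          · rw [Finset.card_insert_of_notMem hBm, Finset.card_insert_of_notMem hB'm, IHcard]
          · intro p h1 h2
            rcases Finset.mem_insert.1 h1 with rfl | h1'
            · exact absurd (Finset.mem_insert_self _ _) h2
            have hpsigma : p ≠ σ t := fun hc => hBm (hc ▸ h1')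
            exact hpers p hpsigma (IH1 p h1' (fun hc => h2 (Finset.mem_insert_of_mem hc)))
          · intro p h1 h2
            rcases Finset.mem_insert.1 h1 with rfl | h1'
            · exact absurd (Finset.mem_insert_self _ _) h2
            have hpsigma : p ≠ σ t := fun hc => hB'm (hc ▸ h1')
            exact hpers p hpsigma (IH2 p h1' (fun hc => h2 (Finset.mem_insert_of_mem hc)))
  -- faults of Bf and B' coincide
  have hBiff : ∀ t, t < n → (σ t ∈ Bf t ↔ σ t ∈ B' t) := by
    intro t ht
    obtain ⟨_, h1, h2⟩ := hMAIN t ht.le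
    constructor
    · intro h
      by_contra hc
      have := h1 (σ t) h hc
      rw [nextReq_self σ ht] at this
      omega
    · intro h
      by_contra hc
      have := h2 (σ t) h hc
      rw [nextReq_self σ ht] at this
      omega
  -- Bf is frozen after n
  have hBfrozen : ∀ t, n ≤ t → Bf t = Bf n := by
    intro t
    induction t with
    | zero =>
      intro h
      have : n = 0 := by omega
      rw [this]
    | succ t IHf =>
      intro h
      rcases Nat.lt_or_ge t n with h1 | h1
      · have : t + 1 = n := by omega
        rw [this]
      · exact (Bfun_ge σ pred n B' P h1).trans (IHf h1)
  -- Bf is a Belady run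
  have hlazyBf : IsLazyRun k σ n Bf := by
    constructor
    · intro t
      rcases le_or_gt t n with h1 | h1
      · rw [(hMAIN t h1).1]
        exact hB'.1.1 t
      · rw [hBfrozen t h1.le, (hMAIN n le_rfl).1]
        exact hB'.1.1 n
    · intro t ht
      constructor
      · intro h
        exact Bfun_hit σ pred n B' P ht h
      · intro h
        by_cases hS : (B' t \ B' (t+1)).Nonempty
        · have heq : Bf (t+1) = insert (σ t) (Bf t \ {evictB σ pred n B' t (Bf t)}) :=
            Bfun_fault_evict σ pred n B' P ht h hS
          rw [heq]
          refine ⟨Finset.mem_insert_self _ _, ?_, ?_⟩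
          · exact Finset.insert_subset_insert _ (Finset.sdiff_subset)
          · have hsub : Bf t \ insert (σ t) (Bf t \ {evictB σ pred n B' t (Bf t)}) ⊆
                {evictB σ pred n B' t (Bf t)} := by
              intro y hy
              obtain ⟨hy1, hy2⟩ := Finset.mem_sdiff.1 hy
              simp only [Finset.mem_insert, Finset.mem_sdiff, Finset.mem_singleton,
                not_or, not_and, not_not] at hy2
              exact Finset.mem_singleton.2 (hy2.2 hy1)
            exact (Finset.card_le_card hsub).trans (by simp)
        · have heq : Bf (t+1) = insert (σ t) (Bf t) :=
            Bfun_fault_keep σ pred n B' P ht h hS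
          rw [heq]
          refine ⟨Finset.mem_insert_self _ _, le_refl _, ?_⟩
          have hsub : Bf t \ insert (σ t) (Bf t) ⊆ (∅ : Finset ℕ) := by
            intro y hy
            obtain ⟨hy1, hy2⟩ := Finset.mem_sdiff.1 hy
            exact absurd (Finset.mem_insert_of_mem hy1) hy2
          exact (Finset.card_le_card hsub).trans (by simp)
  have hbeladyBf : IsBeladyRun k σ n Bf := by
    refine ⟨hlazyBf, ?_⟩
    intro t ht hf q hq hq1 p hp
    have hB'm : σ t ∉ B' t := fun hc => hf ((hBiff t ht).2 hc)
    by_cases hS : (B' t \ B' (t+1)).Nonempty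
    · obtain ⟨x, hxsing, _⟩ := hSsing t ht hB'm hS
      obtain ⟨_, IH1, IH2⟩ := hMAIN t ht.le
      obtain ⟨hemem, hebound, _, _⟩ :=
        hvalid t x ht (hMAIN t ht.le).1 IH1 IH2 hf hB'm hxsing
      have hq2 : q = evictB σ pred n B' t (Bf t) := by
        have heq : Bf (t+1) = insert (σ t) (Bf t \ {evictB σ pred n B' t (Bf t)}) :=
          Bfun_fault_evict σ pred n B' P ht hf hS
        rw [heq] at hq1
        simp only [Finset.mem_insert, Finset.mem_sdiff, Finset.mem_singleton,
          not_or, not_and, not_not] at hq1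
        exact hq1.2 hq
      rw [hq2]
      exact hebound p hp
    · have heq : Bf (t+1) = insert (σ t) (Bf t) :=
        Bfun_fault_keep σ pred n B' P ht hf hS
      rw [heq] at hq1
      exact absurd (Finset.mem_insert_of_mem hq) hq1
  -- equal fault counts for Bf and B'
  have hfceq : faultCount σ Bf 0 n = faultCount σ B' 0 n := by
    unfold faultCount
    congr 1
    refine Finset.filter_congr ?_
    intro t ht
    simp only [Finset.mem_Ico] at ht
    simp only [eq_iff_iff, not_iff_not]
    exact hBiff t ht.2
  -- the divergence bound
  have htool : ∀ (D D' : Finset ℕ) (x y : ℕ), x ∈ D → D' ⊆ insert y (D.erase x) →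
      D'.card ≤ D.card := by
    intro D D' x y hx hsub
    have h1 := Finset.card_le_card hsub
    have h2 := Finset.card_insert_le y (D.erase x)
    have h3 := Finset.card_erase_of_mem hx
    have h4 := Finset.card_pos.2 ⟨x, hx⟩
    omega
  have hEcharge : ∀ (Q : ℕ → Prop) [DecidablePred Q] (t : ℕ), Q t →
      ((Finset.range (t+1)).filter Q).card = ((Finset.range t).filter Q).card + 1 := by
    intro Q _ t hq
    rw [Finset.range_add_one, Finset.filter_insert, if_pos hq,
      Finset.card_insert_of_notMem (by simp)]
  have hEmono : ∀ (Q : ℕ → Prop) [DecidablePred Q] (t : ℕ),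
      ((Finset.range t).filter Q).card ≤ ((Finset.range (t+1)).filter Q).card := by
    intro Q _ t
    refine Finset.card_le_card (Finset.filter_subset_filter _ ?_)
    intro x hx
    simp only [Finset.mem_range] at hx ⊢
    omega
  have hQmono : ∀ t, ((Finset.range t).filter fun s => σ s ∉ A s ∧
        ∃ q ∈ A s, nextReq σ n s (pred s) < nextReq σ n s q).card ≤
      ((Finset.range (t+1)).filter fun s => σ s ∉ A s ∧
        ∃ q ∈ A s, nextReq σ n s (pred s) < nextReq σ n s q).card := fun t => hEmono _ t
  have hQcharge : ∀ t, (σ t ∉ A t ∧ ∃ q ∈ A t, nextReq σ n t (pred t) < nextReq σ n t q) →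
      ((Finset.range (t+1)).filter fun s => σ s ∉ A s ∧
        ∃ q ∈ A s, nextReq σ n s (pred s) < nextReq σ n s q).card =
      ((Finset.range t).filter fun s => σ s ∉ A s ∧
        ∃ q ∈ A s, nextReq σ n s (pred s) < nextReq σ n s q).card + 1 :=
    fun t hq => hEcharge _ t hq
  have hDbound : ∀ t, t ≤ n → (A t \ Bf t).card ≤
      ((Finset.range t).filter fun s => σ s ∉ A s ∧
        ∃ q ∈ A s, nextReq σ n s (pred s) < nextReq σ n s q).card := by
    intro t
    induction t with
    | zero => intro _; simp [hA0, hBfdef, Bfun_zero]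
    | succ t IH =>
      intro ht1
      have ht : t < n := by omega
      have IHD := IH (by omega)
      by_cases hA : σ t ∈ A t
      · have eA : A (t+1) = A t := (hAstep t ht).1 hA
        by_cases hB : σ t ∈ Bf t
        · have eB : Bf (t+1) = Bf t := Bfun_hit σ pred n B' P ht hB
          rw [eA, eB]
          exact IHD.trans (hQmono t)
        · -- σ t ∈ A t \ Bf t : the divergence cannot grow
          have hmemD : σ t ∈ A t \ Bf t := Finset.mem_sdiff.2 ⟨hA, hB⟩
          by_cases hS : (B' t \ B' (t+1)).Nonempty
          · have eB : Bf (t+1) = insert (σ t) (Bf t \ {evictB σ pred n B' t (Bf t)}) :=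
              Bfun_fault_evict σ pred n B' P ht hB hS
            have hsub : A (t+1) \ Bf (t+1) ⊆
                insert (evictB σ pred n B' t (Bf t)) ((A t \ Bf t).erase (σ t)) := by
              intro z hz
              rw [eA, eB] at hz
              obtain ⟨hz1, hz2⟩ := Finset.mem_sdiff.1 hz
              simp only [Finset.mem_insert, Finset.mem_sdiff, Finset.mem_singleton,
                not_or, not_and, not_not] at hz2
              by_cases hzB : z ∈ Bf t
              · exact Finset.mem_insert.2 (Or.inl (hz2.2 hzB))
              · refine Finset.mem_insert.2 (Or.inr (Finset.mem_erase.2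
                  ⟨hz2.1, Finset.mem_sdiff.2 ⟨hz1, hzB⟩⟩))
            exact (htool _ _ _ _ hmemD hsub).trans (IHD.trans (hQmono t))
          · have eB : Bf (t+1) = insert (σ t) (Bf t) :=
              Bfun_fault_keep σ pred n B' P ht hB hS
            have hsub : A (t+1) \ Bf (t+1) ⊆
                insert (σ t) ((A t \ Bf t).erase (σ t)) := by
              intro z hz
              rw [eA, eB] at hz
              obtain ⟨hz1, hz2⟩ := Finset.mem_sdiff.1 hz
              simp only [Finset.mem_insert, not_or] at hz2
              exact Finset.mem_insert.2 (Or.inr (Finset.mem_erase.2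
                ⟨hz2.1, Finset.mem_sdiff.2 ⟨hz1, hz2.2⟩⟩))
            exact (htool _ _ _ _ hmemD hsub).trans (IHD.trans (hQmono t))
      · -- Follower faults
        have hpredA : pred t ∈ A t := ((hAstep t ht).2 hA).1
        have eA : A (t+1) = insert (σ t) (A t \ {pred t}) := ((hAstep t ht).2 hA).2
        by_cases hB : σ t ∈ Bf t
        · have eB : Bf (t+1) = Bf t := Bfun_hit σ pred n B' P ht hB
          have hsub : A (t+1) \ Bf (t+1) ⊆ A t \ Bf t := by
            intro z hz
            rw [eA, eB] at hz
            obtain ⟨hz1, hz2⟩ := Finset.mem_sdiff.1 hz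
            rcases Finset.mem_insert.1 hz1 with rfl | hz1'
            · exact absurd hB hz2
            · obtain ⟨hz3, _⟩ := Finset.mem_sdiff.1 hz1'
              exact Finset.mem_sdiff.2 ⟨hz3, hz2⟩
          exact (Finset.card_le_card hsub).trans (IHD.trans (hQmono t))
        · by_cases hS : (B' t \ B' (t+1)).Nonempty
          · -- both fault and Bf evicts
            have hB'm : σ t ∉ B' t := fun hc => hB ((hBiff t ht).2 hc)
            obtain ⟨x, hxsing, hB't1⟩ := hSsing t ht hB'm hS
            obtain ⟨_, IH1, IH2⟩ := hMAIN t ht.le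
            obtain ⟨hemem, hebound, hxn, hen⟩ :=
              hvalid t x ht (hMAIN t ht.le).1 IH1 IH2 hB hB'm hxsing
            set e := evictB σ pred n B' t (Bf t) with hedef
            have eB : Bf (t+1) = insert (σ t) (Bf t \ {e}) :=
              Bfun_fault_evict σ pred n B' P ht hB hS
            by_cases hep : e = pred t
            · -- same eviction : no growth
              have hsub : A (t+1) \ Bf (t+1) ⊆ A t \ Bf t := by
                intro z hz
                rw [eA, eB] at hz
                obtain ⟨hz1, hz2⟩ := Finset.mem_sdiff.1 hz
                simp only [Finset.mem_insert, Finset.mem_sdiff, Finset.mem_singleton,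
                  not_or, not_and, not_not] at hz2
                rcases Finset.mem_insert.1 hz1 with rfl | hz1'
                · exact absurd rfl hz2.1
                obtain ⟨hz3, hz4⟩ := Finset.mem_sdiff.1 hz1'
                rw [Finset.mem_singleton] at hz4
                refine Finset.mem_sdiff.2 ⟨hz3, fun hc => hz4 ?_⟩
                have := hz2.2 hc
                rw [this, hep]
              exact (Finset.card_le_card hsub).trans (IHD.trans (hQmono t))
            · by_cases heA : e ∈ A t
              · by_cases hpB : pred t ∈ Bf t
                · -- charged case : a wrong prediction
                  have hsub : A (t+1) \ Bf (t+1) ⊆ insert e (A t \ Bf t) := by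
                    intro z hz
                    rw [eA, eB] at hz
                    obtain ⟨hz1, hz2⟩ := Finset.mem_sdiff.1 hz
                    simp only [Finset.mem_insert, Finset.mem_sdiff, Finset.mem_singleton,
                      not_or, not_and, not_not] at hz2
                    rcases Finset.mem_insert.1 hz1 with rfl | hz1'
                    · exact absurd rfl hz2.1
                    obtain ⟨hz3, _⟩ := Finset.mem_sdiff.1 hz1'
                    by_cases hzB : z ∈ Bf t
                    · exact Finset.mem_insert.2 (Or.inl (hz2.2 hzB))
                    · exact Finset.mem_insert.2 (Or.inr (Finset.mem_sdiff.2 ⟨hz3, hzB⟩))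
                  have hQt : σ t ∉ A t ∧
                      ∃ q ∈ A t, nextReq σ n t (pred t) < nextReq σ n t q := by
                    refine ⟨hA, e, heA, ?_⟩
                    have hle := hebound (pred t) hpB
                    have hne : nextReq σ n t (pred t) ≠ n := by
                      intro hc
                      apply hep
                      rw [hedef, evictB, if_pos ⟨hpB, hc⟩]
                    have hlt : nextReq σ n t (pred t) < n :=
                      lt_of_le_of_ne (nextReq_le σ n t (pred t)) hne
                    rcases lt_or_eq_of_le hle with h | h
                    · exact h
                    · exact absurd (nextReq_inj σ hlt h) (fun hc => hep hc.symm)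
                  have h1 := Finset.card_le_card hsub
                  have h2 := Finset.card_insert_le e (A t \ Bf t)
                  have h3 := hQcharge t hQt
                  omega
                · -- pred t itself leaves the divergence set
                  have hmemD : pred t ∈ A t \ Bf t := Finset.mem_sdiff.2 ⟨hpredA, hpB⟩
                  have hsub : A (t+1) \ Bf (t+1) ⊆
                      insert e ((A t \ Bf t).erase (pred t)) := by
                    intro z hz
                    rw [eA, eB] at hz
                    obtain ⟨hz1, hz2⟩ := Finset.mem_sdiff.1 hz
                    simp only [Finset.mem_insert, Finset.mem_sdiff, Finset.mem_singleton,
                      not_or, not_and, not_not] at hz2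
                    rcases Finset.mem_insert.1 hz1 with rfl | hz1'
                    · exact absurd rfl hz2.1
                    obtain ⟨hz3, hz4⟩ := Finset.mem_sdiff.1 hz1'
                    rw [Finset.mem_singleton] at hz4
                    by_cases hzB : z ∈ Bf t
                    · exact Finset.mem_insert.2 (Or.inl (hz2.2 hzB))
                    · exact Finset.mem_insert.2 (Or.inr (Finset.mem_erase.2
                        ⟨hz4, Finset.mem_sdiff.2 ⟨hz3, hzB⟩⟩))
                  exact (htool _ _ _ _ hmemD hsub).trans (IHD.trans (hQmono t))
              · -- evicted page is not in A : no growth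
                have hsub : A (t+1) \ Bf (t+1) ⊆ A t \ Bf t := by
                  intro z hz
                  rw [eA, eB] at hz
                  obtain ⟨hz1, hz2⟩ := Finset.mem_sdiff.1 hz
                  simp only [Finset.mem_insert, Finset.mem_sdiff, Finset.mem_singleton,
                    not_or, not_and, not_not] at hz2
                  rcases Finset.mem_insert.1 hz1 with rfl | hz1'
                  · exact absurd rfl hz2.1
                  obtain ⟨hz3, _⟩ := Finset.mem_sdiff.1 hz1'
                  refine Finset.mem_sdiff.2 ⟨hz3, fun hc => heA ?_⟩
                  have := hz2.2 hc
                  rw [← this]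
                  exact hz3
                exact (Finset.card_le_card hsub).trans (IHD.trans (hQmono t))
          · -- Bf does not evict : no growth
            have eB : Bf (t+1) = insert (σ t) (Bf t) :=
              Bfun_fault_keep σ pred n B' P ht hB hS
            have hsub : A (t+1) \ Bf (t+1) ⊆ A t \ Bf t := by
              intro z hz
              rw [eA, eB] at hz
              obtain ⟨hz1, hz2⟩ := Finset.mem_sdiff.1 hz
              simp only [Finset.mem_insert, not_or] at hz2
              rcases Finset.mem_insert.1 hz1 with rfl | hz1'
              · exact absurd rfl hz2.1
              obtain ⟨hz3, _⟩ := Finset.mem_sdiff.1 hz1'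
              exact Finset.mem_sdiff.2 ⟨hz3, hz2.2⟩
            exact (Finset.card_le_card hsub).trans (IHD.trans (hQmono t))
  exact ⟨Bf, hbeladyBf, Bfun_zero σ pred n B' P, hfceq, hDbound n le_rfl⟩
end

section
/- Let η_t denote the prediction error |B_t \ P_t| at time t, where B_t is Belady's cache and P_t the (lazy) predictor's cache, both of size k. Suppose during window W_i the value |B_t \ P_t| can increase by at most 1 per time step and only when Belady faults, and Belady faults Δ times in W_i. If at the end of W_i we have |E ∩ B| = R + Δ for some R ≥ 0 (E the set of pages absent from the predictor's cache, B Belady's cache), then η_t ≥ R at every time t of W_i; hence if the predictor is queried at q distinct times during W_i, the total error of those predictions is at least q·R. -/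
/-- Rank error lower bound.  `h t` is the divergence `|B_t \ P_t|` between
Belady's cache and the (lazy) predictor's cache at time `t`.  During the window
`[s, e]` it increases by at most `1` per step and only at steps where Belady
faults (`hstep`), and Belady faults `Δ` times in the window (`hΔ`).  If at the
end of the window `h e = R + Δ` (i.e. `|E ∩ B| = R + Δ` for the set `E` of
pages absent from the predictor's cache), then `h t ≥ R` at every time of the
window; hence the total error of the predictions queried at any set `Qs` of
times of the window is at least `|Qs| · R`. -/
theorem window_rank_error_lower_bound (s e Δ R : ℕ) (h : ℕ → ℕ)
    (beladyFaults : ℕ → Bool) (hse : s ≤ e)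
    (hstep : ∀ t, s ≤ t → t < e →
      h (t + 1) ≤ h t + (if beladyFaults t then 1 else 0))
    (hΔ : ((Finset.Ico s e).filter fun t => beladyFaults t = true).card = Δ)
    (hend : h e = R + Δ) :
    (∀ t, s ≤ t → t ≤ e → R ≤ h t)
    ∧ ∀ Qs : Finset ℕ, Qs ⊆ Finset.Icc s e → Qs.card * R ≤ ∑ t ∈ Qs, h t := by
  have key : ∀ n t, s ≤ t → t + n = e →
      h e ≤ h t + ((Finset.Ico t e).filter fun u => beladyFaults u = true).card := by
    intro n
    induction n with
    | zero =>
      intro t hst hte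
      simp at hte
      subst hte
      simp
    | succ n ih =>
      intro t hst hte
      have hlt : t < e := by omega
      have h1 : t + 1 + n = e := by omega
      have h2 : h e ≤ h (t + 1) +
          ((Finset.Ico (t+1) e).filter fun u => beladyFaults u = true).card :=
        ih (t+1) (by omega) h1
      have h3 := hstep t hst hlt
      have hins : Finset.Ico t e = insert t (Finset.Ico (t+1) e) := by
        ext x; simp [Finset.mem_Ico]; omega
      rw [hins, Finset.filter_insert]
      by_cases hb : beladyFaults t = true
      · rw [if_pos hb]
        rw [Finset.card_insert_of_notMem (by simp)]
        simp [hb] at h3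
        omega
      · rw [if_neg hb]
        simp [hb] at h3
        omega
  have hmain : ∀ t, s ≤ t → t ≤ e → R ≤ h t := by
    intro t hst hte
    have := key (e - t) t hst (by omega)
    have hcard : ((Finset.Ico t e).filter fun u => beladyFaults u = true).card ≤ Δ := by
      rw [← hΔ]
      exact Finset.card_le_card (Finset.filter_subset_filter _
        (Finset.Ico_subset_Ico hst le_rfl))
    omega
  refine ⟨hmain, fun Qs hQs => ?_⟩
  calc Qs.card * R = ∑ _t ∈ Qs, R := by rw [Finset.sum_const, smul_eq_mul]
    _ ≤ ∑ t ∈ Qs, h t := Finset.sum_le_sum fun t ht => by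
        have := hQs ht
        simp [Finset.mem_Icc] at this
        exact hmain t this.1 this.2
end
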